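/- arXiv:2511.01835 — 3 statements merged into one kernel-verified Lean document; each statement's English description precedes it below -/
import Mathlib

section
/- Every nice graph G with maximum degree at most 4 admits a quasi-majority neighbor sum distinguishing 7-edge-coloring. -/
open Finset

variable {V : Type*} [Fintype V] [DecidableEq V]

/-- A (not necessarily proper) `k`-edge-coloring: a symmetric map giving each edge a color
in `{1, ..., k}`. -/
def EdgeColoring (G : SimpleGraph V) [DecidableRel G.Adj] (k : ℕ) (c : V → V → ℕ) : Prop :=
  (∀ u v, c u v = c v u) ∧ ∀ u v, G.Adj u v → 1 ≤ c u v ∧ c u v ≤ k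

/-- The sum of colors of edges incident to `v`. -/
def sigmaSum (G : SimpleGraph V) [DecidableRel G.Adj] (c : V → V → ℕ) (v : V) : ℕ :=
  ∑ u ∈ G.neighborFinset v, c v u

/-- The number of edges of color `α` incident to `v`. -/
def colorCount (G : SimpleGraph V) [DecidableRel G.Adj] (c : V → V → ℕ) (v : V) (α : ℕ) : ℕ :=
  ((G.neighborFinset v).filter fun u => c v u = α).card

/-- Quasi-majority: each vertex `v` is incident to at most `⌈d(v)/2⌉` edges of each color. -/
def QuasiMajority (G : SimpleGraph V) [DecidableRel G.Adj] (c : V → V → ℕ) : Prop :=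
  ∀ v α, colorCount G c v α ≤ (G.degree v + 1) / 2

/-- Majority: each vertex `v` is incident to at most `d(v)/2` edges of each color. -/
def Majority (G : SimpleGraph V) [DecidableRel G.Adj] (c : V → V → ℕ) : Prop :=
  ∀ v α, 2 * colorCount G c v α ≤ G.degree v

/-- Neighbor sum distinguishing: adjacent vertices get different color sums. -/
def NSD (G : SimpleGraph V) [DecidableRel G.Adj] (c : V → V → ℕ) : Prop :=
  ∀ u v, G.Adj u v → sigmaSum G c u ≠ sigmaSum G c v

/-- A graph is nice if no connected component is isomorphic to `K₂`, equivalently there is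
no edge both of whose endpoints have degree 1. -/
def Nice (G : SimpleGraph V) [DecidableRel G.Adj] : Prop :=
  ¬ ∃ u v, G.Adj u v ∧ G.degree u = 1 ∧ G.degree v = 1

set_option linter.unusedSectionVars false

namespace QMNSD

/-! ### Arithmetic/finset helpers -/

lemma exists_notin (F : Finset ℕ) (hF : F.card ≤ 6) : ∃ x, x ∈ Finset.Icc 1 7 ∧ x ∉ F := by
  by_contra h
  push_neg at h
  have hsub : Finset.Icc 1 7 ⊆ F := fun x hx => h x hx
  have := Finset.card_le_card hsub
  rw [Nat.card_Icc] at this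
  omega

lemma preimage_card (T : ℕ) (Bv : Finset ℕ) :
    ((Finset.Icc 1 7).filter (fun x => T + x ∈ Bv)).card ≤ Bv.card := by
  apply Finset.card_le_card_of_injOn (fun x => T + x)
  · intro x hx
    simp only [Finset.mem_coe, Finset.mem_filter] at hx
    exact hx.2
  · intro x _ y _ h
    simpa using h

lemma capbad_card (m : ℕ → ℕ) (d : ℕ) (hd : 1 ≤ d)
    (hsum : ∑ x ∈ Finset.Icc 1 7, m x ≤ d - 1) :
    ((Finset.Icc 1 7).filter (fun x => (d + 1) / 2 ≤ m x)).card ≤ 1 := by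
  by_contra h
  push_neg at h
  obtain ⟨a, ha, b, hb, hab⟩ := Finset.one_lt_card.mp h
  simp only [Finset.mem_filter] at ha hb
  have hsub : ({a, b} : Finset ℕ) ⊆ Finset.Icc 1 7 := by
    intro x hx
    simp only [Finset.mem_insert, Finset.mem_singleton] at hx
    rcases hx with h' | h' <;> subst h'
    · exact ha.1
    · exact hb.1
  have hle : m a + m b ≤ ∑ x ∈ Finset.Icc 1 7, m x := by
    have h2 := Finset.sum_le_sum_of_subset (f := m) hsub
    rwa [Finset.sum_pair hab] at h2
  have h1 := ha.2
  have h2 := hb.2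
  omega

/-! ### The deleted-pair construction -/

section Context

variable (G : SimpleGraph V) [DecidableRel G.Adj] (w z1 : V)

/-- A "stranded pair": an edge not touching `w, z1` all of whose other edges go to `w, z1`.
These are exactly the `K₂`-components created by deleting the stars of `w` and `z1`. -/
def StP (a b : V) : Prop :=
  G.Adj a b ∧ a ≠ w ∧ a ≠ z1 ∧ b ≠ w ∧ b ≠ z1 ∧
    (∀ x, G.Adj a x → x = b ∨ x = w ∨ x = z1) ∧ (∀ x, G.Adj b x → x = a ∨ x = w ∨ x = z1)

instance (a b : V) : Decidable (StP G w z1 a b) := by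
  unfold StP; infer_instance

lemma StP_symm {a b : V} (h : StP G w z1 a b) : StP G w z1 b a :=
  ⟨h.1.symm, h.2.2.2.1, h.2.2.2.2.1, h.2.1, h.2.2.1, h.2.2.2.2.2.2, h.2.2.2.2.2.1⟩

lemma StP_unique {v u u' : V} (h1 : StP G w z1 v u) (h2 : StP G w z1 v u') : u = u' := by
  rcases h1.2.2.2.2.2.1 u' h2.1 with h | h | h
  · exact h.symm ▸ rfl
  · exact absurd h h2.2.2.2.1
  · exact absurd h h2.2.2.2.2.1

/-- The graph obtained from `G` by deleting all edges at `w` and `z1` as well as all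
stranded pairs. -/
def Gm : SimpleGraph V where
  Adj a b := G.Adj a b ∧ a ≠ w ∧ b ≠ w ∧ a ≠ z1 ∧ b ≠ z1 ∧ ¬(StP G w z1 a b ∨ StP G w z1 b a)
  symm := by
    constructor
    rintro a b ⟨h1, h2, h3, h4, h5, h6⟩
    exact ⟨h1.symm, h3, h2, h5, h4, fun h => h6 (Or.symm h)⟩
  loopless := ⟨fun a h => G.loopless.irrefl a h.1⟩

instance : DecidableRel (Gm G w z1).Adj := fun a b =>
  inferInstanceAs (Decidable (G.Adj a b ∧ a ≠ w ∧ b ≠ w ∧ a ≠ z1 ∧ b ≠ z1 ∧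
    ¬(StP G w z1 a b ∨ StP G w z1 b a)))

lemma Gm_adj {a b : V} : (Gm G w z1).Adj a b ↔
    G.Adj a b ∧ a ≠ w ∧ b ≠ w ∧ a ≠ z1 ∧ b ≠ z1 ∧ ¬(StP G w z1 a b ∨ StP G w z1 b a) :=
  Iff.rfl

lemma Gm_nbr_subset (v : V) : (Gm G w z1).neighborFinset v ⊆ G.neighborFinset v := by
  intro u hu
  rw [SimpleGraph.mem_neighborFinset] at hu ⊢
  exact hu.1

lemma Gm_degree_le (v : V) : (Gm G w z1).degree v ≤ G.degree v := by
  rw [← SimpleGraph.card_neighborFinset_eq_degree, ← SimpleGraph.card_neighborFinset_eq_degree]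
  exact Finset.card_le_card (Gm_nbr_subset G w z1 v)

lemma Gm_nice : Nice (Gm G w z1) := by
  rintro ⟨u, v, huv, hdu, hdv⟩
  have hsingle_u : (Gm G w z1).neighborFinset u = {v} := by
    apply Finset.eq_singleton_iff_unique_mem.mpr
    constructor
    · rw [SimpleGraph.mem_neighborFinset]; exact huv
    · intro x hx
      rw [SimpleGraph.mem_neighborFinset] at hx
      have hcard : ((Gm G w z1).neighborFinset u).card = 1 := by
        rw [SimpleGraph.card_neighborFinset_eq_degree]; exact hdu
      obtain ⟨y, hy⟩ := Finset.card_eq_one.mp hcard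
      have h1 : x ∈ (Gm G w z1).neighborFinset u := by
        rw [SimpleGraph.mem_neighborFinset]; exact hx
      have h2 : v ∈ (Gm G w z1).neighborFinset u := by
        rw [SimpleGraph.mem_neighborFinset]; exact huv
      rw [hy, Finset.mem_singleton] at h1 h2
      rw [h1, h2]
  have hsingle_v : (Gm G w z1).neighborFinset v = {u} := by
    apply Finset.eq_singleton_iff_unique_mem.mpr
    constructor
    · rw [SimpleGraph.mem_neighborFinset]; exact huv.symm
    · intro x hx
      rw [SimpleGraph.mem_neighborFinset] at hx
      have hcard : ((Gm G w z1).neighborFinset v).card = 1 := by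
        rw [SimpleGraph.card_neighborFinset_eq_degree]; exact hdv
      obtain ⟨y, hy⟩ := Finset.card_eq_one.mp hcard
      have h1 : x ∈ (Gm G w z1).neighborFinset v := by
        rw [SimpleGraph.mem_neighborFinset]; exact hx
      have h2 : u ∈ (Gm G w z1).neighborFinset v := by
        rw [SimpleGraph.mem_neighborFinset]; exact huv.symm
      rw [hy, Finset.mem_singleton] at h1 h2
      rw [h1, h2]
  rcases huv with ⟨hadj, huw, hvw, huz, hvz, hnst⟩
  apply hnst
  left
  refine ⟨hadj, huw, huz, hvw, hvz, ?_, ?_⟩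
  · intro x hx
    by_cases hxw : x = w
    · right; left; exact hxw
    by_cases hxz : x = z1
    · right; right; exact hxz
    left
    by_cases hst : StP G w z1 u x ∨ StP G w z1 x u
    · -- u is in a stranded pair with x; then v must equal x
      have hst' : StP G w z1 u x := by
        rcases hst with h | h
        · exact h
        · exact StP_symm G w z1 h
      rcases hst'.2.2.2.2.2.1 v hadj with h | h | h
      · -- v = x ; then StP u v contradicts ¬StP from Gm adjacency
        exfalso
        apply hnst
        left
        rw [← h] at hst'
        exact hst'
      · exact absurd h hvw
      · exact absurd h hvz
    · have : x ∈ (Gm G w z1).neighborFinset u := by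
        rw [SimpleGraph.mem_neighborFinset]
        exact ⟨hx, huw, hxw, huz, hxz, hst⟩
      rw [hsingle_u, Finset.mem_singleton] at this
      exact this
  · intro x hx
    by_cases hxw : x = w
    · right; left; exact hxw
    by_cases hxz : x = z1
    · right; right; exact hxz
    left
    by_cases hst : StP G w z1 v x ∨ StP G w z1 x v
    · have hst' : StP G w z1 v x := by
        rcases hst with h | h
        · exact h
        · exact StP_symm G w z1 h
      rcases hst'.2.2.2.2.2.1 u hadj.symm with h | h | h
      · exfalso
        apply hnst
        right
        rw [← h] at hst'
        exact hst'
      · exact absurd h huw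
      · exact absurd h huz
    · have : x ∈ (Gm G w z1).neighborFinset v := by
        rw [SimpleGraph.mem_neighborFinset]
        exact ⟨hx, hvw, hxw, hvz, hxz, hst⟩
      rw [hsingle_v, Finset.mem_singleton] at this
      exact this

lemma Gm_edge_lt (hadj : G.Adj w z1) :
    (Gm G w z1).edgeFinset.card < G.edgeFinset.card := by
  apply Finset.card_lt_card
  rw [Finset.ssubset_iff_of_subset]
  · refine ⟨s(w, z1), ?_, ?_⟩
    · rw [SimpleGraph.mem_edgeFinset, SimpleGraph.mem_edgeSet]; exact hadj
    · rw [SimpleGraph.mem_edgeFinset, SimpleGraph.mem_edgeSet]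
      rintro ⟨_, hw, _, _, _, _⟩
      exact hw rfl
  · intro e he
    rw [SimpleGraph.mem_edgeFinset] at he ⊢
    induction e with
    | _ a b => exact he.1

end Context

section Context2

variable (G : SimpleGraph V) [DecidableRel G.Adj] (w z1 : V)

/-- Neighbors of `w` other than `z1`. -/
def Zs : Finset V := (G.neighborFinset w).erase z1

/-- Neighbors of `z1` other than `w`. -/
def Ys : Finset V := (G.neighborFinset z1).erase w

lemma mem_Zs {v : V} : v ∈ Zs G w z1 ↔ v ≠ z1 ∧ G.Adj w v := by
  unfold Zs
  rw [Finset.mem_erase, SimpleGraph.mem_neighborFinset]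

lemma mem_Ys {v : V} : v ∈ Ys G w z1 ↔ v ≠ w ∧ G.Adj z1 v := by
  unfold Ys
  rw [Finset.mem_erase, SimpleGraph.mem_neighborFinset]

lemma Zs_card (hadj : G.Adj w z1) : (Zs G w z1).card = G.degree w - 1 := by
  unfold Zs
  rw [Finset.card_erase_of_mem, SimpleGraph.card_neighborFinset_eq_degree]
  rw [SimpleGraph.mem_neighborFinset]
  exact hadj

lemma Ys_card (hadj : G.Adj w z1) : (Ys G w z1).card = G.degree z1 - 1 := by
  unfold Ys
  rw [Finset.card_erase_of_mem, SimpleGraph.card_neighborFinset_eq_degree]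
  rw [SimpleGraph.mem_neighborFinset]
  exact hadj.symm

/-- Whether `v` belongs to a stranded pair. -/
def Str (v : V) : Prop := ∃ u, StP G w z1 v u

instance (v : V) : Decidable (Str G w z1 v) := by unfold Str; infer_instance

/-- the target cap of quasi-majority. -/
def cap (v : V) : ℕ := (G.degree v + 1) / 2

variable (c' : V → V → ℕ) (A Bf : V → ℕ) (B : ℕ)

/-- color of a non-star edge: stranded pairs get `1`, other edges keep `c'`. -/
def stCol (a b : V) : ℕ :=
  if StP G w z1 a b ∨ StP G w z1 b a then 1 else c' a b

/-- the fixed part of the sum at `v` (contribution of non-star edges). -/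
def fixS (v : V) : ℕ := ∑ u ∈ (G.neighborFinset v) \ {w, z1}, stCol G w z1 c' v u

/-- final sum at a vertex `v ∉ {w, z1}`. -/
def fsig (v : V) : ℕ :=
  fixS G w z1 c' v + (if v ∈ Zs G w z1 then A v else 0) + (if v ∈ Ys G w z1 then Bf v else 0)

/-- The extended coloring. -/
def ext : V → V → ℕ := fun a b =>
  if (a = w ∧ b = z1) ∨ (a = z1 ∧ b = w) then B
  else if a = w then A b
  else if b = w then A a
  else if a = z1 then Bf b
  else if b = z1 then Bf a
  else stCol G w z1 c' a b

lemma stCol_symm (hsym : ∀ a b, c' a b = c' b a) (a b : V) :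
    stCol G w z1 c' a b = stCol G w z1 c' b a := by
  unfold stCol
  by_cases h : StP G w z1 a b ∨ StP G w z1 b a
  · rw [if_pos h, if_pos (Or.symm h)]
  · rw [if_neg h, if_neg (fun h' => h (Or.symm h')), hsym]

lemma ext_symm (hsym : ∀ a b, c' a b = c' b a) (a b : V) :
    ext G w z1 c' A Bf B a b = ext G w z1 c' A Bf B b a := by
  have hst := stCol_symm G w z1 c' hsym a b
  unfold ext
  split_ifs <;> first | rfl | tauto | simp_all

end Context2

section Values

variable (G : SimpleGraph V) [DecidableRel G.Adj] (w z1 : V)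
variable (c' : V → V → ℕ) (A Bf : V → ℕ) (B : ℕ)

lemma ext_wz1 (hne : w ≠ z1) : ext G w z1 c' A Bf B w z1 = B := by
  unfold ext
  rw [if_pos (Or.inl ⟨rfl, rfl⟩)]

lemma ext_w_mem (hne : w ≠ z1) {z : V} (hz : z ∈ Zs G w z1) :
    ext G w z1 c' A Bf B w z = A z := by
  obtain ⟨hz1, hadj⟩ := (mem_Zs G w z1).mp hz
  unfold ext
  rw [if_neg, if_pos rfl]
  rintro (⟨_, h⟩ | ⟨h, _⟩)
  · exact hz1 h
  · exact hne h

lemma ext_mem_w (hne : w ≠ z1) {z : V} (hz : z ∈ Zs G w z1) :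
    ext G w z1 c' A Bf B z w = A z := by
  obtain ⟨hz1, hadj⟩ := (mem_Zs G w z1).mp hz
  have hzw : z ≠ w := fun h => G.loopless.irrefl w (h ▸ hadj)
  unfold ext
  rw [if_neg, if_neg hzw, if_pos rfl]
  rintro (⟨h, _⟩ | ⟨h, _⟩)
  · exact hzw h
  · exact hz1 h

lemma ext_z1_mem (hne : w ≠ z1) {y : V} (hy : y ∈ Ys G w z1) :
    ext G w z1 c' A Bf B z1 y = Bf y := by
  obtain ⟨hyw, hadj⟩ := (mem_Ys G w z1).mp hy
  have hyz : y ≠ z1 := fun h => G.loopless.irrefl z1 (h ▸ hadj)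
  unfold ext
  rw [if_neg, if_neg (Ne.symm hne), if_neg hyw, if_pos rfl]
  rintro (⟨h, _⟩ | ⟨_, h⟩)
  · exact hne h.symm
  · exact hyw h

lemma ext_mem_z1 (hne : w ≠ z1) {y : V} (hy : y ∈ Ys G w z1) :
    ext G w z1 c' A Bf B y z1 = Bf y := by
  obtain ⟨hyw, hadj⟩ := (mem_Ys G w z1).mp hy
  have hyz : y ≠ z1 := fun h => G.loopless.irrefl z1 (h ▸ hadj)
  unfold ext
  rw [if_neg, if_neg hyw, if_neg (Ne.symm hne), if_neg hyz, if_pos rfl]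
  rintro (⟨h, _⟩ | ⟨_, h⟩)
  · exact hyw h
  · exact hne h.symm

lemma ext_other {a b : V} (haw : a ≠ w) (hbw : b ≠ w) (haz : a ≠ z1) (hbz : b ≠ z1) :
    ext G w z1 c' A Bf B a b = stCol G w z1 c' a b := by
  unfold ext
  rw [if_neg, if_neg haw, if_neg hbw, if_neg haz, if_neg hbz]
  rintro (⟨h, _⟩ | ⟨h, _⟩)
  · exact haw h
  · exact haz h

lemma nbrw_eq (hadj : G.Adj w z1) :
    G.neighborFinset w = insert z1 (Zs G w z1) := by
  rw [Zs, Finset.insert_erase]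
  rw [SimpleGraph.mem_neighborFinset]
  exact hadj

lemma nbrz1_eq (hadj : G.Adj w z1) :
    G.neighborFinset z1 = insert w (Ys G w z1) := by
  rw [Ys, Finset.insert_erase]
  rw [SimpleGraph.mem_neighborFinset]
  exact hadj.symm

lemma sigma_ext_w (hadj : G.Adj w z1) :
    sigmaSum G (ext G w z1 c' A Bf B) w = (∑ z ∈ Zs G w z1, A z) + B := by
  have hne : w ≠ z1 := G.ne_of_adj hadj
  unfold sigmaSum
  rw [nbrw_eq G w z1 hadj,
    Finset.sum_insert (show z1 ∉ Zs G w z1 from Finset.notMem_erase _ _),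
    ext_wz1 G w z1 c' A Bf B hne,
    Finset.sum_congr rfl (fun z hz => ext_w_mem G w z1 c' A Bf B hne hz)]
  omega

lemma sigma_ext_z1 (hadj : G.Adj w z1) :
    sigmaSum G (ext G w z1 c' A Bf B) z1 = (∑ y ∈ Ys G w z1, Bf y) + B := by
  have hne : w ≠ z1 := G.ne_of_adj hadj
  unfold sigmaSum
  rw [nbrz1_eq G w z1 hadj,
    Finset.sum_insert (show w ∉ Ys G w z1 from Finset.notMem_erase _ _)]
  have h1 : ext G w z1 c' A Bf B z1 w = B := by
    unfold ext
    rw [if_pos (Or.inr ⟨rfl, rfl⟩)]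
  rw [h1, Finset.sum_congr rfl (fun y hy => ext_z1_mem G w z1 c' A Bf B hne hy)]
  omega

lemma sigma_ext_notin (hadj : G.Adj w z1) {v : V} (hvw : v ≠ w) (hvz : v ≠ z1) :
    sigmaSum G (ext G w z1 c' A Bf B) v = fsig G w z1 c' A Bf v := by
  have hne : w ≠ z1 := G.ne_of_adj hadj
  unfold sigmaSum fsig
  rw [← Finset.sdiff_union_inter (G.neighborFinset v) {w, z1},
    Finset.sum_union (Finset.disjoint_sdiff_inter _ _)]
  have h1 : ∑ u ∈ G.neighborFinset v \ {w, z1}, ext G w z1 c' A Bf B v u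
      = fixS G w z1 c' v := by
    unfold fixS
    apply Finset.sum_congr rfl
    intro u hu
    rw [Finset.mem_sdiff, Finset.mem_insert, Finset.mem_singleton] at hu
    push_neg at hu
    exact ext_other G w z1 c' A Bf B hvw hu.2.1 hvz hu.2.2
  have h2 : ∑ u ∈ G.neighborFinset v ∩ ({w, z1} : Finset V), ext G w z1 c' A Bf B v u
      = (if v ∈ Zs G w z1 then A v else 0) + (if v ∈ Ys G w z1 then Bf v else 0) := by
    have hpair : (G.neighborFinset v ∩ ({w, z1} : Finset V))
        = ({w, z1} : Finset V).filter (fun u => u ∈ G.neighborFinset v) := by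
      rw [Finset.inter_comm, Finset.filter_mem_eq_inter]
    rw [hpair, Finset.sum_filter, Finset.sum_insert (by simp [hne]), Finset.sum_singleton]
    have hZiff : v ∈ Zs G w z1 ↔ w ∈ G.neighborFinset v := by
      rw [mem_Zs, SimpleGraph.mem_neighborFinset, G.adj_comm]
      simp [hvz]
    have hYiff : v ∈ Ys G w z1 ↔ z1 ∈ G.neighborFinset v := by
      rw [mem_Ys, SimpleGraph.mem_neighborFinset, G.adj_comm]
      simp [hvw]
    by_cases hw : w ∈ G.neighborFinset v
    · by_cases hz : z1 ∈ G.neighborFinset v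
      · rw [if_pos hw, if_pos hz, if_pos (hZiff.mpr hw), if_pos (hYiff.mpr hz),
          ext_mem_w G w z1 c' A Bf B hne (hZiff.mpr hw),
          ext_mem_z1 G w z1 c' A Bf B hne (hYiff.mpr hz)]
      · rw [if_pos hw, if_neg hz, if_pos (hZiff.mpr hw), if_neg (fun h => hz (hYiff.mp h)),
          ext_mem_w G w z1 c' A Bf B hne (hZiff.mpr hw)]
    · by_cases hz : z1 ∈ G.neighborFinset v
      · rw [if_neg hw, if_pos hz, if_neg (fun h => hw (hZiff.mp h)), if_pos (hYiff.mpr hz),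
          ext_mem_z1 G w z1 c' A Bf B hne (hYiff.mpr hz)]
      · rw [if_neg hw, if_neg hz, if_neg (fun h => hw (hZiff.mp h)),
          if_neg (fun h => hz (hYiff.mp h))]
  omega

end Values

section Counts

variable (G : SimpleGraph V) [DecidableRel G.Adj] (w z1 : V)
variable (c' : V → V → ℕ) (A Bf : V → ℕ) (B : ℕ)

lemma gm_nbr_eq {v : V} (hvw : v ≠ w) (hvz : v ≠ z1) :
    (Gm G w z1).neighborFinset v
      = (G.neighborFinset v \ {w, z1}).filter
          (fun u => ¬(StP G w z1 v u ∨ StP G w z1 u v)) := by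
  ext x
  simp only [SimpleGraph.mem_neighborFinset, Finset.mem_filter, Finset.mem_sdiff,
    Finset.mem_insert, Finset.mem_singleton, Gm_adj]
  constructor
  · rintro ⟨h1, _, h3, _, h5, h6⟩
    exact ⟨⟨h1, by push_neg; exact ⟨h3, h5⟩⟩, h6⟩
  · rintro ⟨⟨h1, h2⟩, h6⟩
    push_neg at h2
    exact ⟨h1, hvw, h2.1, hvz, h2.2, h6⟩

lemma mates_eq {v u0 : V} (hst : StP G w z1 v u0) :
    (G.neighborFinset v \ {w, z1}).filter
      (fun u => StP G w z1 v u ∨ StP G w z1 u v) = {u0} := by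
  ext x
  simp only [Finset.mem_filter, Finset.mem_sdiff, Finset.mem_insert, Finset.mem_singleton,
    SimpleGraph.mem_neighborFinset]
  constructor
  · rintro ⟨_, hor⟩
    have hx : StP G w z1 v x := by
      rcases hor with h | h
      · exact h
      · exact StP_symm G w z1 h
    exact StP_unique G w z1 hx hst
  · rintro rfl
    refine ⟨⟨hst.1, ?_⟩, Or.inl hst⟩
    push_neg
    exact ⟨hst.2.2.2.1, hst.2.2.2.2.1⟩

lemma mates_empty {v : V} (hstr : ¬Str G w z1 v) :
    (G.neighborFinset v \ {w, z1}).filter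
      (fun u => StP G w z1 v u ∨ StP G w z1 u v) = ∅ := by
  rw [Finset.filter_eq_empty_iff]
  rintro x _ (h | h)
  · exact hstr ⟨x, h⟩
  · exact hstr ⟨x, StP_symm G w z1 h⟩

lemma fixS_eq {v : V} (hvw : v ≠ w) (hvz : v ≠ z1) :
    fixS G w z1 c' v = sigmaSum (Gm G w z1) c' v + (if Str G w z1 v then 1 else 0) := by
  unfold fixS
  rw [← Finset.sum_filter_add_sum_filter_not (G.neighborFinset v \ {w, z1})
    (fun u => (StP G w z1 v u ∨ StP G w z1 u v)) (stCol G w z1 c' v)]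
  have h1 : ∑ u ∈ (G.neighborFinset v \ {w, z1}).filter
      (fun u => ¬(StP G w z1 v u ∨ StP G w z1 u v)), stCol G w z1 c' v u
      = sigmaSum (Gm G w z1) c' v := by
    rw [← gm_nbr_eq G w z1 hvw hvz]
    unfold sigmaSum
    apply Finset.sum_congr rfl
    intro u hu
    rw [SimpleGraph.mem_neighborFinset, Gm_adj] at hu
    unfold stCol
    rw [if_neg hu.2.2.2.2.2]
  have h2 : ∑ u ∈ (G.neighborFinset v \ {w, z1}).filter
      (fun u => (StP G w z1 v u ∨ StP G w z1 u v)), stCol G w z1 c' v u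
      = if Str G w z1 v then 1 else 0 := by
    by_cases hstr : Str G w z1 v
    · obtain ⟨u0, hu0⟩ := hstr
      rw [mates_eq G w z1 hu0, Finset.sum_singleton, if_pos ⟨u0, hu0⟩]
      unfold stCol
      rw [if_pos (Or.inl hu0)]
    · rw [mates_empty G w z1 hstr, Finset.sum_empty, if_neg hstr]
  omega

lemma count_fix {v : V} (hvw : v ≠ w) (hvz : v ≠ z1) (α : ℕ) :
    ((G.neighborFinset v \ {w, z1}).filter (fun u => stCol G w z1 c' v u = α)).card
      = colorCount (Gm G w z1) c' v α + (if Str G w z1 v ∧ α = 1 then 1 else 0) := by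
  have hdisj : Disjoint
      (((G.neighborFinset v \ {w, z1}).filter
        (fun u => (StP G w z1 v u ∨ StP G w z1 u v))).filter
          (fun u => stCol G w z1 c' v u = α))
      (((G.neighborFinset v \ {w, z1}).filter
        (fun u => ¬(StP G w z1 v u ∨ StP G w z1 u v))).filter
          (fun u => stCol G w z1 c' v u = α)) :=
    (Finset.disjoint_filter_filter_not _ _ _).mono
      (Finset.filter_subset _ _) (Finset.filter_subset _ _)
  have hsplit := Finset.filter_union_filter_not_eq
    (fun u => (StP G w z1 v u ∨ StP G w z1 u v)) (G.neighborFinset v \ {w, z1})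
  rw [← hsplit, Finset.filter_union, Finset.card_union_of_disjoint hdisj]
  have h1 : (((G.neighborFinset v \ {w, z1}).filter
      (fun u => ¬(StP G w z1 v u ∨ StP G w z1 u v))).filter
        (fun u => stCol G w z1 c' v u = α)).card
      = colorCount (Gm G w z1) c' v α := by
    unfold colorCount
    congr 1
    rw [← gm_nbr_eq G w z1 hvw hvz]
    apply Finset.filter_congr
    intro u hu
    rw [SimpleGraph.mem_neighborFinset, Gm_adj] at hu
    unfold stCol
    rw [if_neg hu.2.2.2.2.2]
  have h2 : (((G.neighborFinset v \ {w, z1}).filter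
      (fun u => (StP G w z1 v u ∨ StP G w z1 u v))).filter
        (fun u => stCol G w z1 c' v u = α)).card
      = if Str G w z1 v ∧ α = 1 then 1 else 0 := by
    by_cases hstr : Str G w z1 v
    · obtain ⟨u0, hu0⟩ := hstr
      rw [mates_eq G w z1 hu0]
      have hval : stCol G w z1 c' v u0 = 1 := by
        unfold stCol; rw [if_pos (Or.inl hu0)]
      by_cases hα : α = 1
      · subst hα
        rw [Finset.filter_singleton, if_pos hval, if_pos ⟨⟨u0, hu0⟩, rfl⟩,
          Finset.card_singleton]
      · rw [Finset.filter_singleton, if_neg (by rw [hval]; exact fun h => hα h.symm),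
          if_neg (by rintro ⟨_, h⟩; exact hα h), Finset.card_empty]
    · rw [mates_empty G w z1 hstr, Finset.filter_empty, Finset.card_empty,
        if_neg (by rintro ⟨h, _⟩; exact hstr h)]
  omega

lemma count_ext_notin (hadj : G.Adj w z1) {v : V} (hvw : v ≠ w) (hvz : v ≠ z1) (α : ℕ) :
    colorCount G (ext G w z1 c' A Bf B) v α
      = colorCount (Gm G w z1) c' v α
        + (if Str G w z1 v ∧ α = 1 then 1 else 0)
        + (if v ∈ Zs G w z1 ∧ A v = α then 1 else 0)
        + (if v ∈ Ys G w z1 ∧ Bf v = α then 1 else 0) := by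
  have hne : w ≠ z1 := G.ne_of_adj hadj
  unfold colorCount
  rw [← Finset.sdiff_union_inter (G.neighborFinset v) {w, z1},
    Finset.filter_union, Finset.card_union_of_disjoint]
  · have h1 : ((G.neighborFinset v \ {w, z1}).filter
        (fun u => ext G w z1 c' A Bf B v u = α)).card
        = colorCount (Gm G w z1) c' v α + (if Str G w z1 v ∧ α = 1 then 1 else 0) := by
      rw [← count_fix G w z1 c' hvw hvz α]
      congr 1
      apply Finset.filter_congr
      intro u hu
      rw [Finset.mem_sdiff, Finset.mem_insert, Finset.mem_singleton] at hu
      push_neg at hu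
      rw [ext_other G w z1 c' A Bf B hvw hu.2.1 hvz hu.2.2]
    have h2 : ((G.neighborFinset v ∩ ({w, z1} : Finset V)).filter
        (fun u => ext G w z1 c' A Bf B v u = α)).card
        = (if v ∈ Zs G w z1 ∧ A v = α then 1 else 0)
          + (if v ∈ Ys G w z1 ∧ Bf v = α then 1 else 0) := by
      have hpair : (G.neighborFinset v ∩ ({w, z1} : Finset V))
          = ({w, z1} : Finset V).filter (fun u => u ∈ G.neighborFinset v) := by
        rw [Finset.inter_comm, Finset.filter_mem_eq_inter]
      rw [hpair, Finset.filter_filter, Finset.card_filter,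
        Finset.sum_insert (by simp [hne]), Finset.sum_singleton]
      have hZiff : v ∈ Zs G w z1 ↔ w ∈ G.neighborFinset v := by
        rw [mem_Zs, SimpleGraph.mem_neighborFinset, G.adj_comm]
        simp [hvz]
      have hYiff : v ∈ Ys G w z1 ↔ z1 ∈ G.neighborFinset v := by
        rw [mem_Ys, SimpleGraph.mem_neighborFinset, G.adj_comm]
        simp [hvw]
      by_cases hw : w ∈ G.neighborFinset v
      · have hZ : v ∈ Zs G w z1 := hZiff.mpr hw
        by_cases hz : z1 ∈ G.neighborFinset v
        · have hY : v ∈ Ys G w z1 := hYiff.mpr hz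
          simp [hw, hz, hZ, hY, ext_mem_w G w z1 c' A Bf B hne hZ,
            ext_mem_z1 G w z1 c' A Bf B hne hY]
        · have hY : v ∉ Ys G w z1 := fun h => hz (hYiff.mp h)
          simp [hw, hz, hZ, hY, ext_mem_w G w z1 c' A Bf B hne hZ]
      · have hZ : v ∉ Zs G w z1 := fun h => hw (hZiff.mp h)
        by_cases hz : z1 ∈ G.neighborFinset v
        · have hY : v ∈ Ys G w z1 := hYiff.mpr hz
          simp [hw, hz, hZ, hY, ext_mem_z1 G w z1 c' A Bf B hne hY]
        · have hY : v ∉ Ys G w z1 := fun h => hz (hYiff.mp h)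
          simp [hw, hz, hZ, hY]
    unfold colorCount at h1
    omega
  · exact Finset.disjoint_filter_filter (Finset.disjoint_sdiff_inter _ _)

lemma count_ext_w (hadj : G.Adj w z1) (α : ℕ) :
    colorCount G (ext G w z1 c' A Bf B) w α
      = ((Zs G w z1).filter (fun z => A z = α)).card + (if B = α then 1 else 0) := by
  have hne : w ≠ z1 := G.ne_of_adj hadj
  unfold colorCount
  rw [nbrw_eq G w z1 hadj, Finset.filter_insert]
  have hcong : (Zs G w z1).filter (fun u => ext G w z1 c' A Bf B w u = α)
      = (Zs G w z1).filter (fun z => A z = α) := by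
    apply Finset.filter_congr
    intro z hz
    rw [ext_w_mem G w z1 c' A Bf B hne hz]
  by_cases hB : B = α
  · have hnm : z1 ∉ (Zs G w z1).filter (fun u => ext G w z1 c' A Bf B w u = α) := by
      intro h
      exact Finset.notMem_erase z1 (G.neighborFinset w) (Finset.filter_subset _ _ h)
    rw [if_pos (by rw [ext_wz1 G w z1 c' A Bf B hne]; exact hB),
      Finset.card_insert_of_notMem hnm, hcong, if_pos hB]
  · rw [if_neg (by rw [ext_wz1 G w z1 c' A Bf B hne]; exact hB), hcong, if_neg hB]
    omega

lemma count_ext_z1 (hadj : G.Adj w z1) (α : ℕ) :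
    colorCount G (ext G w z1 c' A Bf B) z1 α
      = ((Ys G w z1).filter (fun y => Bf y = α)).card + (if B = α then 1 else 0) := by
  have hne : w ≠ z1 := G.ne_of_adj hadj
  have hBwz : ext G w z1 c' A Bf B z1 w = B := by
    unfold ext
    rw [if_pos (Or.inr ⟨rfl, rfl⟩)]
  unfold colorCount
  rw [nbrz1_eq G w z1 hadj, Finset.filter_insert]
  have hcong : (Ys G w z1).filter (fun u => ext G w z1 c' A Bf B z1 u = α)
      = (Ys G w z1).filter (fun y => Bf y = α) := by
    apply Finset.filter_congr
    intro y hy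
    rw [ext_z1_mem G w z1 c' A Bf B hne hy]
  by_cases hB : B = α
  · have hnm : w ∉ (Ys G w z1).filter (fun u => ext G w z1 c' A Bf B z1 u = α) := by
      intro h
      exact Finset.notMem_erase w (G.neighborFinset z1) (Finset.filter_subset _ _ h)
    rw [if_pos (by rw [hBwz]; exact hB),
      Finset.card_insert_of_notMem hnm, hcong, if_pos hB]
  · rw [if_neg (by rw [hBwz]; exact hB), hcong, if_neg hB]
    omega

end Counts

section Verify

variable (G : SimpleGraph V) [DecidableRel G.Adj] (w z1 : V)
variable (c' : V → V → ℕ) (A Bf : V → ℕ) (B : ℕ)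

/-- All the constraints the chosen star-colors must satisfy. -/
structure CS : Prop where
  r1 : ∀ z ∈ Zs G w z1, A z ∈ Finset.Icc 1 7
  r2 : ∀ y ∈ Ys G w z1, Bf y ∈ Finset.Icc 1 7
  r3 : B ∈ Finset.Icc 1 7
  q1 : ∀ α, ((Zs G w z1).filter (fun z => A z = α)).card + (if B = α then 1 else 0) ≤ cap G w
  q2 : ∀ α, ((Ys G w z1).filter (fun y => Bf y = α)).card + (if B = α then 1 else 0) ≤ cap G z1
  q3 : ∀ v, (v ∈ Zs G w z1 ∨ v ∈ Ys G w z1) → ∀ α,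
    colorCount (Gm G w z1) c' v α
      + (if Str G w z1 v ∧ α = 1 then 1 else 0)
      + (if v ∈ Zs G w z1 ∧ A v = α then 1 else 0)
      + (if v ∈ Ys G w z1 ∧ Bf v = α then 1 else 0) ≤ cap G v
  n1 : (∑ z ∈ Zs G w z1, A z) ≠ (∑ y ∈ Ys G w z1, Bf y)
  n2 : ∀ z ∈ Zs G w z1, (∑ z' ∈ Zs G w z1, A z') + B ≠ fsig G w z1 c' A Bf z
  n3 : ∀ y ∈ Ys G w z1, (∑ y' ∈ Ys G w z1, Bf y') + B ≠ fsig G w z1 c' A Bf y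
  n4 : ∀ v, (v ∈ Zs G w z1 ∨ v ∈ Ys G w z1) → ∀ v', (v' ∈ Zs G w z1 ∨ v' ∈ Ys G w z1) →
    G.Adj v v' → fsig G w z1 c' A Bf v ≠ fsig G w z1 c' A Bf v'
  n5 : ∀ v, (v ∈ Zs G w z1 ∨ v ∈ Ys G w z1) → ∀ x, G.Adj v x →
    x ∉ Zs G w z1 → x ∉ Ys G w z1 → x ≠ w → x ≠ z1 →
    fsig G w z1 c' A Bf v ≠ fixS G w z1 c' x

lemma ext_z1w (hne : w ≠ z1) : ext G w z1 c' A Bf B z1 w = B := by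
  unfold ext
  rw [if_pos (Or.inr ⟨rfl, rfl⟩)]

lemma outside_nbr {v m : V} (hst : StP G w z1 v m) (hnw : ¬ G.Adj w v) (hnz : ¬ G.Adj z1 v) :
    G.neighborFinset v = {m} := by
  ext x
  rw [SimpleGraph.mem_neighborFinset, Finset.mem_singleton]
  constructor
  · intro hx
    rcases hst.2.2.2.2.2.1 x hx with h | h | h
    · exact h
    · exact absurd (h ▸ hx).symm hnw
    · exact absurd (h ▸ hx).symm hnz
  · rintro rfl
    exact hst.1

lemma fsig_outside {x : V} (hx1 : x ∉ Zs G w z1) (hx2 : x ∉ Ys G w z1) :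
    fsig G w z1 c' A Bf x = fixS G w z1 c' x := by
  unfold fsig
  rw [if_neg hx1, if_neg hx2]
  omega

lemma verify (hadj : G.Adj w z1) (hnice : Nice G) (hdeg : ∀ v, G.degree v ≤ 4)
    (hec : EdgeColoring (Gm G w z1) 7 c') (hqm : QuasiMajority (Gm G w z1) c')
    (hnsd : NSD (Gm G w z1) c') (cs : CS G w z1 c' A Bf B) :
    EdgeColoring G 7 (ext G w z1 c' A Bf B) ∧ QuasiMajority G (ext G w z1 c' A Bf B)
      ∧ NSD G (ext G w z1 c' A Bf B) := by
  have hne : w ≠ z1 := G.ne_of_adj hadj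
  -- helper: membership facts for vertices outside {w, z1}
  have hmemZ : ∀ {v : V}, v ≠ z1 → (v ∈ Zs G w z1 ↔ G.Adj w v) := by
    intro v hv
    rw [mem_Zs]
    exact ⟨fun h => h.2, fun h => ⟨hv, h⟩⟩
  have hmemY : ∀ {v : V}, v ≠ w → (v ∈ Ys G w z1 ↔ G.Adj z1 v) := by
    intro v hv
    rw [mem_Ys]
    exact ⟨fun h => h.2, fun h => ⟨hv, h⟩⟩
  -- outside vertices that are stranded are pendant
  have houtside : ∀ {u v : V}, G.Adj u v → u ≠ w → u ≠ z1 → v ≠ w → v ≠ z1 →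
      u ∉ Zs G w z1 → u ∉ Ys G w z1 → v ∉ Zs G w z1 → v ∉ Ys G w z1 →
      (Gm G w z1).Adj u v := by
    intro u v huv huw huz hvw hvz hZu hYu hZv hYv
    have hnwu : ¬ G.Adj w u := fun h => hZu ((hmemZ huz).mpr h)
    have hnzu : ¬ G.Adj z1 u := fun h => hYu ((hmemY huw).mpr h)
    have hnwv : ¬ G.Adj w v := fun h => hZv ((hmemZ hvz).mpr h)
    have hnzv : ¬ G.Adj z1 v := fun h => hYv ((hmemY hvw).mpr h)
    refine ⟨huv, huw, hvw, huz, hvz, ?_⟩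
    rintro (hst | hst)
    · -- StP u v : both pendant, contradicting Nice
      have hu : G.neighborFinset u = {v} := outside_nbr G w z1 hst hnwu hnzu
      have hv : G.neighborFinset v = {u} := outside_nbr G w z1 (StP_symm G w z1 hst) hnwv hnzv
      exact hnice ⟨u, v, huv, by
        rw [← SimpleGraph.card_neighborFinset_eq_degree, hu, Finset.card_singleton], by
        rw [← SimpleGraph.card_neighborFinset_eq_degree, hv, Finset.card_singleton]⟩
    · have hst' := StP_symm G w z1 hst
      have hu : G.neighborFinset u = {v} := outside_nbr G w z1 hst' hnwu hnzu
      have hv : G.neighborFinset v = {u} := outside_nbr G w z1 hst hnwv hnzv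
      exact hnice ⟨u, v, huv, by
        rw [← SimpleGraph.card_neighborFinset_eq_degree, hu, Finset.card_singleton], by
        rw [← SimpleGraph.card_neighborFinset_eq_degree, hv, Finset.card_singleton]⟩
  refine ⟨⟨ext_symm G w z1 c' A Bf B hec.1, ?_⟩, ?_, ?_⟩
  · -- range bounds
    intro u v huv
    by_cases huw : u = w
    · by_cases hvz : v = z1
      · rw [huw, hvz, ext_wz1 G w z1 c' A Bf B hne]
        simpa using cs.r3
      · have hv : v ∈ Zs G w z1 := (mem_Zs G w z1).mpr ⟨hvz, huw ▸ huv⟩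
        rw [huw, ext_w_mem G w z1 c' A Bf B hne hv]
        simpa using cs.r1 v hv
    by_cases hvw : v = w
    · by_cases huz : u = z1
      · rw [hvw, huz, ext_z1w G w z1 c' A Bf B hne]
        simpa using cs.r3
      · have hu : u ∈ Zs G w z1 := (mem_Zs G w z1).mpr ⟨huz, hvw ▸ huv.symm⟩
        rw [hvw, ext_mem_w G w z1 c' A Bf B hne hu]
        simpa using cs.r1 u hu
    by_cases huz : u = z1
    · have hv : v ∈ Ys G w z1 := (mem_Ys G w z1).mpr ⟨hvw, huz ▸ huv⟩
      rw [huz, ext_z1_mem G w z1 c' A Bf B hne hv]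
      simpa using cs.r2 v hv
    by_cases hvz : v = z1
    · have hu : u ∈ Ys G w z1 := (mem_Ys G w z1).mpr ⟨huw, hvz ▸ huv.symm⟩
      rw [hvz, ext_mem_z1 G w z1 c' A Bf B hne hu]
      simpa using cs.r2 u hu
    rw [ext_other G w z1 c' A Bf B huw hvw huz hvz]
    unfold stCol
    by_cases hst : StP G w z1 u v ∨ StP G w z1 v u
    · rw [if_pos hst]; omega
    · rw [if_neg hst]
      exact hec.2 u v ⟨huv, huw, hvw, huz, hvz, hst⟩
  · -- quasi-majority
    intro v α
    by_cases hvw : v = w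
    · rw [hvw, count_ext_w G w z1 c' A Bf B hadj α]
      exact cs.q1 α
    by_cases hvz : v = z1
    · rw [hvz, count_ext_z1 G w z1 c' A Bf B hadj α]
      exact cs.q2 α
    rw [count_ext_notin G w z1 c' A Bf B hadj hvw hvz α]
    by_cases hmem : v ∈ Zs G w z1 ∨ v ∈ Ys G w z1
    · exact cs.q3 v hmem α
    push_neg at hmem
    have e1 : (if v ∈ Zs G w z1 ∧ A v = α then 1 else 0) = 0 := by simp [hmem.1]
    have e2 : (if v ∈ Ys G w z1 ∧ Bf v = α then 1 else 0) = 0 := by simp [hmem.2]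
    rw [e1, e2]
    by_cases hstr : Str G w z1 v
    · -- pendant vertex: its degree is 1
      obtain ⟨m, hm⟩ := hstr
      have hnw : ¬ G.Adj w v := fun h => hmem.1 ((hmemZ hvz).mpr h)
      have hnz : ¬ G.Adj z1 v := fun h => hmem.2 ((hmemY hvw).mpr h)
      have hnbr : G.neighborFinset v = {m} := outside_nbr G w z1 hm hnw hnz
      have hdeg1 : G.degree v = 1 := by
        rw [← SimpleGraph.card_neighborFinset_eq_degree, hnbr, Finset.card_singleton]
      have hcount : colorCount (Gm G w z1) c' v α = 0 := by
        unfold colorCount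
        rw [Finset.card_eq_zero, Finset.filter_eq_empty_iff]
        intro x hx
        rw [SimpleGraph.mem_neighborFinset] at hx
        exfalso
        have hxm : x ∈ G.neighborFinset v := by
          rw [SimpleGraph.mem_neighborFinset]; exact hx.1
        rw [hnbr, Finset.mem_singleton] at hxm
        subst hxm
        exact hx.2.2.2.2.2 (Or.inl hm)
      rw [hcount, hdeg1]
      split_ifs <;> omega
    · have e3 : (if Str G w z1 v ∧ α = 1 then 1 else 0) = 0 := by simp [hstr]
      rw [e3]
      have h1 : colorCount (Gm G w z1) c' v α ≤ ((Gm G w z1).degree v + 1) / 2 := hqm v α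
      have h2 : ((Gm G w z1).degree v + 1) / 2 ≤ (G.degree v + 1) / 2 :=
        Nat.div_le_div_right (by have := Gm_degree_le G w z1 v; omega)
      omega
  · -- NSD
    intro u v huv
    by_cases huw : u = w
    · by_cases hvz : v = z1
      · rw [huw, hvz, sigma_ext_w G w z1 c' A Bf B hadj, sigma_ext_z1 G w z1 c' A Bf B hadj]
        have := cs.n1
        omega
      · have hv : v ∈ Zs G w z1 := (mem_Zs G w z1).mpr ⟨hvz, huw ▸ huv⟩
        have hvw : v ≠ w := (G.ne_of_adj (huw ▸ huv)).symm
        rw [huw, sigma_ext_w G w z1 c' A Bf B hadj,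
          sigma_ext_notin G w z1 c' A Bf B hadj hvw hvz]
        exact cs.n2 v hv
    by_cases hvw : v = w
    · by_cases huz : u = z1
      · rw [hvw, huz, sigma_ext_w G w z1 c' A Bf B hadj, sigma_ext_z1 G w z1 c' A Bf B hadj]
        have := cs.n1
        omega
      · have hu : u ∈ Zs G w z1 := (mem_Zs G w z1).mpr ⟨huz, hvw ▸ huv.symm⟩
        have huw' : u ≠ w := (G.ne_of_adj (hvw ▸ huv.symm)).symm
        rw [hvw, sigma_ext_w G w z1 c' A Bf B hadj,
          sigma_ext_notin G w z1 c' A Bf B hadj huw' huz]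
        exact (cs.n2 u hu).symm
    by_cases huz : u = z1
    · have hv : v ∈ Ys G w z1 := (mem_Ys G w z1).mpr ⟨hvw, huz ▸ huv⟩
      have hvz : v ≠ z1 := (G.ne_of_adj (huz ▸ huv)).symm
      rw [huz, sigma_ext_z1 G w z1 c' A Bf B hadj,
        sigma_ext_notin G w z1 c' A Bf B hadj hvw hvz]
      exact cs.n3 v hv
    by_cases hvz : v = z1
    · have hu : u ∈ Ys G w z1 := (mem_Ys G w z1).mpr ⟨huw, hvz ▸ huv.symm⟩
      have huz' : u ≠ z1 := (G.ne_of_adj (hvz ▸ huv.symm)).symm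
      rw [hvz, sigma_ext_z1 G w z1 c' A Bf B hadj,
        sigma_ext_notin G w z1 c' A Bf B hadj huw huz']
      exact (cs.n3 u hu).symm
    rw [sigma_ext_notin G w z1 c' A Bf B hadj huw huz,
      sigma_ext_notin G w z1 c' A Bf B hadj hvw hvz]
    by_cases hmu : u ∈ Zs G w z1 ∨ u ∈ Ys G w z1
    · by_cases hmv : v ∈ Zs G w z1 ∨ v ∈ Ys G w z1
      · exact cs.n4 u hmu v hmv huv
      · push_neg at hmv
        rw [fsig_outside G w z1 c' A Bf hmv.1 hmv.2]
        exact cs.n5 u hmu v huv hmv.1 hmv.2 hvw hvz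
    · push_neg at hmu
      by_cases hmv : v ∈ Zs G w z1 ∨ v ∈ Ys G w z1
      · rw [fsig_outside G w z1 c' A Bf hmu.1 hmu.2]
        exact (cs.n5 v hmv u huv.symm hmu.1 hmu.2 huw huz).symm
      · push_neg at hmv
        rw [fsig_outside G w z1 c' A Bf hmu.1 hmu.2, fsig_outside G w z1 c' A Bf hmv.1 hmv.2]
        have hgm : (Gm G w z1).Adj u v :=
          houtside huv huw huz hvw hvz hmu.1 hmu.2 hmv.1 hmv.2
        have h1 := fixS_eq G w z1 c' huw huz
        have h2 := fixS_eq G w z1 c' hvw hvz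
        have hnstu : ¬ Str G w z1 u := by
          rintro ⟨m, hm⟩
          rcases hm.2.2.2.2.2.1 v huv with h | h | h
          · subst h
            exact hgm.2.2.2.2.2 (Or.inl hm)
          · exact hvw h
          · exact hvz h
        have hnstv : ¬ Str G w z1 v := by
          rintro ⟨m, hm⟩
          rcases hm.2.2.2.2.2.1 u huv.symm with h | h | h
          · subst h
            exact hgm.2.2.2.2.2 (Or.inr hm)
          · exact huw h
          · exact huz h
        rw [h1, h2, if_neg hnstu, if_neg hnstv]
        have := hnsd u v hgm
        omega

end Verify

section Exist

variable (G : SimpleGraph V) [DecidableRel G.Adj] (w z1 : V) (c' : V → V → ℕ)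

/-- count of colored edges at `v` before the star phases (including a stranded edge). -/
def cnt1 (v : V) (x : ℕ) : ℕ :=
  colorCount (Gm G w z1) c' v x + (if Str G w z1 v ∧ x = 1 then 1 else 0)

lemma pair_card (hadj : G.Adj w z1) {v : V} (hv : v ∈ Zs G w z1 ∨ v ∈ Ys G w z1) :
    1 + (if v ∈ Zs G w z1 ∧ v ∈ Ys G w z1 then 1 else 0)
      ≤ (G.neighborFinset v ∩ ({w, z1} : Finset V)).card := by
  have hne : w ≠ z1 := G.ne_of_adj hadj
  have hmZ : v ∈ Zs G w z1 → w ∈ G.neighborFinset v ∩ ({w, z1} : Finset V) := by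
    intro h
    rw [mem_Zs] at h
    simp [SimpleGraph.mem_neighborFinset, h.2.symm]
  have hmY : v ∈ Ys G w z1 → z1 ∈ G.neighborFinset v ∩ ({w, z1} : Finset V) := by
    intro h
    rw [mem_Ys] at h
    simp [SimpleGraph.mem_neighborFinset, h.2.symm]
  by_cases hZ : v ∈ Zs G w z1 <;> by_cases hY : v ∈ Ys G w z1
  · have hsub : ({w, z1} : Finset V) ⊆ G.neighborFinset v ∩ ({w, z1} : Finset V) := by
      intro x hx
      rcases Finset.mem_insert.mp hx with h | h
      · exact h ▸ hmZ hZ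
      · rw [Finset.mem_singleton] at h
        exact h ▸ hmY hY
    have hc := Finset.card_le_card hsub
    rw [Finset.card_insert_of_notMem (by simp [hne]), Finset.card_singleton] at hc
    simp only [hZ, hY, and_true, if_pos]
    omega
  · simp only [hZ, hY, and_false, if_false]
    have := Finset.card_pos.mpr ⟨w, hmZ hZ⟩
    omega
  · simp only [hZ, hY, false_and, if_false]
    have := Finset.card_pos.mpr ⟨z1, hmY hY⟩
    omega
  · rcases hv with h | h
    · exact absurd h hZ
    · exact absurd h hY

lemma cnt1_sum (hadj : G.Adj w z1) (hec : EdgeColoring (Gm G w z1) 7 c')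
    {v : V} (hv : v ∈ Zs G w z1 ∨ v ∈ Ys G w z1) :
    (∑ x ∈ Finset.Icc 1 7, cnt1 G w z1 c' v x) + 1
        + (if v ∈ Zs G w z1 ∧ v ∈ Ys G w z1 then 1 else 0)
      ≤ G.degree v := by
  have hvw : v ≠ w := by
    rcases hv with h | h
    · rw [mem_Zs] at h
      exact fun he => G.loopless.irrefl w (he ▸ h.2)
    · rw [mem_Ys] at h
      exact h.1
  have hvz : v ≠ z1 := by
    rcases hv with h | h
    · rw [mem_Zs] at h
      exact h.1
    · rw [mem_Ys] at h
      exact fun he => G.loopless.irrefl z1 (he ▸ h.2)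
  -- sum of colorCounts equals the Gm-degree
  have h1 : ∑ x ∈ Finset.Icc 1 7, colorCount (Gm G w z1) c' v x
      = (Gm G w z1).degree v := by
    rw [← SimpleGraph.card_neighborFinset_eq_degree]
    rw [Finset.card_eq_sum_card_fiberwise (f := fun u => c' v u) (t := Finset.Icc 1 7)]
    · rfl
    · intro u hu
      rw [Finset.mem_coe, SimpleGraph.mem_neighborFinset] at hu
      have := hec.2 v u hu
      rw [Finset.mem_coe, Finset.mem_Icc]
      exact this
  have h2 : ∑ x ∈ Finset.Icc 1 7, (if Str G w z1 v ∧ x = 1 then 1 else 0)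
      = if Str G w z1 v then 1 else 0 := by
    by_cases hstr : Str G w z1 v
    · simp only [hstr, true_and]
      rw [Finset.sum_ite_eq' (Finset.Icc 1 7) 1 (fun _ => 1)]
      simp
    · simp [hstr]
  have h3 : ∑ x ∈ Finset.Icc 1 7, cnt1 G w z1 c' v x
      = (Gm G w z1).degree v + (if Str G w z1 v then 1 else 0) := by
    unfold cnt1
    rw [Finset.sum_add_distrib, h1, h2]
  rw [h3]
  -- the Gm-neighbors, the possible mate, and the {w,z1}-neighbors are disjoint
  have hdecomp : ((Gm G w z1).degree v) + (if Str G w z1 v then 1 else 0)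
      = (G.neighborFinset v \ {w, z1}).card := by
    have := fixS_eq G w z1 (fun _ _ => 0) hvw hvz (v := v)
    -- instead count directly
    rw [← SimpleGraph.card_neighborFinset_eq_degree]
    rw [← Finset.filter_union_filter_not_eq
      (fun u => (StP G w z1 v u ∨ StP G w z1 u v)) (G.neighborFinset v \ {w, z1})]
    rw [Finset.card_union_of_disjoint (Finset.disjoint_filter_filter_not _ _ _)]
    have hmc : ((G.neighborFinset v \ {w, z1}).filter
        (fun u => (StP G w z1 v u ∨ StP G w z1 u v))).card
        = if Str G w z1 v then 1 else 0 := by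
      by_cases hstr : Str G w z1 v
      · obtain ⟨u0, hu0⟩ := hstr
        rw [mates_eq G w z1 hu0, if_pos ⟨u0, hu0⟩, Finset.card_singleton]
      · rw [mates_empty G w z1 hstr, if_neg hstr, Finset.card_empty]
    rw [hmc, ← gm_nbr_eq G w z1 hvw hvz]
    omega
  rw [hdecomp]
  have hsplit : (G.neighborFinset v \ {w, z1}).card
      + (G.neighborFinset v ∩ ({w, z1} : Finset V)).card = G.degree v := by
    rw [← SimpleGraph.card_neighborFinset_eq_degree]
    rw [Finset.card_sdiff_add_card_inter]
  have := pair_card G w z1 hadj hv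
  omega

lemma str_degree_drop {v : V} (hv : v ∈ Zs G w z1 ∨ v ∈ Ys G w z1)
    (hstr : Str G w z1 v) : (Gm G w z1).degree v + 2 ≤ G.degree v := by
  obtain ⟨m, hm⟩ := hstr
  have hmem_m : m ∈ G.neighborFinset v := by
    rw [SimpleGraph.mem_neighborFinset]
    exact hm.1
  have key : ∀ t : V, G.Adj v t → (t = w ∨ t = z1) →
      (Gm G w z1).degree v + 2 ≤ G.degree v := by
    intro t htv htwz
    have hmt : m ≠ t := by
      rcases htwz with h | h <;> subst h
      · exact hm.2.2.2.1
      · exact hm.2.2.2.2.1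
    have hmem_t : t ∈ G.neighborFinset v := by
      rw [SimpleGraph.mem_neighborFinset]
      exact htv
    have hsub : (Gm G w z1).neighborFinset v ⊆ ((G.neighborFinset v).erase t).erase m := by
      intro x hx
      rw [SimpleGraph.mem_neighborFinset] at hx
      rw [Finset.mem_erase, Finset.mem_erase, SimpleGraph.mem_neighborFinset]
      refine ⟨?_, ?_, hx.1⟩
      · intro hxm
        subst hxm
        exact hx.2.2.2.2.2 (Or.inl hm)
      · intro hxt
        subst hxt
        rcases htwz with h | h
        · exact hx.2.2.1 h
        · exact hx.2.2.2.2.1 h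
    have hcard := Finset.card_le_card hsub
    rw [Finset.card_erase_of_mem (Finset.mem_erase.mpr ⟨hmt, hmem_m⟩),
      Finset.card_erase_of_mem hmem_t] at hcard
    rw [← SimpleGraph.card_neighborFinset_eq_degree, ← SimpleGraph.card_neighborFinset_eq_degree]
    have hpos2 : 2 ≤ (G.neighborFinset v).card := by
      have hss : ({m, t} : Finset V) ⊆ G.neighborFinset v := by
        intro x hx
        rcases Finset.mem_insert.mp hx with h | h
        · exact h ▸ hmem_m
        · rw [Finset.mem_singleton] at h
          exact h ▸ hmem_t
      have hc := Finset.card_le_card hss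
      rw [Finset.card_insert_of_notMem (by simp [hmt]), Finset.card_singleton] at hc
      omega
    omega
  rcases hv with h | h
  · rw [mem_Zs] at h
    exact key w h.2.symm (Or.inl rfl)
  · rw [mem_Ys] at h
    exact key z1 h.2.symm (Or.inr rfl)

lemma cnt1_le_cap (hadj : G.Adj w z1) (hec : EdgeColoring (Gm G w z1) 7 c')
    (hqm : QuasiMajority (Gm G w z1) c')
    {v : V} (hv : v ∈ Zs G w z1 ∨ v ∈ Ys G w z1) (α : ℕ) :
    cnt1 G w z1 c' v α ≤ cap G v := by
  unfold cnt1 cap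
  by_cases hs : Str G w z1 v ∧ α = 1
  · rw [if_pos hs]
    have h1 := hqm v α
    have h2 := str_degree_drop G w z1 hv hs.1
    omega
  · rw [if_neg hs]
    have h1 := hqm v α
    have h2 := Gm_degree_le G w z1 v
    omega

lemma filter_card_le_one {S : Finset V} {f : V → ℕ}
    (hinj : ∀ y ∈ S, ∀ y' ∈ S, y ≠ y' → f y ≠ f y') (α : ℕ) :
    (S.filter (fun y => f y = α)).card ≤ 1 := by
  by_contra h
  push_neg at h
  obtain ⟨a, ha, b, hb, hab⟩ := Finset.one_lt_card.mp h
  rw [Finset.mem_filter] at ha hb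
  exact hinj a ha.1 b hb.1 hab (by rw [ha.2, hb.2])

end Exist

section PhaseY

variable (G : SimpleGraph V) [DecidableRel G.Adj] (w z1 : V) (c' : V → V → ℕ)

lemma phaseY (hadj : G.Adj w z1) (hdeg : ∀ v, G.degree v ≤ 4)
    (hec : EdgeColoring (Gm G w z1) 7 c') :
    ∀ S : Finset V, S ⊆ Ys G w z1 →
    ∃ Bf : V → ℕ,
      (∀ y ∈ S, Bf y ∈ Finset.Icc 1 7) ∧
      (∀ y ∈ S, ∀ y' ∈ S, y ≠ y' → Bf y ≠ Bf y') ∧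
      (∀ y ∈ S, cnt1 G w z1 c' y (Bf y) + 1 ≤ cap G y) ∧
      (∀ y ∈ S, y ∉ Zs G w z1 → ∀ x, G.Adj y x → x ∉ Zs G w z1 → x ∉ Ys G w z1 →
          x ≠ w → x ≠ z1 → fixS G w z1 c' y + Bf y ≠ fixS G w z1 c' x) ∧
      (∀ y ∈ S, ∀ y' ∈ S, y ∉ Zs G w z1 → y' ∉ Zs G w z1 → G.Adj y y' →
          fixS G w z1 c' y + Bf y ≠ fixS G w z1 c' y' + Bf y') := by
  intro S
  induction S using Finset.induction_on with
  | empty =>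
    intro _
    refine ⟨fun _ => 1, ?_, ?_, ?_, ?_, ?_⟩ <;> simp
  | @insert a S' ha ih =>
    intro hsub
    have hsub' : S' ⊆ Ys G w z1 := fun x hx => hsub (Finset.mem_insert_of_mem hx)
    have haY : a ∈ Ys G w z1 := hsub (Finset.mem_insert_self a S')
    obtain ⟨Bf, hr, hinj, hcap, hout, hcross⟩ := ih hsub'
    have haw : a ≠ w := ((mem_Ys G w z1).mp haY).1
    have haadj : G.Adj z1 a := ((mem_Ys G w z1).mp haY).2
    have haz : a ≠ z1 := fun h => G.loopless.irrefl z1 (h ▸ haadj)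
    have hadeg : 1 ≤ G.degree a := by
      rw [← SimpleGraph.card_neighborFinset_eq_degree]
      exact Finset.card_pos.mpr ⟨z1, by
        rw [SimpleGraph.mem_neighborFinset]; exact haadj.symm⟩
    have hScard : S'.card ≤ 2 := by
      have h1 : (insert a S').card ≤ (Ys G w z1).card := Finset.card_le_card hsub
      rw [Finset.card_insert_of_notMem ha] at h1
      rw [Ys_card G w z1 hadj] at h1
      have := hdeg z1
      omega
    -- forbidden sets
    have hFcap : ((Finset.Icc 1 7).filter
        (fun x => (G.degree a + 1) / 2 ≤ cnt1 G w z1 c' a x)).card ≤ 1 := by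
      apply capbad_card (cnt1 G w z1 c' a) (G.degree a) hadeg
      have := cnt1_sum G w z1 c' hadj hec (Or.inr haY)
      omega
    set outN := (G.neighborFinset a).filter
      (fun x => x ∉ Zs G w z1 ∧ x ∉ Ys G w z1 ∧ x ≠ w ∧ x ≠ z1) with houtN
    set crossN := S'.filter (fun y' => y' ∉ Zs G w z1 ∧ G.Adj a y') with hcrossN
    set badVals := outN.image (fixS G w z1 c')
      ∪ crossN.image (fun y' => fixS G w z1 c' y' + Bf y') with hbV
    have hbVcard : badVals.card ≤ 3 := by
      have hsub2 : outN ∪ crossN ⊆ (G.neighborFinset a).erase z1 := by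
        intro x hx
        rcases Finset.mem_union.mp hx with h | h
        · rw [houtN, Finset.mem_filter] at h
          exact Finset.mem_erase.mpr ⟨h.2.2.2.2, h.1⟩
        · rw [hcrossN, Finset.mem_filter] at h
          have hxY := hsub' h.1
          have : x ≠ z1 := fun he => G.loopless.irrefl z1 (he ▸ ((mem_Ys G w z1).mp hxY).2)
          exact Finset.mem_erase.mpr ⟨this, by
            rw [SimpleGraph.mem_neighborFinset]; exact h.2.2⟩
      have hdisj : Disjoint outN crossN := by
        rw [Finset.disjoint_left]
        intro x hx1 hx2
        rw [houtN, Finset.mem_filter] at hx1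
        rw [hcrossN, Finset.mem_filter] at hx2
        exact hx1.2.2.1 (hsub' hx2.1)
      have h2 : outN.card + crossN.card ≤ G.degree a - 1 := by
        rw [← Finset.card_union_of_disjoint hdisj]
        have := Finset.card_le_card hsub2
        rw [Finset.card_erase_of_mem (by
          rw [SimpleGraph.mem_neighborFinset]; exact haadj.symm),
          SimpleGraph.card_neighborFinset_eq_degree] at this
        exact this
      have h3 := Finset.card_image_le (s := outN) (f := fixS G w z1 c')
      have h4 := Finset.card_image_le (s := crossN) (f := fun y' => fixS G w z1 c' y' + Bf y')
      have h5 := Finset.card_union_le (outN.image (fixS G w z1 c'))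
        (crossN.image (fun y' => fixS G w z1 c' y' + Bf y'))
      have := hdeg a
      rw [hbV]
      omega
    set Fsig := if a ∈ Zs G w z1 then (∅ : Finset ℕ)
      else (Finset.Icc 1 7).filter (fun x => fixS G w z1 c' a + x ∈ badVals) with hFsig
    have hFsigcard : Fsig.card ≤ 3 := by
      rw [hFsig]
      split_ifs
      · simp
      · exact le_trans (preimage_card _ _) hbVcard
    have hFcard : (((Finset.Icc 1 7).filter
        (fun x => (G.degree a + 1) / 2 ≤ cnt1 G w z1 c' a x)) ∪ S'.image Bf ∪ Fsig).card ≤ 6 := by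
      have h1 := Finset.card_union_le (((Finset.Icc 1 7).filter
        (fun x => (G.degree a + 1) / 2 ≤ cnt1 G w z1 c' a x)) ∪ S'.image Bf) Fsig
      have h2 := Finset.card_union_le ((Finset.Icc 1 7).filter
        (fun x => (G.degree a + 1) / 2 ≤ cnt1 G w z1 c' a x)) (S'.image Bf)
      have h3 := Finset.card_image_le (s := S') (f := Bf)
      omega
    obtain ⟨x, hxI, hxF⟩ := exists_notin _ hFcard
    rw [Finset.mem_union, Finset.mem_union] at hxF
    push_neg at hxF
    obtain ⟨⟨hxcap, hximg⟩, hxsig⟩ := hxF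
    refine ⟨Function.update Bf a x, ?_, ?_, ?_, ?_, ?_⟩
    · intro y hy
      rcases Finset.mem_insert.mp hy with h | h
      · subst h
        rw [Function.update_self]
        exact hxI
      · rw [Function.update_of_ne (ne_of_mem_of_not_mem h ha)]
        exact hr y h
    · intro y hy y' hy' hne'
      rcases Finset.mem_insert.mp hy with h | h <;> rcases Finset.mem_insert.mp hy' with h' | h'
      · exact absurd (h.trans h'.symm) hne'
      · subst h
        rw [Function.update_self, Function.update_of_ne (ne_of_mem_of_not_mem h' ha)]
        intro he
        exact hximg (Finset.mem_image.mpr ⟨y', h', he.symm⟩)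
      · subst h'
        rw [Function.update_self, Function.update_of_ne (ne_of_mem_of_not_mem h ha)]
        intro he
        exact hximg (Finset.mem_image.mpr ⟨y, h, he⟩)
      · rw [Function.update_of_ne (ne_of_mem_of_not_mem h ha),
          Function.update_of_ne (ne_of_mem_of_not_mem h' ha)]
        exact hinj y h y' h' hne'
    · intro y hy
      rcases Finset.mem_insert.mp hy with h | h
      · subst h
        rw [Function.update_self]
        have : ¬ ((G.degree y + 1) / 2 ≤ cnt1 G w z1 c' y x) := by
          intro hle
          exact hxcap (Finset.mem_filter.mpr ⟨hxI, hle⟩)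
        unfold cap
        omega
      · rw [Function.update_of_ne (ne_of_mem_of_not_mem h ha)]
        exact hcap y h
    · intro y hy hyZ x' hx1 hx2 hx3 hx4 hx5
      rcases Finset.mem_insert.mp hy with h | h
      · subst h
        rw [Function.update_self]
        intro he
        have hmem : fixS G w z1 c' x' ∈ badVals := by
          rw [hbV]
          apply Finset.mem_union_left
          apply Finset.mem_image_of_mem
          rw [houtN, Finset.mem_filter]
          exact ⟨by rw [SimpleGraph.mem_neighborFinset]; exact hx1, hx2, hx3, hx4, hx5⟩
        apply hxsig
        rw [hFsig, if_neg hyZ, Finset.mem_filter]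
        exact ⟨hxI, he ▸ hmem⟩
      · rw [Function.update_of_ne (ne_of_mem_of_not_mem h ha)]
        exact hout y h hyZ x' hx1 hx2 hx3 hx4 hx5
    · intro y hy y' hy' hyZ hy'Z hadj'
      rcases Finset.mem_insert.mp hy with h | h <;> rcases Finset.mem_insert.mp hy' with h' | h'
      · exfalso
        rw [h, h'] at hadj'
        exact G.loopless.irrefl _ hadj'
      · subst h
        rw [Function.update_self, Function.update_of_ne (ne_of_mem_of_not_mem h' ha)]
        intro he
        have hmem : fixS G w z1 c' y' + Bf y' ∈ badVals := by
          rw [hbV]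
          apply Finset.mem_union_right
          apply Finset.mem_image_of_mem
          rw [hcrossN, Finset.mem_filter]
          exact ⟨h', hy'Z, hadj'⟩
        apply hxsig
        rw [hFsig, if_neg hyZ, Finset.mem_filter]
        exact ⟨hxI, he ▸ hmem⟩
      · subst h'
        rw [Function.update_self, Function.update_of_ne (ne_of_mem_of_not_mem h ha)]
        intro he
        have hmem : fixS G w z1 c' y + Bf y ∈ badVals := by
          rw [hbV]
          apply Finset.mem_union_right
          apply Finset.mem_image_of_mem
          rw [hcrossN, Finset.mem_filter]
          exact ⟨h, hyZ, hadj'.symm⟩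
        apply hxsig
        rw [hFsig, if_neg hy'Z, Finset.mem_filter]
        exact ⟨hxI, he.symm ▸ hmem⟩
      · rw [Function.update_of_ne (ne_of_mem_of_not_mem h ha),
          Function.update_of_ne (ne_of_mem_of_not_mem h' ha)]
        exact hcross y h y' h' hyZ hy'Z hadj'

end PhaseY

section PhaseZ

variable (G : SimpleGraph V) [DecidableRel G.Adj] (w z1 : V) (c' : V → V → ℕ) (Bf : V → ℕ)

/-- the part of the final sum at `v` that does not involve `A`. -/
def base (v : V) : ℕ := fixS G w z1 c' v + (if v ∈ Ys G w z1 then Bf v else 0)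

lemma phaseZ (hadj : G.Adj w z1) (hdeg : ∀ v, G.degree v ≤ 4)
    (hec : EdgeColoring (Gm G w z1) 7 c') :
    ∀ S : Finset V, S ⊆ Zs G w z1 →
    ∃ A : V → ℕ,
      (∀ z ∈ S, A z ∈ Finset.Icc 1 7) ∧
      (∀ z ∈ S, ∀ z' ∈ S, z ≠ z' → A z ≠ A z') ∧
      (∀ z ∈ S, cnt1 G w z1 c' z (A z)
        + (if z ∈ Ys G w z1 ∧ Bf z = A z then 1 else 0) + 1 ≤ cap G z) ∧
      (∀ z ∈ S, ∀ x, G.Adj z x → x ∉ Zs G w z1 → x ∉ Ys G w z1 → x ≠ w → x ≠ z1 →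
          base G w z1 c' Bf z + A z ≠ fixS G w z1 c' x) ∧
      (∀ z ∈ S, ∀ y, y ∈ Ys G w z1 → y ∉ Zs G w z1 → G.Adj z y →
          base G w z1 c' Bf z + A z ≠ base G w z1 c' Bf y) ∧
      (∀ z ∈ S, ∀ z' ∈ S, G.Adj z z' →
          base G w z1 c' Bf z + A z ≠ base G w z1 c' Bf z' + A z') := by
  intro S
  induction S using Finset.induction_on with
  | empty =>
    intro _
    refine ⟨fun _ => 1, ?_, ?_, ?_, ?_, ?_, ?_⟩ <;> simp
  | @insert a S' ha ih =>
    intro hsub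
    have hsub' : S' ⊆ Zs G w z1 := fun x hx => hsub (Finset.mem_insert_of_mem hx)
    have haZ : a ∈ Zs G w z1 := hsub (Finset.mem_insert_self a S')
    obtain ⟨A, hr, hinj, hcap, hout, hpy, hcross⟩ := ih hsub'
    have haadj : G.Adj w a := ((mem_Zs G w z1).mp haZ).2
    have haz : a ≠ z1 := ((mem_Zs G w z1).mp haZ).1
    have haw : a ≠ w := fun h => G.loopless.irrefl w (h ▸ haadj)
    have hadeg : 1 ≤ G.degree a := by
      rw [← SimpleGraph.card_neighborFinset_eq_degree]
      exact Finset.card_pos.mpr ⟨w, by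
        rw [SimpleGraph.mem_neighborFinset]; exact haadj.symm⟩
    have hScard : S'.card ≤ 2 := by
      have h1 : (insert a S').card ≤ (Zs G w z1).card := Finset.card_le_card hsub
      rw [Finset.card_insert_of_notMem ha] at h1
      rw [Zs_card G w z1 hadj] at h1
      have := hdeg w
      omega
    have hFcap : ((Finset.Icc 1 7).filter
        (fun x => (G.degree a + 1) / 2 ≤ cnt1 G w z1 c' a x
          + (if a ∈ Ys G w z1 ∧ Bf a = x then 1 else 0))).card ≤ 1 := by
      apply capbad_card _ (G.degree a) hadeg
      have h1 := cnt1_sum G w z1 c' hadj hec (Or.inl haZ)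
      have h2 : ∑ x ∈ Finset.Icc 1 7, (if a ∈ Ys G w z1 ∧ Bf a = x then 1 else 0)
          ≤ if a ∈ Zs G w z1 ∧ a ∈ Ys G w z1 then 1 else 0 := by
        by_cases hY : a ∈ Ys G w z1
        · simp only [hY, true_and, haZ, and_true, if_pos]
          rw [Finset.sum_ite_eq (Finset.Icc 1 7) (Bf a) (fun _ => 1)]
          split_ifs <;> omega
        · simp [hY]
      rw [Finset.sum_add_distrib]
      omega
    set outN := (G.neighborFinset a).filter
      (fun x => x ∉ Zs G w z1 ∧ x ∉ Ys G w z1 ∧ x ≠ w ∧ x ≠ z1) with houtN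
    set pyN := (G.neighborFinset a).filter
      (fun y => y ∈ Ys G w z1 ∧ y ∉ Zs G w z1) with hpyN
    set crossN := S'.filter (fun z' => G.Adj a z') with hcrossN
    set badVals := outN.image (fixS G w z1 c')
      ∪ pyN.image (base G w z1 c' Bf)
      ∪ crossN.image (fun z' => base G w z1 c' Bf z' + A z') with hbV
    have hbVcard : badVals.card ≤ 3 := by
      have hsub2 : outN ∪ pyN ∪ crossN ⊆ (G.neighborFinset a).erase w := by
        intro x hx
        rcases Finset.mem_union.mp hx with hx' | h
        · rcases Finset.mem_union.mp hx' with h | h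
          · rw [houtN, Finset.mem_filter] at h
            exact Finset.mem_erase.mpr ⟨h.2.2.2.1, h.1⟩
          · rw [hpyN, Finset.mem_filter] at h
            exact Finset.mem_erase.mpr ⟨((mem_Ys G w z1).mp h.2.1).1, h.1⟩
        · rw [hcrossN, Finset.mem_filter] at h
          have hxZ := hsub' h.1
          have hxw : x ≠ w := fun he =>
            G.loopless.irrefl w (he ▸ ((mem_Zs G w z1).mp hxZ).2)
          exact Finset.mem_erase.mpr ⟨hxw, by
            rw [SimpleGraph.mem_neighborFinset]; exact h.2⟩
      have hd1 : Disjoint outN pyN := by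
        rw [Finset.disjoint_left]
        intro x hx1 hx2
        rw [houtN, Finset.mem_filter] at hx1
        rw [hpyN, Finset.mem_filter] at hx2
        exact hx1.2.2.1 hx2.2.1
      have hd2 : Disjoint (outN ∪ pyN) crossN := by
        rw [Finset.disjoint_left]
        intro x hx1 hx2
        rw [hcrossN, Finset.mem_filter] at hx2
        have hxZ := hsub' hx2.1
        rcases Finset.mem_union.mp hx1 with h | h
        · rw [houtN, Finset.mem_filter] at h
          exact h.2.1 hxZ
        · rw [hpyN, Finset.mem_filter] at h
          exact h.2.2 hxZ
      have h2 : outN.card + pyN.card + crossN.card ≤ G.degree a - 1 := by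
        have e1 : (outN ∪ pyN ∪ crossN).card = outN.card + pyN.card + crossN.card := by
          rw [Finset.card_union_of_disjoint hd2, Finset.card_union_of_disjoint hd1]
        rw [← e1]
        have := Finset.card_le_card hsub2
        rw [Finset.card_erase_of_mem (by
          rw [SimpleGraph.mem_neighborFinset]; exact haadj.symm),
          SimpleGraph.card_neighborFinset_eq_degree] at this
        exact this
      have h3 := Finset.card_image_le (s := outN) (f := fixS G w z1 c')
      have h4 := Finset.card_image_le (s := pyN) (f := base G w z1 c' Bf)
      have h5 := Finset.card_image_le (s := crossN)
        (f := fun z' => base G w z1 c' Bf z' + A z')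
      have h6 := Finset.card_union_le (outN.image (fixS G w z1 c'))
        (pyN.image (base G w z1 c' Bf))
      have h7 := Finset.card_union_le
        (outN.image (fixS G w z1 c') ∪ pyN.image (base G w z1 c' Bf))
        (crossN.image (fun z' => base G w z1 c' Bf z' + A z'))
      have := hdeg a
      rw [hbV]
      omega
    have hFsigcard : ((Finset.Icc 1 7).filter
        (fun x => base G w z1 c' Bf a + x ∈ badVals)).card ≤ 3 :=
      le_trans (preimage_card _ _) hbVcard
    have hFcard : (((Finset.Icc 1 7).filter
        (fun x => (G.degree a + 1) / 2 ≤ cnt1 G w z1 c' a x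
          + (if a ∈ Ys G w z1 ∧ Bf a = x then 1 else 0))) ∪ S'.image A
        ∪ ((Finset.Icc 1 7).filter
            (fun x => base G w z1 c' Bf a + x ∈ badVals))).card ≤ 6 := by
      have h1 := Finset.card_union_le (((Finset.Icc 1 7).filter
        (fun x => (G.degree a + 1) / 2 ≤ cnt1 G w z1 c' a x
          + (if a ∈ Ys G w z1 ∧ Bf a = x then 1 else 0))) ∪ S'.image A)
        ((Finset.Icc 1 7).filter (fun x => base G w z1 c' Bf a + x ∈ badVals))
      have h2 := Finset.card_union_le ((Finset.Icc 1 7).filter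
        (fun x => (G.degree a + 1) / 2 ≤ cnt1 G w z1 c' a x
          + (if a ∈ Ys G w z1 ∧ Bf a = x then 1 else 0))) (S'.image A)
      have h3 := Finset.card_image_le (s := S') (f := A)
      omega
    obtain ⟨x, hxI, hxF⟩ := exists_notin _ hFcard
    rw [Finset.mem_union, Finset.mem_union] at hxF
    push_neg at hxF
    obtain ⟨⟨hxcap, hximg⟩, hxsig⟩ := hxF
    have hxsig' : base G w z1 c' Bf a + x ∉ badVals := by
      intro hmem
      exact hxsig (Finset.mem_filter.mpr ⟨hxI, hmem⟩)
    refine ⟨Function.update A a x, ?_, ?_, ?_, ?_, ?_, ?_⟩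
    · intro z hz
      rcases Finset.mem_insert.mp hz with h | h
      · subst h
        rw [Function.update_self]
        exact hxI
      · rw [Function.update_of_ne (ne_of_mem_of_not_mem h ha)]
        exact hr z h
    · intro z hz z' hz' hne'
      rcases Finset.mem_insert.mp hz with h | h <;> rcases Finset.mem_insert.mp hz' with h' | h'
      · exact absurd (h.trans h'.symm) hne'
      · subst h
        rw [Function.update_self, Function.update_of_ne (ne_of_mem_of_not_mem h' ha)]
        intro he
        exact hximg (Finset.mem_image.mpr ⟨z', h', he.symm⟩)
      · subst h'
        rw [Function.update_self, Function.update_of_ne (ne_of_mem_of_not_mem h ha)]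
        intro he
        exact hximg (Finset.mem_image.mpr ⟨z, h, he⟩)
      · rw [Function.update_of_ne (ne_of_mem_of_not_mem h ha),
          Function.update_of_ne (ne_of_mem_of_not_mem h' ha)]
        exact hinj z h z' h' hne'
    · intro z hz
      rcases Finset.mem_insert.mp hz with h | h
      · subst h
        rw [Function.update_self]
        have hnot : ¬ ((G.degree z + 1) / 2 ≤ cnt1 G w z1 c' z x
            + (if z ∈ Ys G w z1 ∧ Bf z = x then 1 else 0)) := by
          intro hle
          exact hxcap (Finset.mem_filter.mpr ⟨hxI, hle⟩)
        unfold cap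
        omega
      · rw [Function.update_of_ne (ne_of_mem_of_not_mem h ha)]
        exact hcap z h
    · intro z hz x' hx1 hx2 hx3 hx4 hx5
      rcases Finset.mem_insert.mp hz with h | h
      · subst h
        rw [Function.update_self]
        intro he
        apply hxsig'
        rw [hbV]
        apply Finset.mem_union_left
        apply Finset.mem_union_left
        rw [he]
        apply Finset.mem_image_of_mem
        rw [houtN, Finset.mem_filter]
        exact ⟨by rw [SimpleGraph.mem_neighborFinset]; exact hx1, hx2, hx3, hx4, hx5⟩
      · rw [Function.update_of_ne (ne_of_mem_of_not_mem h ha)]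
        exact hout z h x' hx1 hx2 hx3 hx4 hx5
    · intro z hz y hy1 hy2 hadj'
      rcases Finset.mem_insert.mp hz with h | h
      · subst h
        rw [Function.update_self]
        intro he
        apply hxsig'
        rw [hbV]
        apply Finset.mem_union_left
        apply Finset.mem_union_right
        rw [he]
        apply Finset.mem_image_of_mem
        rw [hpyN, Finset.mem_filter]
        exact ⟨by rw [SimpleGraph.mem_neighborFinset]; exact hadj', hy1, hy2⟩
      · rw [Function.update_of_ne (ne_of_mem_of_not_mem h ha)]
        exact hpy z h y hy1 hy2 hadj'
    · intro z hz z' hz' hadj'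
      rcases Finset.mem_insert.mp hz with h | h <;> rcases Finset.mem_insert.mp hz' with h' | h'
      · exfalso
        rw [h, h'] at hadj'
        exact G.loopless.irrefl _ hadj'
      · subst h
        rw [Function.update_self, Function.update_of_ne (ne_of_mem_of_not_mem h' ha)]
        intro he
        apply hxsig'
        rw [hbV]
        apply Finset.mem_union_right
        rw [he]
        apply Finset.mem_image_of_mem
        rw [hcrossN, Finset.mem_filter]
        exact ⟨h', hadj'⟩
      · subst h'
        rw [Function.update_self, Function.update_of_ne (ne_of_mem_of_not_mem h ha)]
        intro he
        apply hxsig'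
        rw [hbV]
        apply Finset.mem_union_right
        rw [← he]
        apply Finset.mem_image_of_mem
        rw [hcrossN, Finset.mem_filter]
        exact ⟨h, hadj'.symm⟩
      · rw [Function.update_of_ne (ne_of_mem_of_not_mem h ha),
          Function.update_of_ne (ne_of_mem_of_not_mem h' ha)]
        exact hcross z h z' h' hadj'

end PhaseZ

section Fallback

lemma addl_filter_card (s t : ℕ) : ((Finset.Icc 1 7).filter (fun x => s + x = t)).card ≤ 1 := by
  rw [Finset.card_le_one]
  intro a ha b hb
  simp only [Finset.mem_filter] at ha hb
  omega

lemma fallback (F2 F3 F4 : Finset ℕ) (hF2 : F2.card ≤ 4) (hF3 : F3.card ≤ 4)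
    (hF4 : F4.card ≤ 4) (Fb : Finset ℕ) (hFb : Fb.card ≤ 3) (T2 T3 T4 D : ℕ) :
    ∃ a2 a3 a4 b : ℕ,
      a2 ∈ Finset.Icc 1 7 ∧ a3 ∈ Finset.Icc 1 7 ∧ a4 ∈ Finset.Icc 1 7 ∧ b ∈ Finset.Icc 1 7 ∧
      a2 ∉ F2 ∧ a3 ∉ F3 ∧ a4 ∉ F4 ∧
      a2 + a3 + a4 ≠ D ∧
      a2 + a3 + a4 + b ≠ T2 + a2 ∧
      a2 + a3 + a4 + b ≠ T3 + a3 ∧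
      a2 + a3 + a4 + b ≠ T4 + a4 ∧
      b ∉ Fb ∧
      (∀ α : ℕ, (if a2 = α then 1 else 0) + (if a3 = α then 1 else 0)
        + (if a4 = α then 1 else 0) + (if b = α then 1 else 0) ≤ 2) := by
  have hIcard : (Finset.Icc 1 7).card = 7 := by
    rw [Nat.card_Icc]
  have hUcard : ∀ F : Finset ℕ, F.card ≤ 4 → 3 ≤ ((Finset.Icc 1 7) \ F).card := by
    intro F hF
    have := Finset.le_card_sdiff F (Finset.Icc 1 7)
    omega
  by_cases H : ∃ a4 ∈ (Finset.Icc 1 7) \ F4, ∃ a3 ∈ (Finset.Icc 1 7) \ F3, a3 ≠ a4 ∧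
      ∃ a2 ∈ (Finset.Icc 1 7) \ F2, a2 ≠ a3 ∧ a2 ≠ a4 ∧ a2 + a3 + a4 ≠ D
  · obtain ⟨a4, ha4, a3, ha3, hne34, a2, ha2, hne23, hne24, hD⟩ := H
    rw [Finset.mem_sdiff] at ha2 ha3 ha4
    -- choose b avoiding ≤ 6 values
    set Gb := Fb ∪ ((Finset.Icc 1 7).filter (fun x => a2 + a3 + a4 + x = T2 + a2))
      ∪ ((Finset.Icc 1 7).filter (fun x => a2 + a3 + a4 + x = T3 + a3))
      ∪ ((Finset.Icc 1 7).filter (fun x => a2 + a3 + a4 + x = T4 + a4)) with hGb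
    have hGbcard : Gb.card ≤ 6 := by
      have h1 := Finset.card_union_le (Fb ∪ ((Finset.Icc 1 7).filter
          (fun x => a2 + a3 + a4 + x = T2 + a2))
        ∪ ((Finset.Icc 1 7).filter (fun x => a2 + a3 + a4 + x = T3 + a3)))
        ((Finset.Icc 1 7).filter (fun x => a2 + a3 + a4 + x = T4 + a4))
      have h2 := Finset.card_union_le (Fb ∪ ((Finset.Icc 1 7).filter
          (fun x => a2 + a3 + a4 + x = T2 + a2)))
        ((Finset.Icc 1 7).filter (fun x => a2 + a3 + a4 + x = T3 + a3))
      have h3 := Finset.card_union_le Fb ((Finset.Icc 1 7).filter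
          (fun x => a2 + a3 + a4 + x = T2 + a2))
      have h4 := addl_filter_card (a2 + a3 + a4) (T2 + a2)
      have h5 := addl_filter_card (a2 + a3 + a4) (T3 + a3)
      have h6 := addl_filter_card (a2 + a3 + a4) (T4 + a4)
      rw [hGb]
      omega
    obtain ⟨b, hbI, hbG⟩ := exists_notin Gb hGbcard
    rw [hGb] at hbG
    simp only [Finset.mem_union, Finset.mem_filter, not_or, not_and] at hbG
    refine ⟨a2, a3, a4, b, ha2.1, ha3.1, ha4.1, hbI, ha2.2, ha3.2, ha4.2, hD, ?_, ?_, ?_, ?_, ?_⟩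
    · intro he
      exact hbG.1.1.2 hbI he
    · intro he
      exact hbG.1.2 hbI he
    · intro he
      exact hbG.2 hbI he
    · exact hbG.1.1.1
    · intro α
      split_ifs <;> omega
  · push_neg at H
    -- failure analysis
    have key : ∀ a4 ∈ (Finset.Icc 1 7) \ F4, ∀ a3 ∈ (Finset.Icc 1 7) \ F3, a3 ≠ a4 →
        (Finset.Icc 1 7) \ F2 ⊆ {a3, a4} ∪ ((Finset.Icc 1 7).filter
          (fun x => x + a3 + a4 = D)) := by
      intro a4 ha4 a3 ha3 hne x hx
      have h := H a4 ha4 a3 ha3 hne x hx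
      by_cases h3 : x = a3
      · simp [h3]
      by_cases h4 : x = a4
      · simp [h4]
      · simp only [Finset.mem_union, Finset.mem_filter]
        right
        exact ⟨(Finset.mem_sdiff.mp hx).1, h h3 h4⟩
    have hsum_card : ∀ a3 a4 : ℕ, ((Finset.Icc 1 7).filter
        (fun x => x + a3 + a4 = D)).card ≤ 1 := by
      intro a3 a4
      rw [Finset.card_le_one]
      intro a ha b hb
      simp only [Finset.mem_filter] at ha hb
      omega
    -- I \ F4 ⊆ I \ F2
    have hsub4 : (Finset.Icc 1 7) \ F4 ⊆ (Finset.Icc 1 7) \ F2 := by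
      intro a4 ha4
      rw [Finset.mem_sdiff]
      refine ⟨(Finset.mem_sdiff.mp ha4).1, ?_⟩
      intro ha4F2
      -- pick a3 ∈ (I \ F3) \ {a4}
      have h3 : 1 ≤ (((Finset.Icc 1 7) \ F3).erase a4).card := by
        have h' := hUcard F3 hF3
        have hle := Finset.pred_card_le_card_erase (s := (Finset.Icc 1 7) \ F3) (a := a4)
        omega
      have hpos3 : 0 < (((Finset.Icc 1 7) \ F3).erase a4).card := by omega
      obtain ⟨a3, ha3⟩ := Finset.card_pos.mp hpos3
      have ha3' := Finset.mem_of_mem_erase ha3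
      have hne : a3 ≠ a4 := Finset.ne_of_mem_erase ha3
      have hk := key a4 ha4 a3 ha3' hne
      -- then I\F2 ⊆ {a3} ∪ filter (since a4 ∈ F2 excludes a4)
      have hsub' : (Finset.Icc 1 7) \ F2 ⊆ insert a3 ((Finset.Icc 1 7).filter
          (fun x => x + a3 + a4 = D)) := by
        intro x hx
        have := hk hx
        rcases Finset.mem_union.mp this with h | h
        · rcases Finset.mem_insert.mp h with h' | h'
          · exact Finset.mem_insert.mpr (Or.inl h')
          · rw [Finset.mem_singleton] at h'
            subst h'
            exact absurd ha4F2 (Finset.mem_sdiff.mp hx).2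
        · exact Finset.mem_insert.mpr (Or.inr h)
      have hc := Finset.card_le_card hsub'
      have hc2 := Finset.card_insert_le a3 ((Finset.Icc 1 7).filter
          (fun x => x + a3 + a4 = D))
      have := hsum_card a3 a4
      have := hUcard F2 hF2
      omega
    -- I \ F3 ⊆ I \ F2
    have hsub3 : (Finset.Icc 1 7) \ F3 ⊆ (Finset.Icc 1 7) \ F2 := by
      intro a3 ha3
      rw [Finset.mem_sdiff]
      refine ⟨(Finset.mem_sdiff.mp ha3).1, ?_⟩
      intro ha3F2
      have h4 : 1 ≤ (((Finset.Icc 1 7) \ F4).erase a3).card := by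
        have h' := hUcard F4 hF4
        have hle := Finset.pred_card_le_card_erase (s := (Finset.Icc 1 7) \ F4) (a := a3)
        omega
      have hpos4 : 0 < (((Finset.Icc 1 7) \ F4).erase a3).card := by omega
      obtain ⟨a4, ha4⟩ := Finset.card_pos.mp hpos4
      have ha4' := Finset.mem_of_mem_erase ha4
      have hne : a3 ≠ a4 := (Finset.ne_of_mem_erase ha4).symm
      have hk := key a4 ha4' a3 ha3 hne
      have hsub' : (Finset.Icc 1 7) \ F2 ⊆ insert a4 ((Finset.Icc 1 7).filter
          (fun x => x + a3 + a4 = D)) := by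
        intro x hx
        have := hk hx
        rcases Finset.mem_union.mp this with h | h
        · rcases Finset.mem_insert.mp h with h' | h'
          · subst h'
            exact absurd ha3F2 (Finset.mem_sdiff.mp hx).2
          · rw [Finset.mem_singleton] at h'
            exact Finset.mem_insert.mpr (Or.inl h')
        · exact Finset.mem_insert.mpr (Or.inr h)
      have hc := Finset.card_le_card hsub'
      have hc2 := Finset.card_insert_le a4 ((Finset.Icc 1 7).filter
          (fun x => x + a3 + a4 = D))
      have := hsum_card a3 a4
      have := hUcard F2 hF2
      omega
    -- |I \ F2| = 3
    have hU3 : ((Finset.Icc 1 7) \ F2).card = 3 := by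
      have hpos4' : 0 < ((Finset.Icc 1 7) \ F4).card := by
        have := hUcard F4 hF4
        omega
      obtain ⟨a4, ha4⟩ := Finset.card_pos.mp hpos4'
      have h3 : 1 ≤ (((Finset.Icc 1 7) \ F3).erase a4).card := by
        have h' := hUcard F3 hF3
        have hle := Finset.pred_card_le_card_erase (s := (Finset.Icc 1 7) \ F3) (a := a4)
        omega
      have hpos3' : 0 < (((Finset.Icc 1 7) \ F3).erase a4).card := by omega
      obtain ⟨a3, ha3⟩ := Finset.card_pos.mp hpos3'
      have ha3' := Finset.mem_of_mem_erase ha3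
      have hne : a3 ≠ a4 := Finset.ne_of_mem_erase ha3
      have hk := key a4 ha4 a3 ha3' hne
      have hc := Finset.card_le_card hk
      have hc1 := Finset.card_union_le ({a3, a4} : Finset ℕ)
        ((Finset.Icc 1 7).filter (fun x => x + a3 + a4 = D))
      have hc2 : ({a3, a4} : Finset ℕ).card ≤ 2 := by
        apply le_trans (Finset.card_insert_le _ _)
        simp
      have := hsum_card a3 a4
      have := hUcard F2 hF2
      omega
    have hF4eq : (Finset.Icc 1 7) \ F4 = (Finset.Icc 1 7) \ F2 := by
      apply Finset.eq_of_subset_of_card_le hsub4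
      have := hUcard F4 hF4
      omega
    have hF3eq : (Finset.Icc 1 7) \ F3 = (Finset.Icc 1 7) \ F2 := by
      apply Finset.eq_of_subset_of_card_le hsub3
      have := hUcard F3 hF3
      omega
    obtain ⟨u1, u2, u3, h12, h13, h23, hUeq⟩ := Finset.card_eq_three.mp hU3
    have hu1 : u1 ∈ (Finset.Icc 1 7) \ F2 := by rw [hUeq]; simp
    have hu2 : u2 ∈ (Finset.Icc 1 7) \ F2 := by rw [hUeq]; simp
    have hu3 : u3 ∈ (Finset.Icc 1 7) \ F2 := by rw [hUeq]; simp
    have hu1_34 : u1 ∈ (Finset.Icc 1 7) \ F3 ∧ u1 ∈ (Finset.Icc 1 7) \ F4 := by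
      rw [hF3eq, hF4eq]; exact ⟨hu1, hu1⟩
    -- D = u3 + u2 + u1
    have hD : u3 + u2 + u1 = D := by
      have hu1F4 : u1 ∈ (Finset.Icc 1 7) \ F4 := by rw [hF4eq]; exact hu1
      have hu2F3 : u2 ∈ (Finset.Icc 1 7) \ F3 := by rw [hF3eq]; exact hu2
      exact H u1 hu1F4 u2 hu2F3 h12.symm u3 hu3 h23.symm h13.symm
    -- now try a2 = u2 and a2 = u3, with a3 = a4 = u1
    have main : ∀ a2 : ℕ, a2 ∈ (Finset.Icc 1 7) \ F2 → a2 ≠ u1 →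
        (¬ ∃ b ∈ Finset.Icc 1 7, b ∉ Fb ∧ b ≠ u1 ∧
          a2 + u1 + u1 + b ≠ T2 + a2 ∧ a2 + u1 + u1 + b ≠ T3 + u1 ∧
          a2 + u1 + u1 + b ≠ T4 + u1) →
        ∀ x ∈ Finset.Icc 1 7, x ∉ Fb → x ≠ u1 → x + u1 + u1 + a2 ≠ T2 + a2 →
          (a2 + u1 + u1 + x = T3 + u1 ∨ a2 + u1 + u1 + x = T4 + u1) := by
      intro a2 _ _ hnob x hxI hxFb hxu1 hxT2
      by_contra hcon
      push_neg at hcon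
      exact hnob ⟨x, hxI, hxFb, hxu1, by omega, hcon.1, hcon.2⟩
    by_cases hb2 : ∃ b ∈ Finset.Icc 1 7, b ∉ Fb ∧ b ≠ u1 ∧
        u2 + u1 + u1 + b ≠ T2 + u2 ∧ u2 + u1 + u1 + b ≠ T3 + u1 ∧ u2 + u1 + u1 + b ≠ T4 + u1
    · obtain ⟨b, hbI, hbFb, hbu1, hb1, hb3, hb4⟩ := hb2
      refine ⟨u2, u1, u1, b, (Finset.mem_sdiff.mp hu2).1, (Finset.mem_sdiff.mp hu1_34.1).1,
        (Finset.mem_sdiff.mp hu1_34.2).1, hbI, (Finset.mem_sdiff.mp hu2).2,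
        (Finset.mem_sdiff.mp hu1_34.1).2, (Finset.mem_sdiff.mp hu1_34.2).2,
        by omega, hb1, hb3, hb4, hbFb, ?_⟩
      intro α
      have h12' : u1 ≠ u2 := h12
      split_ifs <;> omega
    by_cases hb3' : ∃ b ∈ Finset.Icc 1 7, b ∉ Fb ∧ b ≠ u1 ∧
        u3 + u1 + u1 + b ≠ T2 + u3 ∧ u3 + u1 + u1 + b ≠ T3 + u1 ∧ u3 + u1 + u1 + b ≠ T4 + u1
    · obtain ⟨b, hbI, hbFb, hbu1, hb1, hb3, hb4⟩ := hb3'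
      refine ⟨u3, u1, u1, b, (Finset.mem_sdiff.mp hu3).1, (Finset.mem_sdiff.mp hu1_34.1).1,
        (Finset.mem_sdiff.mp hu1_34.2).1, hbI, (Finset.mem_sdiff.mp hu3).2,
        (Finset.mem_sdiff.mp hu1_34.1).2, (Finset.mem_sdiff.mp hu1_34.2).2,
        by omega, hb1, hb3, hb4, hbFb, ?_⟩
      intro α
      have h13' : u1 ≠ u3 := h13
      split_ifs <;> omega
    · -- both fail: contradiction
      exfalso
      push_neg at hb2 hb3'
      -- the common excluded set
      set C := Fb ∪ {u1} ∪ ((Finset.Icc 1 7).filter (fun x => x + u1 + u1 = T2)) with hC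
      have hCcard : C.card ≤ 5 := by
        have h1 := Finset.card_union_le (Fb ∪ {u1})
          ((Finset.Icc 1 7).filter (fun x => x + u1 + u1 = T2))
        have h2 := Finset.card_union_le Fb ({u1} : Finset ℕ)
        have h3 : ((Finset.Icc 1 7).filter (fun x => x + u1 + u1 = T2)).card ≤ 1 := by
          rw [Finset.card_le_one]
          intro a ha b hb
          simp only [Finset.mem_filter] at ha hb
          omega
        rw [hC]
        simp only [Finset.card_singleton] at h2
        omega
      have hMcard : 2 ≤ ((Finset.Icc 1 7) \ C).card := by
        have := Finset.le_card_sdiff C (Finset.Icc 1 7)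
        omega
      have hM1 : 1 < ((Finset.Icc 1 7) \ C).card := by omega
      obtain ⟨m1, hm1, m2, hm2, hmne⟩ := Finset.one_lt_card.mp hM1
      have hmem : ∀ m ∈ (Finset.Icc 1 7) \ C,
          (u2 + u1 + u1 + m = T3 + u1 ∨ u2 + u1 + u1 + m = T4 + u1) ∧
          (u3 + u1 + u1 + m = T3 + u1 ∨ u3 + u1 + u1 + m = T4 + u1) := by
        intro m hm
        rw [Finset.mem_sdiff, hC] at hm
        simp only [Finset.mem_union, Finset.mem_singleton, Finset.mem_filter, not_or,
          not_and] at hm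
        obtain ⟨hmI, ⟨⟨hmFb, hmu1⟩, hmT2⟩⟩ := hm
        constructor
        · by_contra hcon
          push_neg at hcon
          have hT2 : u2 + u1 + u1 + m ≠ T2 + u2 := by
            intro he
            exact hmT2 hmI (by omega)
          exact hcon.2 (hb2 m hmI hmFb hmu1 hT2 hcon.1)
        · by_contra hcon
          push_neg at hcon
          have hT2 : u3 + u1 + u1 + m ≠ T2 + u3 := by
            intro he
            exact hmT2 hmI (by omega)
          exact hcon.2 (hb3' m hmI hmFb hmu1 hT2 hcon.1)
      have h1 := hmem m1 hm1
      have h2 := hmem m2 hm2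
      have hu23 : u2 ≠ u3 := h23
      rcases h1.1 with e1 | e1 <;> rcases h1.2 with e2 | e2 <;>
        rcases h2.1 with e3 | e3 <;> rcases h2.2 with e4 | e4 <;> omega

end Fallback

section Choose

variable (G : SimpleGraph V) [DecidableRel G.Adj] (w z1 : V) (c' : V → V → ℕ)

lemma cap_pos (hadj : G.Adj w z1) : 1 ≤ cap G w := by
  unfold cap
  have : 1 ≤ G.degree w := by
    rw [← SimpleGraph.card_neighborFinset_eq_degree]
    exact Finset.card_pos.mpr ⟨z1, by rw [SimpleGraph.mem_neighborFinset]; exact hadj⟩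
  omega

lemma chooseB (hadj : G.Adj w z1) (hdeg : ∀ v, G.degree v ≤ 4) (A Bf : V → ℕ)
    (hAinj : ∀ α, ((Zs G w z1).filter (fun z => A z = α)).card ≤ 1)
    (hBfinj : ∀ α, ((Ys G w z1).filter (fun y => Bf y = α)).card ≤ 1) :
    ∃ B, B ∈ Finset.Icc 1 7 ∧
      (∀ α, ((Zs G w z1).filter (fun z => A z = α)).card + (if B = α then 1 else 0) ≤ cap G w) ∧
      (∀ α, ((Ys G w z1).filter (fun y => Bf y = α)).card + (if B = α then 1 else 0) ≤ cap G z1) ∧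
      (∀ z ∈ Zs G w z1, (∑ z' ∈ Zs G w z1, A z') + B ≠ fsig G w z1 c' A Bf z) ∧
      (∀ y ∈ Ys G w z1, (∑ y' ∈ Ys G w z1, Bf y') + B ≠ fsig G w z1 c' A Bf y) := by
  have hcw := cap_pos G w z1 hadj
  have hcz := cap_pos G z1 w hadj.symm
  have hcz' : 1 ≤ cap G z1 := by
    unfold cap at hcz ⊢
    exact hcz
  set Fq1 := if 2 ≤ cap G w then (∅ : Finset ℕ) else (Zs G w z1).image A with hFq1
  set Fq2 := if 2 ≤ cap G z1 then (∅ : Finset ℕ) else (Ys G w z1).image Bf with hFq2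
  set Fn2 := (Finset.Icc 1 7).filter
    (fun x => (∑ z' ∈ Zs G w z1, A z') + x ∈ (Zs G w z1).image (fsig G w z1 c' A Bf))
    with hFn2
  set Fn3 := (Finset.Icc 1 7).filter
    (fun x => (∑ y' ∈ Ys G w z1, Bf y') + x ∈ (Ys G w z1).image (fsig G w z1 c' A Bf))
    with hFn3
  have hZc : (Zs G w z1).card = G.degree w - 1 := Zs_card G w z1 hadj
  have hYc : (Ys G w z1).card = G.degree z1 - 1 := Ys_card G w z1 hadj
  have hwside : Fq1.card + Fn2.card ≤ 3 := by
    have h1 : Fn2.card ≤ (Zs G w z1).card := by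
      apply le_trans (preimage_card _ _)
      exact Finset.card_image_le
    by_cases hc : 2 ≤ cap G w
    · rw [hFq1, if_pos hc]
      have := hdeg w
      simp only [Finset.card_empty]
      omega
    · rw [hFq1, if_neg hc]
      have hdw : G.degree w ≤ 2 := by
        unfold cap at hc
        omega
      have h2 : ((Zs G w z1).image A).card ≤ (Zs G w z1).card := Finset.card_image_le
      omega
  have hzside : Fq2.card + Fn3.card ≤ 3 := by
    have h1 : Fn3.card ≤ (Ys G w z1).card := by
      apply le_trans (preimage_card _ _)
      exact Finset.card_image_le
    by_cases hc : 2 ≤ cap G z1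
    · rw [hFq2, if_pos hc]
      have := hdeg z1
      simp only [Finset.card_empty]
      omega
    · rw [hFq2, if_neg hc]
      have hdz : G.degree z1 ≤ 2 := by
        unfold cap at hc
        omega
      have h2 : ((Ys G w z1).image Bf).card ≤ (Ys G w z1).card := Finset.card_image_le
      omega
  have hcard : (Fq1 ∪ Fq2 ∪ Fn2 ∪ Fn3).card ≤ 6 := by
    have h1 := Finset.card_union_le (Fq1 ∪ Fq2 ∪ Fn2) Fn3
    have h2 := Finset.card_union_le (Fq1 ∪ Fq2) Fn2
    have h3 := Finset.card_union_le Fq1 Fq2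
    omega
  obtain ⟨B, hBI, hBF⟩ := exists_notin _ hcard
  simp only [Finset.mem_union, not_or] at hBF
  obtain ⟨⟨⟨hB1, hB2⟩, hB3⟩, hB4⟩ := hBF
  refine ⟨B, hBI, ?_, ?_, ?_, ?_⟩
  · intro α
    by_cases hB : B = α
    · by_cases hc : 2 ≤ cap G w
      · have := hAinj α
        split_ifs <;> omega
      · have hemp : ((Zs G w z1).filter (fun z => A z = α)).card = 0 := by
          rw [Finset.card_eq_zero, Finset.filter_eq_empty_iff]
          intro z hz he
          apply hB1
          rw [hFq1, if_neg hc]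
          exact Finset.mem_image.mpr ⟨z, hz, by rw [he, hB]⟩
        rw [hemp, if_pos hB]
        omega
    · rw [if_neg hB]
      have := hAinj α
      omega
  · intro α
    by_cases hB : B = α
    · by_cases hc : 2 ≤ cap G z1
      · have := hBfinj α
        split_ifs <;> omega
      · have hemp : ((Ys G w z1).filter (fun y => Bf y = α)).card = 0 := by
          rw [Finset.card_eq_zero, Finset.filter_eq_empty_iff]
          intro y hy he
          apply hB2
          rw [hFq2, if_neg hc]
          exact Finset.mem_image.mpr ⟨y, hy, by rw [he, hB]⟩
        rw [hemp, if_pos hB]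
        omega
    · rw [if_neg hB]
      have := hBfinj α
      omega
  · intro z hz he
    apply hB3
    rw [hFn2, Finset.mem_filter]
    exact ⟨hBI, he ▸ Finset.mem_image_of_mem _ hz⟩
  · intro y hy he
    apply hB4
    rw [hFn3, Finset.mem_filter]
    exact ⟨hBI, he ▸ Finset.mem_image_of_mem _ hy⟩

lemma chooseLast (hadj : G.Adj w z1) (hdeg : ∀ v, G.degree v ≤ 4)
    (hec : EdgeColoring (Gm G w z1) 7 c') (Bf : V → ℕ) {zl : V} (hzl : zl ∈ Zs G w z1)
    (A0 : V → ℕ) (D : ℕ)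
    (hsave : G.Adj z1 zl ∨ ((Zs G w z1).erase zl).card ≤ 1) :
    ∃ x, x ∈ Finset.Icc 1 7 ∧
      (x ∉ ((Zs G w z1).erase zl).image A0) ∧
      (cnt1 G w z1 c' zl x + (if zl ∈ Ys G w z1 ∧ Bf zl = x then 1 else 0) + 1 ≤ cap G zl) ∧
      ((∑ z ∈ (Zs G w z1).erase zl, A0 z) + x ≠ D) ∧
      (∀ x', G.Adj zl x' → x' ∉ Zs G w z1 → x' ∉ Ys G w z1 → x' ≠ w → x' ≠ z1 →
        base G w z1 c' Bf zl + x ≠ fixS G w z1 c' x') ∧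
      (∀ y, y ∈ Ys G w z1 → y ∉ Zs G w z1 → G.Adj zl y →
        base G w z1 c' Bf zl + x ≠ base G w z1 c' Bf y) ∧
      (∀ z' ∈ (Zs G w z1).erase zl, G.Adj zl z' →
        base G w z1 c' Bf zl + x ≠ base G w z1 c' Bf z' + A0 z') := by
  have hadjl : G.Adj w zl := ((mem_Zs G w z1).mp hzl).2
  have hlz : zl ≠ z1 := ((mem_Zs G w z1).mp hzl).1
  have hlw : zl ≠ w := fun h => G.loopless.irrefl w (h ▸ hadjl)
  have hldeg : 1 ≤ G.degree zl := by
    rw [← SimpleGraph.card_neighborFinset_eq_degree]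
    exact Finset.card_pos.mpr ⟨w, by rw [SimpleGraph.mem_neighborFinset]; exact hadjl.symm⟩
  have hFcap : ((Finset.Icc 1 7).filter
      (fun x => (G.degree zl + 1) / 2 ≤ cnt1 G w z1 c' zl x
        + (if zl ∈ Ys G w z1 ∧ Bf zl = x then 1 else 0))).card ≤ 1 := by
    apply capbad_card _ (G.degree zl) hldeg
    have h1 := cnt1_sum G w z1 c' hadj hec (Or.inl hzl)
    have h2 : ∑ x ∈ Finset.Icc 1 7, (if zl ∈ Ys G w z1 ∧ Bf zl = x then 1 else 0)
        ≤ if zl ∈ Zs G w z1 ∧ zl ∈ Ys G w z1 then 1 else 0 := by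
      by_cases hY : zl ∈ Ys G w z1
      · simp only [hY, true_and, hzl, and_true, if_pos]
        rw [Finset.sum_ite_eq (Finset.Icc 1 7) (Bf zl) (fun _ => 1)]
        split_ifs <;> omega
      · simp [hY]
    rw [Finset.sum_add_distrib]
    omega
  set outN := (G.neighborFinset zl).filter
    (fun x => x ∉ Zs G w z1 ∧ x ∉ Ys G w z1 ∧ x ≠ w ∧ x ≠ z1) with houtN
  set pyN := (G.neighborFinset zl).filter
    (fun y => y ∈ Ys G w z1 ∧ y ∉ Zs G w z1) with hpyN
  set crossN := ((Zs G w z1).erase zl).filter (fun z' => G.Adj zl z') with hcrossN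
  set badVals := outN.image (fixS G w z1 c')
    ∪ pyN.image (base G w z1 c' Bf)
    ∪ crossN.image (fun z' => base G w z1 c' Bf z' + A0 z') with hbV
  have hd1 : Disjoint outN pyN := by
    rw [Finset.disjoint_left]
    intro x hx1 hx2
    rw [houtN, Finset.mem_filter] at hx1
    rw [hpyN, Finset.mem_filter] at hx2
    exact hx1.2.2.1 hx2.2.1
  have hd2 : Disjoint (outN ∪ pyN) crossN := by
    rw [Finset.disjoint_left]
    intro x hx1 hx2
    rw [hcrossN, Finset.mem_filter] at hx2
    have hxZ := Finset.mem_of_mem_erase hx2.1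
    rcases Finset.mem_union.mp hx1 with h | h
    · rw [houtN, Finset.mem_filter] at h
      exact h.2.1 hxZ
    · rw [hpyN, Finset.mem_filter] at h
      exact h.2.2 hxZ
  have hsub2 : outN ∪ pyN ∪ crossN ⊆ (G.neighborFinset zl).erase w := by
    intro x hx
    rcases Finset.mem_union.mp hx with hx' | h
    · rcases Finset.mem_union.mp hx' with h | h
      · rw [houtN, Finset.mem_filter] at h
        exact Finset.mem_erase.mpr ⟨h.2.2.2.1, h.1⟩
      · rw [hpyN, Finset.mem_filter] at h
        exact Finset.mem_erase.mpr ⟨((mem_Ys G w z1).mp h.2.1).1, h.1⟩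
    · rw [hcrossN, Finset.mem_filter] at h
      have hxZ := Finset.mem_of_mem_erase h.1
      have hxw : x ≠ w := fun he =>
        G.loopless.irrefl w (he ▸ ((mem_Zs G w z1).mp hxZ).2)
      exact Finset.mem_erase.mpr ⟨hxw, by
        rw [SimpleGraph.mem_neighborFinset]; exact h.2⟩
  have hnotz1 : ∀ x ∈ outN ∪ pyN ∪ crossN, x ≠ z1 := by
    intro x hx
    rcases Finset.mem_union.mp hx with hx' | h
    · rcases Finset.mem_union.mp hx' with h | h
      · rw [houtN, Finset.mem_filter] at h
        exact h.2.2.2.2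
      · rw [hpyN, Finset.mem_filter] at h
        intro he
        exact G.loopless.irrefl z1 (he ▸ ((mem_Ys G w z1).mp h.2.1).2)
    · rw [hcrossN, Finset.mem_filter] at h
      exact ((mem_Zs G w z1).mp (Finset.mem_of_mem_erase h.1)).1
  have hucard : (outN ∪ pyN ∪ crossN).card
      = outN.card + pyN.card + crossN.card := by
    rw [Finset.card_union_of_disjoint hd2, Finset.card_union_of_disjoint hd1]
  have hbound : badVals.card + (((Zs G w z1).erase zl).image A0).card ≤ 4 := by
    have h3 := Finset.card_image_le (s := outN) (f := fixS G w z1 c')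
    have h4 := Finset.card_image_le (s := pyN) (f := base G w z1 c' Bf)
    have h5 := Finset.card_image_le (s := crossN)
      (f := fun z' => base G w z1 c' Bf z' + A0 z')
    have h6 := Finset.card_union_le (outN.image (fixS G w z1 c'))
      (pyN.image (base G w z1 c' Bf))
    have h7 := Finset.card_union_le
      (outN.image (fixS G w z1 c') ∪ pyN.image (base G w z1 c' Bf))
      (crossN.image (fun z' => base G w z1 c' Bf z' + A0 z'))
    have h8 := Finset.card_image_le (s := (Zs G w z1).erase zl) (f := A0)
    have h9 : ((Zs G w z1).erase zl).card ≤ 2 := by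
      have h10 := Finset.card_erase_of_mem hzl
      have h11 := Zs_card G w z1 hadj
      have h12 := hdeg w
      omega
    rcases hsave with hs | hs
    · -- zl is adjacent to z1: contributors avoid both w and z1
      have hsub3 : outN ∪ pyN ∪ crossN ⊆ ((G.neighborFinset zl).erase w).erase z1 := by
        intro x hx
        rw [Finset.mem_erase]
        refine ⟨hnotz1 x hx, hsub2 hx⟩
      have hc := Finset.card_le_card hsub3
      have hz1m : z1 ∈ (G.neighborFinset zl).erase w := by
        rw [Finset.mem_erase, SimpleGraph.mem_neighborFinset]
        exact ⟨(Ne.symm (G.ne_of_adj hadj)), hs.symm⟩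
      rw [Finset.card_erase_of_mem hz1m,
        Finset.card_erase_of_mem (by
          rw [SimpleGraph.mem_neighborFinset]; exact hadjl.symm),
        SimpleGraph.card_neighborFinset_eq_degree] at hc
      have := hdeg zl
      rw [hbV]
      omega
    · have hc := Finset.card_le_card hsub2
      rw [Finset.card_erase_of_mem (by
          rw [SimpleGraph.mem_neighborFinset]; exact hadjl.symm),
        SimpleGraph.card_neighborFinset_eq_degree] at hc
      have := hdeg zl
      rw [hbV]
      omega
  set Fsig := (Finset.Icc 1 7).filter
    (fun x => base G w z1 c' Bf zl + x ∈ badVals) with hFsig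
  set Fdodge := (Finset.Icc 1 7).filter
    (fun x => (∑ z ∈ (Zs G w z1).erase zl, A0 z) + x = D) with hFdodge
  have hFsc : Fsig.card ≤ badVals.card := preimage_card _ _
  have hFdc : Fdodge.card ≤ 1 := addl_filter_card _ _
  have hcard : (((Finset.Icc 1 7).filter
      (fun x => (G.degree zl + 1) / 2 ≤ cnt1 G w z1 c' zl x
        + (if zl ∈ Ys G w z1 ∧ Bf zl = x then 1 else 0)))
      ∪ ((Zs G w z1).erase zl).image A0 ∪ Fsig ∪ Fdodge).card ≤ 6 := by
    have h1 := Finset.card_union_le (((Finset.Icc 1 7).filter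
      (fun x => (G.degree zl + 1) / 2 ≤ cnt1 G w z1 c' zl x
        + (if zl ∈ Ys G w z1 ∧ Bf zl = x then 1 else 0)))
      ∪ ((Zs G w z1).erase zl).image A0 ∪ Fsig) Fdodge
    have h2 := Finset.card_union_le (((Finset.Icc 1 7).filter
      (fun x => (G.degree zl + 1) / 2 ≤ cnt1 G w z1 c' zl x
        + (if zl ∈ Ys G w z1 ∧ Bf zl = x then 1 else 0)))
      ∪ ((Zs G w z1).erase zl).image A0) Fsig
    have h3 := Finset.card_union_le ((Finset.Icc 1 7).filter
      (fun x => (G.degree zl + 1) / 2 ≤ cnt1 G w z1 c' zl x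
        + (if zl ∈ Ys G w z1 ∧ Bf zl = x then 1 else 0)))
      (((Zs G w z1).erase zl).image A0)
    omega
  obtain ⟨x, hxI, hxF⟩ := exists_notin _ hcard
  simp only [Finset.mem_union, not_or] at hxF
  obtain ⟨⟨⟨hx1, hx2⟩, hx3⟩, hx4⟩ := hxF
  have hxsig : base G w z1 c' Bf zl + x ∉ badVals := by
    intro hmem
    exact hx3 (by rw [hFsig, Finset.mem_filter]; exact ⟨hxI, hmem⟩)
  refine ⟨x, hxI, hx2, ?_, ?_, ?_, ?_, ?_⟩
  · have : ¬ ((G.degree zl + 1) / 2 ≤ cnt1 G w z1 c' zl x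
        + (if zl ∈ Ys G w z1 ∧ Bf zl = x then 1 else 0)) := by
      intro hle
      exact hx1 (Finset.mem_filter.mpr ⟨hxI, hle⟩)
    unfold cap
    omega
  · intro he
    exact hx4 (by rw [hFdodge, Finset.mem_filter]; exact ⟨hxI, he⟩)
  · intro x' h1' h2' h3' h4' h5'
    intro he
    apply hxsig
    rw [hbV]
    apply Finset.mem_union_left
    apply Finset.mem_union_left
    rw [he]
    apply Finset.mem_image_of_mem
    rw [houtN, Finset.mem_filter]
    exact ⟨by rw [SimpleGraph.mem_neighborFinset]; exact h1', h2', h3', h4', h5'⟩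
  · intro y hy1 hy2 hadj'
    intro he
    apply hxsig
    rw [hbV]
    apply Finset.mem_union_left
    apply Finset.mem_union_right
    rw [he]
    apply Finset.mem_image_of_mem
    rw [hpyN, Finset.mem_filter]
    exact ⟨by rw [SimpleGraph.mem_neighborFinset]; exact hadj', hy1, hy2⟩
  · intro z' hz' hadj'
    intro he
    apply hxsig
    rw [hbV]
    apply Finset.mem_union_right
    rw [he]
    apply Finset.mem_image_of_mem
    rw [hcrossN, Finset.mem_filter]
    exact ⟨hz', hadj'⟩

end Choose

section ExistMain

variable (G : SimpleGraph V) [DecidableRel G.Adj] (w z1 : V) (c' : V → V → ℕ)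

lemma fsig_base (A Bf : V → ℕ) (v : V) :
    fsig G w z1 c' A Bf v = base G w z1 c' Bf v + (if v ∈ Zs G w z1 then A v else 0) := by
  unfold fsig base
  omega

lemma fsig_pureY (A Bf : V → ℕ) {v : V} (hv1 : v ∈ Ys G w z1) (hv2 : v ∉ Zs G w z1) :
    fsig G w z1 c' A Bf v = base G w z1 c' Bf v := by
  rw [fsig_base, if_neg hv2]
  omega

lemma q3_assemble (hadj : G.Adj w z1) (hec : EdgeColoring (Gm G w z1) 7 c')
    (hqm : QuasiMajority (Gm G w z1) c') (A Bf : V → ℕ)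
    (hAcap : ∀ z ∈ Zs G w z1, cnt1 G w z1 c' z (A z)
        + (if z ∈ Ys G w z1 ∧ Bf z = A z then 1 else 0) + 1 ≤ cap G z)
    (hBfcap : ∀ y ∈ Ys G w z1, cnt1 G w z1 c' y (Bf y) + 1 ≤ cap G y) :
    ∀ v, (v ∈ Zs G w z1 ∨ v ∈ Ys G w z1) → ∀ α,
      colorCount (Gm G w z1) c' v α
        + (if Str G w z1 v ∧ α = 1 then 1 else 0)
        + (if v ∈ Zs G w z1 ∧ A v = α then 1 else 0)
        + (if v ∈ Ys G w z1 ∧ Bf v = α then 1 else 0) ≤ cap G v := by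
  intro v hv α
  have hbase := cnt1_le_cap G w z1 c' hadj hec hqm hv α
  unfold cnt1 at hbase
  by_cases hZA : v ∈ Zs G w z1 ∧ A v = α
  · have h := hAcap v hZA.1
    unfold cnt1 at h
    rw [hZA.2] at h
    rw [if_pos hZA]
    by_cases hYB : v ∈ Ys G w z1 ∧ Bf v = α
    · rw [if_pos hYB] at h ⊢
      omega
    · rw [if_neg hYB] at h ⊢
      omega
  · rw [if_neg hZA]
    by_cases hYB : v ∈ Ys G w z1 ∧ Bf v = α
    · have h := hBfcap v hYB.1
      unfold cnt1 at h
      rw [hYB.2] at h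
      rw [if_pos hYB]
      omega
    · rw [if_neg hYB]
      omega

lemma exist (hadj : G.Adj w z1) (hnice : Nice G) (hdeg : ∀ v, G.degree v ≤ 4)
    (hec : EdgeColoring (Gm G w z1) 7 c') (hqm : QuasiMajority (Gm G w z1) c')
    (hbranch : (∃ t, G.Adj w t ∧ G.Adj z1 t) ∨ G.degree w ≤ 3 ∨
      (∀ u v, G.Adj w u → G.Adj w v → ¬ G.Adj u v)) :
    ∃ A Bf B, CS G w z1 c' A Bf B := by
  have hne : w ≠ z1 := G.ne_of_adj hadj
  obtain ⟨Bf, hBfr, hBfinj, hBfcap, hBfpure⟩ :=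
    phaseY G w z1 c' hadj hdeg hec (Ys G w z1) (Finset.Subset.refl _)
  have hBfout : ∀ y ∈ Ys G w z1, y ∉ Zs G w z1 → ∀ x, G.Adj y x → x ∉ Zs G w z1 →
      x ∉ Ys G w z1 → x ≠ w → x ≠ z1 → fixS G w z1 c' y + Bf y ≠ fixS G w z1 c' x := by
    intro y hy hyZ
    exact (hBfpure.1 y hy hyZ)
  have hBfcross : ∀ y ∈ Ys G w z1, ∀ y' ∈ Ys G w z1, y ∉ Zs G w z1 → y' ∉ Zs G w z1 →
      G.Adj y y' → fixS G w z1 c' y + Bf y ≠ fixS G w z1 c' y' + Bf y' := by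
    intro y hy y' hy' hyZ hy'Z
    exact hBfpure.2 y hy y' hy' hyZ hy'Z
  have hBfinj' : ∀ α, ((Ys G w z1).filter (fun y => Bf y = α)).card ≤ 1 :=
    filter_card_le_one hBfinj
  -- translation of pure-Y facts to base form
  have hbase_pure : ∀ y ∈ Ys G w z1, y ∉ Zs G w z1 →
      base G w z1 c' Bf y = fixS G w z1 c' y + Bf y := by
    intro y hy _
    unfold base
    rw [if_pos hy]
  by_cases hZe : Zs G w z1 = ∅
  · -- degree of w is 1
    have hdw1 : G.degree w = 1 := by
      have hnb : G.neighborFinset w = {z1} := by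
        rw [nbrw_eq G w z1 hadj, hZe]
        rfl
      rw [← SimpleGraph.card_neighborFinset_eq_degree, hnb, Finset.card_singleton]
    have hdz2 : 2 ≤ G.degree z1 := by
      have h1 : 1 ≤ G.degree z1 := by
        rw [← SimpleGraph.card_neighborFinset_eq_degree]
        exact Finset.card_pos.mpr ⟨w, by
          rw [SimpleGraph.mem_neighborFinset]; exact hadj.symm⟩
      rcases Nat.lt_or_ge (G.degree z1) 2 with h | h
      · exfalso
        exact hnice ⟨w, z1, hadj, hdw1, by omega⟩
      · exact h
    have hAinj' : ∀ α, ((Zs G w z1).filter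
        (fun z => (fun (_ : V) => (1 : ℕ)) z = α)).card ≤ 1 := by
      intro α
      rw [hZe]
      simp
    obtain ⟨B, hBI, hq1, hq2, hn2, hn3⟩ :=
      chooseB G w z1 c' hadj hdeg (fun _ => 1) Bf hAinj' hBfinj'
    refine ⟨fun _ => 1, Bf, B, ?_⟩
    refine ⟨?_, hBfr, hBI, hq1, hq2, ?_, ?_, hn2, hn3, ?_, ?_⟩
    · intro z hz
      simp [Finset.mem_Icc]
    · exact q3_assemble G w z1 c' hadj hec hqm _ Bf
        (by intro z hz; rw [hZe] at hz; exact absurd hz (Finset.notMem_empty z)) hBfcap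
    · -- n1
      rw [hZe, Finset.sum_empty]
      intro he
      have hYne : (Ys G w z1).Nonempty := by
        rw [← Finset.card_pos, Ys_card G w z1 hadj]
        omega
      obtain ⟨y0, hy0⟩ := hYne
      have h1 : Bf y0 ≤ ∑ y ∈ Ys G w z1, Bf y :=
        Finset.single_le_sum (fun i _ => Nat.zero_le _) hy0
      have h2 := hBfr y0 hy0
      rw [Finset.mem_Icc] at h2
      omega
    · -- n4
      intro v hv v' hv' hvv'
      have hvZ : v ∉ Zs G w z1 := by rw [hZe]; exact Finset.notMem_empty v
      have hv'Z : v' ∉ Zs G w z1 := by rw [hZe]; exact Finset.notMem_empty v'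
      have hvY : v ∈ Ys G w z1 := by
        rcases hv with h | h
        · exact absurd h hvZ
        · exact h
      have hv'Y : v' ∈ Ys G w z1 := by
        rcases hv' with h | h
        · exact absurd h hv'Z
        · exact h
      rw [fsig_pureY G w z1 c' _ Bf hvY hvZ, fsig_pureY G w z1 c' _ Bf hv'Y hv'Z,
        hbase_pure v hvY hvZ, hbase_pure v' hv'Y hv'Z]
      exact hBfcross v hvY v' hv'Y hvZ hv'Z hvv'
    · -- n5
      intro v hv x hx h1 h2 h3 h4
      have hvZ : v ∉ Zs G w z1 := by rw [hZe]; exact Finset.notMem_empty v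
      have hvY : v ∈ Ys G w z1 := by
        rcases hv with h | h
        · exact absurd h hvZ
        · exact h
      rw [fsig_pureY G w z1 c' _ Bf hvY hvZ, hbase_pure v hvY hvZ]
      exact hBfout v hvY hvZ x hx h1 h2 h3 h4
  · -- Zs nonempty
    have hZne : (Zs G w z1).Nonempty := Finset.nonempty_iff_ne_empty.mpr hZe
    by_cases hEASY : (∃ t, G.Adj w t ∧ G.Adj z1 t) ∨ G.degree w ≤ 3
    · -- pick the last z
      obtain ⟨zl, hzl, hsave⟩ : ∃ zl, zl ∈ Zs G w z1 ∧
          (G.Adj z1 zl ∨ ((Zs G w z1).erase zl).card ≤ 1) := by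
        rcases hEASY with ⟨t, ht1, ht2⟩ | hS
        · refine ⟨t, (mem_Zs G w z1).mpr ⟨fun he => G.loopless.irrefl z1 (he ▸ ht2), ht1⟩, Or.inl ht2⟩
        · obtain ⟨zl, hzl⟩ := hZne
          refine ⟨zl, hzl, Or.inr ?_⟩
          have h10 := Finset.card_erase_of_mem hzl
          have h11 := Zs_card G w z1 hadj
          omega
      obtain ⟨A0, hA0r, hA0inj, hA0cap, hA0out, hA0py, hA0cross⟩ :=
        phaseZ G w z1 c' Bf hadj hdeg hec ((Zs G w z1).erase zl) (Finset.erase_subset _ _)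
      obtain ⟨x, hxI, hximg, hxcap, hxdodge, hxout, hxpy, hxcross⟩ :=
        chooseLast G w z1 c' hadj hdeg hec Bf hzl A0 (∑ y ∈ Ys G w z1, Bf y) hsave
      set A := Function.update A0 zl x with hA
      have hAzl : A zl = x := Function.update_self zl x A0
      have hAother : ∀ z ∈ (Zs G w z1).erase zl, A z = A0 z := by
        intro z hz
        exact Function.update_of_ne (Finset.ne_of_mem_erase hz) x A0
      have hsum : ∑ z ∈ Zs G w z1, A z = (∑ z ∈ (Zs G w z1).erase zl, A0 z) + x := by
        have he : ∑ z ∈ (Zs G w z1).erase zl, A z = ∑ z ∈ (Zs G w z1).erase zl, A0 z :=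
          Finset.sum_congr rfl (fun z hz => hAother z hz)
        conv_lhs => rw [← Finset.insert_erase hzl]
        rw [Finset.sum_insert (Finset.notMem_erase _ _), hAzl, he]
        omega
      have hmemcase : ∀ z ∈ Zs G w z1, z = zl ∨ z ∈ (Zs G w z1).erase zl := by
        intro z hz
        by_cases h : z = zl
        · exact Or.inl h
        · exact Or.inr (Finset.mem_erase.mpr ⟨h, hz⟩)
      have hAr : ∀ z ∈ Zs G w z1, A z ∈ Finset.Icc 1 7 := by
        intro z hz
        rcases hmemcase z hz with h | h
        · rw [h, hAzl]; exact hxI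
        · rw [hAother z h]; exact hA0r z h
      have hAinj : ∀ z ∈ Zs G w z1, ∀ z' ∈ Zs G w z1, z ≠ z' → A z ≠ A z' := by
        intro z hz z' hz' hne'
        rcases hmemcase z hz with h | h <;> rcases hmemcase z' hz' with h' | h'
        · exact absurd (h.trans h'.symm) hne'
        · rw [h, hAzl, hAother z' h']
          intro he
          exact hximg (Finset.mem_image.mpr ⟨z', h', he.symm⟩)
        · rw [h', hAzl, hAother z h]
          intro he
          exact hximg (Finset.mem_image.mpr ⟨z, h, he⟩)
        · rw [hAother z h, hAother z' h']
          exact hA0inj z h z' h' hne'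
      have hAinj' : ∀ α, ((Zs G w z1).filter (fun z => A z = α)).card ≤ 1 :=
        filter_card_le_one hAinj
      have hAcap : ∀ z ∈ Zs G w z1, cnt1 G w z1 c' z (A z)
          + (if z ∈ Ys G w z1 ∧ Bf z = A z then 1 else 0) + 1 ≤ cap G z := by
        intro z hz
        rcases hmemcase z hz with h | h
        · rw [h, hAzl]
          exact hxcap
        · rw [hAother z h]
          exact hA0cap z h
      have hn1 : (∑ z ∈ Zs G w z1, A z) ≠ ∑ y ∈ Ys G w z1, Bf y := by
        rw [hsum]
        exact hxdodge
      obtain ⟨B, hBI, hq1, hq2, hn2, hn3⟩ :=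
        chooseB G w z1 c' hadj hdeg A Bf hAinj' hBfinj'
      refine ⟨A, Bf, B, ⟨hAr, hBfr, hBI, hq1, hq2, ?_, hn1, hn2, hn3, ?_, ?_⟩⟩
      · exact q3_assemble G w z1 c' hadj hec hqm A Bf hAcap hBfcap
      · -- n4
        intro v hv v' hv' hvv'
        by_cases hvZ : v ∈ Zs G w z1
        · by_cases hv'Z : v' ∈ Zs G w z1
          · rw [fsig_base, fsig_base, if_pos hvZ, if_pos hv'Z]
            rcases hmemcase v hvZ with h | h <;> rcases hmemcase v' hv'Z with h' | h'
            · exfalso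
              rw [h, h'] at hvv'
              exact G.loopless.irrefl _ hvv'
            · rw [h, hAzl, hAother v' h']
              exact hxcross v' h' (h ▸ hvv')
            · rw [h', hAzl, hAother v h]
              exact (hxcross v h (h' ▸ hvv'.symm)).symm
            · rw [hAother v h, hAother v' h']
              exact hA0cross v h v' h' hvv'
          · have hv'Y : v' ∈ Ys G w z1 := by
              rcases hv' with h | h
              · exact absurd h hv'Z
              · exact h
            rw [fsig_base, if_pos hvZ, fsig_pureY G w z1 c' A Bf hv'Y hv'Z]
            rcases hmemcase v hvZ with h | h
            · rw [h, hAzl]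
              exact hxpy v' hv'Y hv'Z (h ▸ hvv')
            · rw [hAother v h]
              exact hA0py v h v' hv'Y hv'Z hvv'
        · have hvY : v ∈ Ys G w z1 := by
            rcases hv with h | h
            · exact absurd h hvZ
            · exact h
          by_cases hv'Z : v' ∈ Zs G w z1
          · rw [fsig_base, fsig_base, if_neg hvZ, if_pos hv'Z]
            rcases hmemcase v' hv'Z with h' | h'
            · rw [h', hAzl]
              have := hxpy v hvY hvZ (h' ▸ hvv'.symm)
              omega
            · rw [hAother v' h']
              have := hA0py v' h' v hvY hvZ hvv'.symm
              omega
          · have hv'Y : v' ∈ Ys G w z1 := by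
              rcases hv' with h | h
              · exact absurd h hv'Z
              · exact h
            rw [fsig_pureY G w z1 c' A Bf hvY hvZ, fsig_pureY G w z1 c' A Bf hv'Y hv'Z,
              hbase_pure v hvY hvZ, hbase_pure v' hv'Y hv'Z]
            exact hBfcross v hvY v' hv'Y hvZ hv'Z hvv'
      · -- n5
        intro v hv x' hx' h1 h2 h3 h4
        by_cases hvZ : v ∈ Zs G w z1
        · rw [fsig_base, if_pos hvZ]
          rcases hmemcase v hvZ with h | h
          · rw [h, hAzl]
            exact hxout x' (h ▸ hx') h1 h2 h3 h4
          · rw [hAother v h]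
            exact hA0out v h x' hx' h1 h2 h3 h4
        · have hvY : v ∈ Ys G w z1 := by
            rcases hv with h | h
            · exact absurd h hvZ
            · exact h
          rw [fsig_pureY G w z1 c' A Bf hvY hvZ, hbase_pure v hvY hvZ]
          exact hBfout v hvY hvZ x' hx' h1 h2 h3 h4
    · -- fallback branch
      push_neg at hEASY
      obtain ⟨hT, hS⟩ := hEASY
      have htf : ∀ u v, G.Adj w u → G.Adj w v → ¬ G.Adj u v := by
        rcases hbranch with h | h | h
        · exact absurd h (by push_neg; exact fun t ht => hT t ht)
        · omega
        · exact h
      have hdw4 : G.degree w = 4 := le_antisymm (hdeg w) (by omega)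
      have hZcard : (Zs G w z1).card = 3 := by
        rw [Zs_card G w z1 hadj, hdw4]
      have hnotY : ∀ z ∈ Zs G w z1, z ∉ Ys G w z1 := by
        intro z hz hzY
        exact htf z z1 ((mem_Zs G w z1).mp hz).2 hadj (((mem_Ys G w z1).mp hzY).2.symm)
      have hnoZZ : ∀ z ∈ Zs G w z1, ∀ z' ∈ Zs G w z1, ¬ G.Adj z z' := by
        intro z hz z' hz'
        exact htf z z' ((mem_Zs G w z1).mp hz).2 ((mem_Zs G w z1).mp hz').2
      -- uniform forbidden set for the three z's
      set F : V → Finset ℕ := fun z =>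
        ((Finset.Icc 1 7).filter (fun x => (G.degree z + 1) / 2 ≤ cnt1 G w z1 c' z x))
        ∪ ((Finset.Icc 1 7).filter (fun x => base G w z1 c' Bf z + x ∈
            (((G.neighborFinset z).filter (fun u => u ∉ Zs G w z1 ∧ u ∉ Ys G w z1 ∧
              u ≠ w ∧ u ≠ z1)).image (fixS G w z1 c'))
            ∪ (((G.neighborFinset z).filter (fun y => y ∈ Ys G w z1 ∧ y ∉ Zs G w z1)).image
              (base G w z1 c' Bf)))) with hF
      have hFcard : ∀ z ∈ Zs G w z1, (F z).card ≤ 4 := by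
        intro z hz
        have hzadj : G.Adj w z := ((mem_Zs G w z1).mp hz).2
        have hzdeg : 1 ≤ G.degree z := by
          rw [← SimpleGraph.card_neighborFinset_eq_degree]
          exact Finset.card_pos.mpr ⟨w, by
            rw [SimpleGraph.mem_neighborFinset]; exact hzadj.symm⟩
        have h1 : ((Finset.Icc 1 7).filter
            (fun x => (G.degree z + 1) / 2 ≤ cnt1 G w z1 c' z x)).card ≤ 1 := by
          apply capbad_card _ _ hzdeg
          have := cnt1_sum G w z1 c' hadj hec (Or.inl hz)
          omega
        have hsub2 : ((G.neighborFinset z).filter (fun u => u ∉ Zs G w z1 ∧ u ∉ Ys G w z1 ∧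
              u ≠ w ∧ u ≠ z1))
            ∪ ((G.neighborFinset z).filter (fun y => y ∈ Ys G w z1 ∧ y ∉ Zs G w z1))
            ⊆ (G.neighborFinset z).erase w := by
          intro x hx
          rcases Finset.mem_union.mp hx with h | h
          · rw [Finset.mem_filter] at h
            exact Finset.mem_erase.mpr ⟨h.2.2.2.1, h.1⟩
          · rw [Finset.mem_filter] at h
            exact Finset.mem_erase.mpr ⟨((mem_Ys G w z1).mp h.2.1).1, h.1⟩
        have hdisj : Disjoint ((G.neighborFinset z).filter (fun u => u ∉ Zs G w z1 ∧
              u ∉ Ys G w z1 ∧ u ≠ w ∧ u ≠ z1))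
            ((G.neighborFinset z).filter (fun y => y ∈ Ys G w z1 ∧ y ∉ Zs G w z1)) := by
          rw [Finset.disjoint_left]
          intro x hx1 hx2
          rw [Finset.mem_filter] at hx1 hx2
          exact hx1.2.2.1 hx2.2.1
        have hc := Finset.card_le_card hsub2
        rw [Finset.card_union_of_disjoint hdisj,
          Finset.card_erase_of_mem (by
            rw [SimpleGraph.mem_neighborFinset]; exact hzadj.symm),
          SimpleGraph.card_neighborFinset_eq_degree] at hc
        have h2 : ((Finset.Icc 1 7).filter (fun x => base G w z1 c' Bf z + x ∈
            (((G.neighborFinset z).filter (fun u => u ∉ Zs G w z1 ∧ u ∉ Ys G w z1 ∧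
              u ≠ w ∧ u ≠ z1)).image (fixS G w z1 c'))
            ∪ (((G.neighborFinset z).filter (fun y => y ∈ Ys G w z1 ∧ y ∉ Zs G w z1)).image
              (base G w z1 c' Bf)))).card ≤ 3 := by
          apply le_trans (preimage_card _ _)
          have h3 := Finset.card_union_le (((G.neighborFinset z).filter
            (fun u => u ∉ Zs G w z1 ∧ u ∉ Ys G w z1 ∧ u ≠ w ∧ u ≠ z1)).image
              (fixS G w z1 c'))
            (((G.neighborFinset z).filter (fun y => y ∈ Ys G w z1 ∧ y ∉ Zs G w z1)).image
              (base G w z1 c' Bf))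
          have h4 := Finset.card_image_le (s := (G.neighborFinset z).filter
            (fun u => u ∉ Zs G w z1 ∧ u ∉ Ys G w z1 ∧ u ≠ w ∧ u ≠ z1))
            (f := fixS G w z1 c')
          have h5 := Finset.card_image_le (s := (G.neighborFinset z).filter
            (fun y => y ∈ Ys G w z1 ∧ y ∉ Zs G w z1)) (f := base G w z1 c' Bf)
          have := hdeg z
          omega
        simp only [hF]
        have h6 := Finset.card_union_le ((Finset.Icc 1 7).filter
          (fun x => (G.degree z + 1) / 2 ≤ cnt1 G w z1 c' z x))
          ((Finset.Icc 1 7).filter (fun x => base G w z1 c' Bf z + x ∈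
            (((G.neighborFinset z).filter (fun u => u ∉ Zs G w z1 ∧ u ∉ Ys G w z1 ∧
              u ≠ w ∧ u ≠ z1)).image (fixS G w z1 c'))
            ∪ (((G.neighborFinset z).filter (fun y => y ∈ Ys G w z1 ∧ y ∉ Zs G w z1)).image
              (base G w z1 c' Bf))))
        omega
      have hFcons : ∀ z ∈ Zs G w z1, ∀ az : ℕ, az ∈ Finset.Icc 1 7 → az ∉ F z →
          (cnt1 G w z1 c' z az + 1 ≤ cap G z) ∧
          (∀ x', G.Adj z x' → x' ∉ Zs G w z1 → x' ∉ Ys G w z1 → x' ≠ w → x' ≠ z1 →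
            base G w z1 c' Bf z + az ≠ fixS G w z1 c' x') ∧
          (∀ y, y ∈ Ys G w z1 → y ∉ Zs G w z1 → G.Adj z y →
            base G w z1 c' Bf z + az ≠ base G w z1 c' Bf y) := by
        intro z hz az hazI hazF
        simp only [hF, Finset.mem_union, not_or] at hazF
        refine ⟨?_, ?_, ?_⟩
        · have : ¬ ((G.degree z + 1) / 2 ≤ cnt1 G w z1 c' z az) := by
            intro hle
            exact hazF.1 (Finset.mem_filter.mpr ⟨hazI, hle⟩)
          unfold cap
          omega
        · intro x' h1' h2' h3' h4' h5' he
          apply hazF.2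
          rw [Finset.mem_filter]
          refine ⟨hazI, ?_⟩
          left
          rw [he]
          apply Finset.mem_image_of_mem
          rw [Finset.mem_filter]
          exact ⟨by rw [SimpleGraph.mem_neighborFinset]; exact h1', h2', h3', h4', h5'⟩
        · intro y hy1 hy2 hadj' he
          apply hazF.2
          rw [Finset.mem_filter]
          refine ⟨hazI, ?_⟩
          right
          rw [he]
          apply Finset.mem_image_of_mem
          rw [Finset.mem_filter]
          exact ⟨by rw [SimpleGraph.mem_neighborFinset]; exact hadj', hy1, hy2⟩
      -- z1-side forbidden set for b
      set Fbb := ((Finset.Icc 1 7).filter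
          (fun x => (∑ y ∈ Ys G w z1, Bf y) + x ∈ (Ys G w z1).image (base G w z1 c' Bf)))
        ∪ (if 2 ≤ cap G z1 then (∅ : Finset ℕ) else (Ys G w z1).image Bf) with hFbb
      have hFbbcard : Fbb.card ≤ 3 := by
        have h1 : ((Finset.Icc 1 7).filter
            (fun x => (∑ y ∈ Ys G w z1, Bf y) + x ∈ (Ys G w z1).image
              (base G w z1 c' Bf))).card ≤ (Ys G w z1).card := by
          apply le_trans (preimage_card _ _)
          exact Finset.card_image_le
        have hYc := Ys_card G w z1 hadj
        have h2 := Finset.card_union_le ((Finset.Icc 1 7).filter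
          (fun x => (∑ y ∈ Ys G w z1, Bf y) + x ∈ (Ys G w z1).image (base G w z1 c' Bf)))
          (if 2 ≤ cap G z1 then (∅ : Finset ℕ) else (Ys G w z1).image Bf)
        by_cases hc : 2 ≤ cap G z1
        · rw [hFbb]
          rw [if_pos hc] at h2 ⊢
          have := hdeg z1
          simp only [Finset.card_empty] at h2
          omega
        · have hdz : G.degree z1 ≤ 2 := by
            unfold cap at hc
            omega
          have h3 : ((Ys G w z1).image Bf).card ≤ (Ys G w z1).card := Finset.card_image_le
          rw [hFbb]
          rw [if_neg hc] at h2 ⊢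
          omega
      obtain ⟨za, zb, zc, hab, hac, hbc, hZeq⟩ := Finset.card_eq_three.mp hZcard
      have hza : za ∈ Zs G w z1 := by rw [hZeq]; simp
      have hzb : zb ∈ Zs G w z1 := by rw [hZeq]; simp
      have hzc : zc ∈ Zs G w z1 := by rw [hZeq]; simp
      obtain ⟨a2, a3, a4, b, ha2I, ha3I, ha4I, hbI, ha2F, ha3F, ha4F, hdodge,
        hT2, hT3, hT4, hbFb, hwcap⟩ :=
        fallback (F za) (F zb) (F zc) (hFcard za hza) (hFcard zb hzb) (hFcard zc hzc)
          Fbb hFbbcard (base G w z1 c' Bf za) (base G w z1 c' Bf zb)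
          (base G w z1 c' Bf zc) (∑ y ∈ Ys G w z1, Bf y)
      set A : V → ℕ := fun v => if v = za then a2 else if v = zb then a3 else
        if v = zc then a4 else 1 with hAdef
      have hAa : A za = a2 := by simp [hAdef]
      have hAb : A zb = a3 := by
        rw [hAdef]
        simp [Ne.symm hab]
      have hAc : A zc = a4 := by
        rw [hAdef]
        simp [Ne.symm hac, Ne.symm hbc]
      have hcase : ∀ z ∈ Zs G w z1, z = za ∨ z = zb ∨ z = zc := by
        intro z hz
        rw [hZeq] at hz
        simpa using hz
      have hnma : za ∉ (insert zb {zc} : Finset V) := by simp [hab, hac]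
      have hnmb : zb ∉ ({zc} : Finset V) := by simp [hbc]
      have hsumA : ∑ z ∈ Zs G w z1, A z = a2 + a3 + a4 := by
        rw [hZeq, Finset.sum_insert hnma, Finset.sum_insert hnmb, Finset.sum_singleton,
          hAa, hAb, hAc]
        omega
      have hcap1z : 1 ≤ cap G z1 := cap_pos G z1 w hadj.symm
      refine ⟨A, Bf, b, ⟨?_, hBfr, hbI, ?_, ?_, ?_, ?_, ?_, ?_, ?_, ?_⟩⟩
      · -- r1
        intro z hz
        rcases hcase z hz with h | h | h <;> subst h
        · rw [hAa]; exact ha2I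
        · rw [hAb]; exact ha3I
        · rw [hAc]; exact ha4I
      · -- q1
        intro α
        have hcnt : ((Zs G w z1).filter (fun z => A z = α)).card
            = (if A za = α then 1 else 0) + ((if A zb = α then 1 else 0)
              + (if A zc = α then 1 else 0)) := by
          rw [hZeq, Finset.card_filter, Finset.sum_insert hnma, Finset.sum_insert hnmb,
            Finset.sum_singleton]
        rw [hcnt, hAa, hAb, hAc]
        have := hwcap α
        unfold cap
        rw [hdw4]
        omega
      · -- q2
        intro α
        by_cases hB : b = α
        · by_cases hc : 2 ≤ cap G z1
          · have := hBfinj' α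
            split_ifs <;> omega
          · have hemp : ((Ys G w z1).filter (fun y => Bf y = α)).card = 0 := by
              rw [Finset.card_eq_zero, Finset.filter_eq_empty_iff]
              intro y hy he
              apply hbFb
              rw [hFbb, Finset.mem_union]
              right
              rw [if_neg hc]
              exact Finset.mem_image.mpr ⟨y, hy, by rw [he, hB]⟩
            rw [hemp, if_pos hB]
            omega
        · rw [if_neg hB]
          have := hBfinj' α
          omega
      · -- q3
        apply q3_assemble G w z1 c' hadj hec hqm A Bf
        · intro z hz
          have hzY : ¬ (z ∈ Ys G w z1 ∧ Bf z = A z) := by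
            rintro ⟨h, _⟩
            exact hnotY z hz h
          rw [if_neg hzY]
          rcases hcase z hz with h | h | h <;> subst h
          · rw [hAa]
            exact (hFcons _ hza a2 ha2I ha2F).1
          · rw [hAb]
            exact (hFcons _ hzb a3 ha3I ha3F).1
          · rw [hAc]
            exact (hFcons _ hzc a4 ha4I ha4F).1
        · exact hBfcap
      · -- n1
        rw [hsumA]
        exact hdodge
      · -- n2
        intro z hz
        rw [hsumA, fsig_base, if_pos hz]
        rcases hcase z hz with h | h | h <;> subst h
        · rw [hAa]
          intro he
          exact hT2 (by omega)
        · rw [hAb]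
          intro he
          exact hT3 (by omega)
        · rw [hAc]
          intro he
          exact hT4 (by omega)
      · -- n3
        intro y hy
        have hyZ : y ∉ Zs G w z1 := fun h => hnotY y h hy
        rw [fsig_pureY G w z1 c' A Bf hy hyZ]
        intro he
        apply hbFb
        rw [hFbb, Finset.mem_union]
        left
        rw [Finset.mem_filter]
        exact ⟨hbI, he ▸ Finset.mem_image_of_mem _ hy⟩
      · -- n4
        intro v hv v' hv' hvv'
        by_cases hvZ : v ∈ Zs G w z1
        · by_cases hv'Z : v' ∈ Zs G w z1
          · exact absurd hvv' (hnoZZ v hvZ v' hv'Z)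
          · have hv'Y : v' ∈ Ys G w z1 := by
              rcases hv' with h | h
              · exact absurd h hv'Z
              · exact h
            rw [fsig_base, if_pos hvZ, fsig_pureY G w z1 c' A Bf hv'Y hv'Z]
            rcases hcase v hvZ with h | h | h <;> subst h
            · rw [hAa]
              exact (hFcons _ hza a2 ha2I ha2F).2.2 v' hv'Y hv'Z hvv'
            · rw [hAb]
              exact (hFcons _ hzb a3 ha3I ha3F).2.2 v' hv'Y hv'Z hvv'
            · rw [hAc]
              exact (hFcons _ hzc a4 ha4I ha4F).2.2 v' hv'Y hv'Z hvv'
        · have hvY : v ∈ Ys G w z1 := by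
            rcases hv with h | h
            · exact absurd h hvZ
            · exact h
          by_cases hv'Z : v' ∈ Zs G w z1
          · rw [fsig_base, if_neg hvZ, fsig_base, if_pos hv'Z]
            have hbase_v : base G w z1 c' Bf v + 0 = base G w z1 c' Bf v := by omega
            rcases hcase v' hv'Z with h | h | h <;> subst h
            · rw [hAa]
              have := (hFcons _ hza a2 ha2I ha2F).2.2 v hvY hvZ hvv'.symm
              omega
            · rw [hAb]
              have := (hFcons _ hzb a3 ha3I ha3F).2.2 v hvY hvZ hvv'.symm
              omega
            · rw [hAc]
              have := (hFcons _ hzc a4 ha4I ha4F).2.2 v hvY hvZ hvv'.symm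
              omega
          · have hv'Y : v' ∈ Ys G w z1 := by
              rcases hv' with h | h
              · exact absurd h hv'Z
              · exact h
            rw [fsig_pureY G w z1 c' A Bf hvY hvZ, fsig_pureY G w z1 c' A Bf hv'Y hv'Z,
              hbase_pure v hvY hvZ, hbase_pure v' hv'Y hv'Z]
            exact hBfcross v hvY v' hv'Y hvZ hv'Z hvv'
      · -- n5
        intro v hv x' hx' h1 h2 h3 h4
        by_cases hvZ : v ∈ Zs G w z1
        · rw [fsig_base, if_pos hvZ]
          rcases hcase v hvZ with h | h | h <;> subst h
          · rw [hAa]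
            exact (hFcons _ hza a2 ha2I ha2F).2.1 x' hx' h1 h2 h3 h4
          · rw [hAb]
            exact (hFcons _ hzb a3 ha3I ha3F).2.1 x' hx' h1 h2 h3 h4
          · rw [hAc]
            exact (hFcons _ hzc a4 ha4I ha4F).2.1 x' hx' h1 h2 h3 h4
        · have hvY : v ∈ Ys G w z1 := by
            rcases hv with h | h
            · exact absurd h hvZ
            · exact h
          rw [fsig_pureY G w z1 c' A Bf hvY hvZ, hbase_pure v hvY hvZ]
          exact hBfout v hvY hvZ x' hx' h1 h2 h3 h4

end ExistMain

section Shell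

lemma no_edges (G : SimpleGraph V) [DecidableRel G.Adj] (h : ∀ u v, ¬ G.Adj u v) :
    ∃ c : V → V → ℕ, EdgeColoring G 7 c ∧ QuasiMajority G c ∧ NSD G c := by
  refine ⟨fun _ _ => 1, ⟨fun _ _ => rfl, fun u v huv => absurd huv (h u v)⟩, ?_,
    fun u v huv => absurd huv (h u v)⟩
  intro v α
  have hnb : G.neighborFinset v = ∅ := by
    rw [Finset.eq_empty_iff_forall_notMem]
    intro x hx
    rw [SimpleGraph.mem_neighborFinset] at hx
    exact h v x hx
  unfold colorCount
  rw [hnb]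
  simp

lemma main_aux : ∀ n : ℕ, ∀ (G : SimpleGraph V) (inst : DecidableRel G.Adj),
    Nice G → (∀ v, G.degree v ≤ 4) → G.edgeFinset.card ≤ n →
    ∃ c : V → V → ℕ, EdgeColoring G 7 c ∧ QuasiMajority G c ∧ NSD G c := by
  intro n
  induction n with
  | zero =>
    intro G inst hnice hdeg hcard
    apply no_edges
    intro u v huv
    have hm : s(u, v) ∈ G.edgeFinset := by
      rw [SimpleGraph.mem_edgeFinset, SimpleGraph.mem_edgeSet]
      exact huv
    have : G.edgeFinset.card = 0 := le_antisymm hcard (Nat.zero_le _)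
    rw [Finset.card_eq_zero] at this
    rw [this] at hm
    exact absurd hm (Finset.notMem_empty _)
  | succ n ih =>
    intro G inst hnice hdeg hcard
    by_cases hE : G.edgeFinset = ∅
    · apply no_edges
      intro u v huv
      have hm : s(u, v) ∈ G.edgeFinset := by
        rw [SimpleGraph.mem_edgeFinset, SimpleGraph.mem_edgeSet]
        exact huv
      rw [hE] at hm
      exact absurd hm (Finset.notMem_empty _)
    · have hex : ∃ a b : V, G.Adj a b := by
        obtain ⟨e, he⟩ := Finset.nonempty_iff_ne_empty.mpr hE
        induction e using Sym2.ind with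
        | _ a b =>
          rw [SimpleGraph.mem_edgeFinset, SimpleGraph.mem_edgeSet] at he
          exact ⟨a, b, he⟩
      obtain ⟨w, z1, hadj, hbranch⟩ : ∃ w z1 : V, G.Adj w z1 ∧
          ((∃ t, G.Adj w t ∧ G.Adj z1 t) ∨ G.degree w ≤ 3 ∨
            (∀ u v, G.Adj w u → G.Adj w v → ¬ G.Adj u v)) := by
        obtain ⟨a, b, hab⟩ := hex
        by_cases htri : ∃ x y t : V, G.Adj x y ∧ G.Adj x t ∧ G.Adj y t
        · obtain ⟨x, y, t, h1, h2, h3⟩ := htri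
          exact ⟨x, y, h1, Or.inl ⟨t, h2, h3⟩⟩
        · push_neg at htri
          by_cases hda : G.degree a ≤ 3
          · exact ⟨a, b, hab, Or.inr (Or.inl hda)⟩
          by_cases hdb : G.degree b ≤ 3
          · exact ⟨b, a, hab.symm, Or.inr (Or.inl hdb)⟩
          · refine ⟨a, b, hab, Or.inr (Or.inr ?_)⟩
            intro u v hu hv
            exact htri a u v hu hv
      have hniceGm := Gm_nice G w z1
      have hdegGm : ∀ v, (Gm G w z1).degree v ≤ 4 :=
        fun v => le_trans (Gm_degree_le G w z1 v) (hdeg v)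
      have hcardGm : (Gm G w z1).edgeFinset.card ≤ n := by
        have := Gm_edge_lt G w z1 hadj
        omega
      obtain ⟨c', hec, hqm, hnsd⟩ := ih (Gm G w z1) inferInstance hniceGm hdegGm hcardGm
      obtain ⟨A, Bf, B, cs⟩ := exist G w z1 c' hadj hnice hdeg hec hqm hbranch
      obtain ⟨h1, h2, h3⟩ := verify G w z1 c' A Bf B hadj hnice hdeg hec hqm hnsd cs
      exact ⟨ext G w z1 c' A Bf B, h1, h2, h3⟩

end Shell

end QMNSD

set_option maxHeartbeats 1000000 in
theorem qmnsd_seven_max_degree_four (G : SimpleGraph V) [DecidableRel G.Adj]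
    (hnice : Nice G) (hdeg : G.maxDegree ≤ 4) :
    ∃ c : V → V → ℕ, EdgeColoring G 7 c ∧ QuasiMajority G c ∧ NSD G c := by
  have hd : ∀ v, G.degree v ≤ 4 := fun v => le_trans (G.degree_le_maxDegree v) hdeg
  exact QMNSD.main_aux G.edgeFinset.card G inferInstance hnice hd (le_refl _)
end

section
/- For a complete graph K_n with n ≥ 3: the majority NSD index equals 3 if n is odd, equals 4 if n is even and n ≥ 6, and equals 5 if n = 4. -/
open Finset

variable {V : Type*} [Fintype V] [DecidableEq V]

section Framework

/-- sum of colors at `v` among indices `< n`. -/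
def csum (n : ℕ) (c : ℕ → ℕ → ℕ) (v : ℕ) : ℕ :=
  ∑ u ∈ Finset.range n, if u = v then 0 else c v u

/-- number of `u < n`, `u ≠ v` with color `α`. -/
def ccnt (n : ℕ) (c : ℕ → ℕ → ℕ) (v α : ℕ) : ℕ :=
  ∑ u ∈ Finset.range n, if u ≠ v ∧ c v u = α then 1 else 0

lemma neighborFinset_top {n : ℕ} (v : Fin n) :
    (⊤ : SimpleGraph (Fin n)).neighborFinset v = Finset.univ.erase v := by
  ext u; simp [SimpleGraph.mem_neighborFinset, eq_comm, ne_comm]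

lemma degree_top {n : ℕ} (v : Fin n) : (⊤ : SimpleGraph (Fin n)).degree v = n - 1 := by
  rw [SimpleGraph.degree, neighborFinset_top]
  simp [Finset.card_erase_of_mem]

lemma sigmaSum_top {n : ℕ} (c : ℕ → ℕ → ℕ) (v : Fin n) :
    sigmaSum (⊤ : SimpleGraph (Fin n)) (fun i j => c i.val j.val) v = csum n c v.val := by
  rw [sigmaSum, neighborFinset_top]
  rw [show (∑ u ∈ Finset.univ.erase v, c v.val u.val)
      = ∑ u ∈ (Finset.univ : Finset (Fin n)).erase v,
          (if u.val = v.val then 0 else c v.val u.val) from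
    Finset.sum_congr rfl (fun u hu => by
      rw [if_neg]
      exact fun h => (Finset.mem_erase.mp hu).1 (Fin.ext h))]
  rw [Finset.sum_erase _ (by simp)]
  exact Fin.sum_univ_eq_sum_range (fun i => if i = v.val then 0 else c v.val i) n

lemma colorCount_top {n : ℕ} (c : ℕ → ℕ → ℕ) (v : Fin n) (α : ℕ) :
    colorCount (⊤ : SimpleGraph (Fin n)) (fun i j => c i.val j.val) v α = ccnt n c v.val α := by
  rw [colorCount, neighborFinset_top, Finset.card_filter]
  rw [show (∑ u ∈ Finset.univ.erase v, if c v.val u.val = α then 1 else 0)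
      = ∑ u ∈ (Finset.univ : Finset (Fin n)).erase v,
          (if u.val ≠ v.val ∧ c v.val u.val = α then 1 else 0) from
    Finset.sum_congr rfl (fun u hu => by
      have h1 : u.val ≠ v.val := fun h => (Finset.mem_erase.mp hu).1 (Fin.ext h)
      by_cases h2 : c v.val u.val = α <;> simp [h1, h2])]
  rw [Finset.sum_erase _ (by simp)]
  exact Fin.sum_univ_eq_sum_range (fun i => if i ≠ v.val ∧ c v.val i = α then 1 else 0) n

/-- packaging: an ℕ-level coloring with the right properties gives membership. -/
lemma mem_of_nat (n k : ℕ) (c : ℕ → ℕ → ℕ)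
    (hsym : ∀ i j, c i j = c j i)
    (hcol : ∀ i j, i < n → j < n → i ≠ j → 1 ≤ c i j ∧ c i j ≤ k)
    (hmaj : ∀ v α, v < n → 2 * ccnt n c v α ≤ n - 1)
    (hnsd : ∀ v w, v < n → w < n → v ≠ w → csum n c v ≠ csum n c w) :
    ∃ cF : Fin n → Fin n → ℕ,
      EdgeColoring (⊤ : SimpleGraph (Fin n)) k cF ∧
      Majority (⊤ : SimpleGraph (Fin n)) cF ∧
      NSD (⊤ : SimpleGraph (Fin n)) cF := by
  refine ⟨fun i j => c i.val j.val, ⟨fun u v => hsym _ _, fun u v huv => ?_⟩, ?_, ?_⟩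
  · exact hcol u.val v.val u.isLt v.isLt (fun h => (SimpleGraph.top_adj u v).mp huv (Fin.ext h))
  · intro v α
    rw [colorCount_top, degree_top]
    exact hmaj v.val α v.isLt
  · intro u v huv
    rw [sigmaSum_top, sigmaSum_top]
    exact hnsd u.val v.val u.isLt v.isLt
      (fun h => (SimpleGraph.top_adj u v).mp huv (Fin.ext h))

end Framework

section Helpers

lemma csum_succ2 (n : ℕ) (c : ℕ → ℕ → ℕ) (v : ℕ) (hv : v < n) :
    csum (n+2) c v = csum n c v + c v n + c v (n+1) := by
  unfold csum
  rw [Finset.sum_range_succ, Finset.sum_range_succ, if_neg (by omega : ¬ n = v),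
    if_neg (by omega : ¬ n + 1 = v)]

lemma ccnt_succ2 (n : ℕ) (c : ℕ → ℕ → ℕ) (v α : ℕ) (hv : v < n) :
    ccnt (n+2) c v α = ccnt n c v α + (if c v n = α then 1 else 0)
      + (if c v (n+1) = α then 1 else 0) := by
  unfold ccnt
  rw [Finset.sum_range_succ, Finset.sum_range_succ,
    if_congr (and_iff_right (by omega : (n:ℕ) ≠ v)) rfl rfl,
    if_congr (and_iff_right (by omega : (n+1:ℕ) ≠ v)) rfl rfl]

lemma csum_newx (n : ℕ) (c : ℕ → ℕ → ℕ) :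
    csum (n+2) c n = (∑ u ∈ Finset.range n, c n u) + c n (n+1) := by
  unfold csum
  rw [Finset.sum_range_succ, Finset.sum_range_succ, if_pos rfl, if_neg (by omega : ¬ n+1 = n),
    Finset.sum_congr rfl (fun u hu => if_neg (by have := Finset.mem_range.mp hu; omega))]
  simp

lemma csum_newy (n : ℕ) (c : ℕ → ℕ → ℕ) :
    csum (n+2) c (n+1) = (∑ u ∈ Finset.range n, c (n+1) u) + c (n+1) n := by
  unfold csum
  rw [Finset.sum_range_succ, Finset.sum_range_succ, if_pos rfl, if_neg (by omega : ¬ n = n+1),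
    Finset.sum_congr rfl (fun u hu => if_neg (by have := Finset.mem_range.mp hu; omega))]
  simp

lemma ccnt_newx (n : ℕ) (c : ℕ → ℕ → ℕ) (α : ℕ) :
    ccnt (n+2) c n α = (∑ u ∈ Finset.range n, if c n u = α then 1 else 0)
      + (if c n (n+1) = α then 1 else 0) := by
  unfold ccnt
  rw [Finset.sum_range_succ, Finset.sum_range_succ,
    if_congr (and_iff_right (by omega : (n+1:ℕ) ≠ n)) rfl rfl,
    if_neg (by simp : ¬ ((n:ℕ) ≠ n ∧ c n n = α)),
    Finset.sum_congr rfl (fun u hu =>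
      if_congr (and_iff_right (by have := Finset.mem_range.mp hu; omega : u ≠ n)) rfl rfl)]
  omega

lemma ccnt_newy (n : ℕ) (c : ℕ → ℕ → ℕ) (α : ℕ) :
    ccnt (n+2) c (n+1) α = (∑ u ∈ Finset.range n, if c (n+1) u = α then 1 else 0)
      + (if c (n+1) n = α then 1 else 0) := by
  unfold ccnt
  rw [Finset.sum_range_succ, Finset.sum_range_succ,
    if_neg (by simp : ¬ ((n+1:ℕ) ≠ n+1 ∧ c (n+1) (n+1) = α)),
    if_congr (and_iff_right (by omega : (n:ℕ) ≠ n+1)) rfl rfl,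
    Finset.sum_congr rfl (fun u hu =>
      if_congr (and_iff_right (by have := Finset.mem_range.mp hu; omega : u ≠ n+1)) rfl rfl)]
  simp

lemma sum_ite_mem_const (n a b : ℕ) (S : Finset ℕ) (hS : S ⊆ Finset.range n) :
    ∑ u ∈ Finset.range n, (if u ∈ S then a else b) = a * S.card + b * (n - S.card) := by
  rw [← Finset.sum_filter_add_sum_filter_not (Finset.range n) (· ∈ S)]
  have h1 : (Finset.range n).filter (· ∈ S) = S := by
    rw [Finset.filter_mem_eq_inter, Finset.inter_eq_right.mpr hS]
  have h2 : ((Finset.range n).filter (fun u => ¬ u ∈ S)).card = n - S.card := by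
    rw [Finset.filter_not, h1, Finset.card_sdiff_of_subset hS, Finset.card_range]
  rw [Finset.sum_congr rfl (fun u hu => if_pos (Finset.mem_filter.mp hu).2),
    Finset.sum_congr rfl (fun u hu => if_neg (Finset.mem_filter.mp hu).2),
    Finset.sum_const, Finset.sum_const, h1, h2, smul_eq_mul, smul_eq_mul,
    mul_comm a, mul_comm b]

lemma ccnt_le_of' {n K M : ℕ} {c : ℕ → ℕ → ℕ} {v α : ℕ}
    (hcol : ∀ u, u < n → u ≠ v → c v u ≤ K)
    (h : ∀ β, β ≤ K → ccnt n c v β ≤ M) : ccnt n c v α ≤ M := by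
  rcases le_or_gt α K with h' | h'
  · exact h α h'
  · have hz : ccnt n c v α = 0 := Finset.sum_eq_zero (fun u hu => by
      rw [if_neg]
      rintro ⟨h1, h2⟩
      have := hcol u (Finset.mem_range.mp hu) h1
      omega)
    omega

end Helpers

section OddCase

def GoodOdd (m : ℕ) : Prop :=
  ∃ c : ℕ → ℕ → ℕ,
    (∀ i j, c i j = c j i) ∧
    (∀ i, i < 2*m+1 → ∀ j, j < 2*m+1 → i ≠ j → 1 ≤ c i j ∧ c i j ≤ 3) ∧
    (∀ v, v < 2*m+1 → ∀ α, ccnt (2*m+1) c v α ≤ m) ∧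
    (∀ v, v < 2*m+1 → 3*m ≤ csum (2*m+1) c v ∧ csum (2*m+1) c v ≤ 5*m) ∧
    (∀ v, v < 2*m+1 → ∀ w, w < 2*m+1 → v ≠ w → csum (2*m+1) c v ≠ csum (2*m+1) c w) ∧
    (∃ S : Finset ℕ, S ⊆ Finset.range (2*m+1) ∧ S.card = m ∧
      ∀ v ∈ S, ccnt (2*m+1) c v 2 + 1 ≤ m)

def c3 : ℕ → ℕ → ℕ := fun i j => if i + j = 1 then 2 else if i + j = 2 then 1 else 3

lemma goodOdd_one : GoodOdd 1 := by
  have key : ∀ v < 3, ∀ β < 4, ccnt 3 c3 v β ≤ 1 := by decide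
  refine ⟨c3, fun i j => by unfold c3; rw [Nat.add_comm], by decide, ?_, by decide, by decide,
    ⟨{2}, by decide, rfl, by decide⟩⟩
  intro v hv α
  exact ccnt_le_of' (K := 3) (fun u _ _ => by unfold c3; split_ifs <;> omega)
    (fun β hβ => key v hv β (by omega))

def oddExt (n : ℕ) (S : Finset ℕ) (c : ℕ → ℕ → ℕ) : ℕ → ℕ → ℕ := fun i j =>
  if i < n ∧ j < n then c i j
  else if i < n then (if i ∈ S then 2 else if j = n then 1 else 3)
  else if j < n then (if j ∈ S then 2 else if i = n then 1 else 3)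
  else 2

variable {n : ℕ} {S : Finset ℕ} {c : ℕ → ℕ → ℕ}

lemma oddExt_old {i j : ℕ} (hi : i < n) (hj : j < n) : oddExt n S c i j = c i j :=
  if_pos ⟨hi, hj⟩

lemma oddExt_vx {v : ℕ} (hv : v < n) : oddExt n S c v n = (if v ∈ S then 2 else 1) := by
  unfold oddExt
  rw [if_neg (by omega), if_pos hv]
  by_cases h : v ∈ S <;> simp [h]

lemma oddExt_xv {v : ℕ} (hv : v < n) : oddExt n S c n v = (if v ∈ S then 2 else 1) := by
  unfold oddExt
  rw [if_neg (by omega), if_neg (by omega), if_pos hv]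
  by_cases h : v ∈ S <;> simp [h]

lemma oddExt_vy {v : ℕ} (hv : v < n) : oddExt n S c v (n+1) = (if v ∈ S then 2 else 3) := by
  unfold oddExt
  rw [if_neg (by omega), if_pos hv]
  by_cases h : v ∈ S <;> simp [h]

lemma oddExt_yv {v : ℕ} (hv : v < n) : oddExt n S c (n+1) v = (if v ∈ S then 2 else 3) := by
  unfold oddExt
  rw [if_neg (by omega), if_neg (by omega), if_pos hv]
  by_cases h : v ∈ S <;> simp [h]

lemma oddExt_xy : oddExt n S c n (n+1) = 2 := by
  unfold oddExt
  rw [if_neg (by omega), if_neg (by omega), if_neg (by omega)]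

lemma oddExt_yx : oddExt n S c (n+1) n = 2 := by
  unfold oddExt
  rw [if_neg (by omega), if_neg (by omega), if_neg (by omega)]

lemma goodOdd_step (m : ℕ) (hm : 1 ≤ m) (h : GoodOdd m) : GoodOdd (m+1) := by
  obtain ⟨c, hsym, hcol, hcnt, hbnd, hinj, S, hSsub, hScard, hS2⟩ := h
  set n := 2*m+1 with hn
  set c' := oddExt n S c with hc'
  have hagree_sum : ∀ v, v < n → csum n c' v = csum n c v := fun v hv =>
    Finset.sum_congr rfl (fun u hu => by
      by_cases h : u = v
      · simp [h]
      · rw [if_neg h, if_neg h, hc', oddExt_old hv (Finset.mem_range.mp hu)])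
  have hagree_cnt : ∀ v α, v < n → ccnt n c' v α = ccnt n c v α := fun v α hv =>
    Finset.sum_congr rfl (fun u hu => by
      by_cases h : u = v
      · simp [h]
      · rw [hc', oddExt_old hv (Finset.mem_range.mp hu)])
  have hshift : ∀ v, v < n → csum (n+2) c' v = csum n c v + 4 := by
    intro v hv
    rw [csum_succ2 n c' v hv, hagree_sum v hv, hc', oddExt_vx hv, oddExt_vy hv]
    by_cases h : v ∈ S <;> simp [h]
  have hsx : csum (n+2) c' n = 3*m+3 := by
    rw [csum_newx, hc', oddExt_xy,
      Finset.sum_congr rfl (fun u hu => oddExt_xv (Finset.mem_range.mp hu)),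
      sum_ite_mem_const n 2 1 S hSsub, hScard]
    omega
  have hsy : csum (n+2) c' (n+1) = 5*m+5 := by
    rw [csum_newy, hc', oddExt_yx,
      Finset.sum_congr rfl (fun u hu => oddExt_yv (Finset.mem_range.mp hu)),
      sum_ite_mem_const n 2 3 S hSsub, hScard]
    omega
  have hcx : ∀ α, ccnt (n+2) c' n α ≤ m+1 := by
    intro α
    rw [ccnt_newx, hc', oddExt_xy]
    have e1 : (∑ u ∈ Finset.range n, if oddExt n S c n u = α then 1 else 0)
        = ∑ u ∈ Finset.range n, if (if u ∈ S then 2 else 1) = α then 1 else 0 :=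
      Finset.sum_congr rfl (fun u hu => by rw [oddExt_xv (Finset.mem_range.mp hu)])
    rw [e1]
    by_cases h2 : α = 2
    · subst h2
      have e2 : (∑ u ∈ Finset.range n, if (if u ∈ S then 2 else 1) = 2 then 1 else 0)
          = ∑ u ∈ Finset.range n, if u ∈ S then 1 else 0 :=
        Finset.sum_congr rfl (fun u hu => by by_cases h : u ∈ S <;> simp [h])
      rw [e2, sum_ite_mem_const n 1 0 S hSsub, hScard]
      simp
    · by_cases h1 : α = 1
      · subst h1
        have e2 : (∑ u ∈ Finset.range n, if (if u ∈ S then 2 else 1) = 1 then 1 else 0)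
            = ∑ u ∈ Finset.range n, if u ∈ S then 0 else 1 :=
          Finset.sum_congr rfl (fun u hu => by by_cases h : u ∈ S <;> simp [h])
        rw [e2, sum_ite_mem_const n 0 1 S hSsub, hScard]
        simp
        omega
      · have e2 : (∑ u ∈ Finset.range n, if (if u ∈ S then 2 else 1) = α then 1 else 0) = 0 :=
          Finset.sum_eq_zero (fun u hu => by by_cases h : u ∈ S <;> simp [h] <;> omega)
        rw [e2, if_neg (by omega : ¬ (2:ℕ) = α)]
        omega
  have hcy : ∀ α, ccnt (n+2) c' (n+1) α ≤ m+1 := by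
    intro α
    rw [ccnt_newy, hc', oddExt_yx]
    have e1 : (∑ u ∈ Finset.range n, if oddExt n S c (n+1) u = α then 1 else 0)
        = ∑ u ∈ Finset.range n, if (if u ∈ S then 2 else 3) = α then 1 else 0 :=
      Finset.sum_congr rfl (fun u hu => by rw [oddExt_yv (Finset.mem_range.mp hu)])
    rw [e1]
    by_cases h2 : α = 2
    · subst h2
      have e2 : (∑ u ∈ Finset.range n, if (if u ∈ S then 2 else 3) = 2 then 1 else 0)
          = ∑ u ∈ Finset.range n, if u ∈ S then 1 else 0 :=
        Finset.sum_congr rfl (fun u hu => by by_cases h : u ∈ S <;> simp [h])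
      rw [e2, sum_ite_mem_const n 1 0 S hSsub, hScard]
      simp
    · by_cases h3 : α = 3
      · subst h3
        have e2 : (∑ u ∈ Finset.range n, if (if u ∈ S then 2 else 3) = 3 then 1 else 0)
            = ∑ u ∈ Finset.range n, if u ∈ S then 0 else 1 :=
          Finset.sum_congr rfl (fun u hu => by by_cases h : u ∈ S <;> simp [h])
        rw [e2, sum_ite_mem_const n 0 1 S hSsub, hScard]
        simp
        omega
      · have e2 : (∑ u ∈ Finset.range n, if (if u ∈ S then 2 else 3) = α then 1 else 0) = 0 :=
          Finset.sum_eq_zero (fun u hu => by by_cases h : u ∈ S <;> simp [h] <;> omega)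
        rw [e2, if_neg (by omega : ¬ (2:ℕ) = α)]
        omega
  have hcold : ∀ v α, v < n → ccnt (n+2) c' v α ≤ m+1 := by
    intro v α hv
    rw [ccnt_succ2 n c' v α hv, hagree_cnt v α hv, hc', oddExt_vx hv, oddExt_vy hv]
    have h0 := hcnt v hv α
    by_cases h : v ∈ S
    · have h2 := hS2 v h
      simp only [if_pos h]
      rcases eq_or_ne (2:ℕ) α with hα | hα
      · subst hα; rw [if_pos rfl]; omega
      · rw [if_neg hα]; omega
    · simp only [if_neg h]
      rcases eq_or_ne (1:ℕ) α with h1 | h1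
      · subst h1; rw [if_pos rfl, if_neg (by omega : ¬ (3:ℕ) = 1)]; omega
      · rcases eq_or_ne (3:ℕ) α with h3 | h3
        · subst h3; rw [if_neg (by omega : ¬ (1:ℕ) = 3), if_pos rfl]; omega
        · rw [if_neg h1, if_neg h3]; omega
  refine ⟨c', fun i j => ?_, ?_, ?_, ?_, ?_, ?_⟩
  · -- symmetry
    rw [hc']
    unfold oddExt
    by_cases hi : i < n <;> by_cases hj : j < n <;> simp [hi, hj, hsym i j]
  · -- colors
    rw [show 2*(m+1)+1 = n+2 by omega]
    intro i hi j hj hij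
    rw [hc']
    rcases lt_or_ge i n with hi' | hi' <;> rcases lt_or_ge j n with hj' | hj'
    · rw [oddExt_old hi' hj']; exact hcol i hi' j hj' hij
    · have : j = n ∨ j = n+1 := by omega
      rcases this with rfl | rfl
      · rw [oddExt_vx hi']; split_ifs <;> omega
      · rw [oddExt_vy hi']; split_ifs <;> omega
    · have : i = n ∨ i = n+1 := by omega
      rcases this with rfl | rfl
      · rw [oddExt_xv hj']; split_ifs <;> omega
      · rw [oddExt_yv hj']; split_ifs <;> omega
    · have hii : i = n ∨ i = n+1 := by omega
      have hjj : j = n ∨ j = n+1 := by omega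
      rcases hii with rfl | rfl <;> rcases hjj with rfl | rfl
      · omega
      · rw [oddExt_xy]; omega
      · rw [oddExt_yx]; omega
      · omega
  · -- counts
    rw [show 2*(m+1)+1 = n+2 by omega]
    intro v hv α
    rcases lt_or_ge v n with hv' | hv'
    · exact hcold v α hv'
    · have : v = n ∨ v = n+1 := by omega
      rcases this with rfl | rfl
      · exact hcx α
      · exact hcy α
  · -- bounds
    rw [show 2*(m+1)+1 = n+2 by omega]
    intro v hv
    rcases lt_or_ge v n with hv' | hv'
    · have := hbnd v hv'
      rw [hshift v hv']
      omega
    · have : v = n ∨ v = n+1 := by omega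
      rcases this with rfl | rfl
      · rw [hsx]; omega
      · rw [hsy]; omega
  · -- injectivity
    rw [show 2*(m+1)+1 = n+2 by omega]
    intro v hv w hw hvw
    rcases lt_or_ge v n with hv' | hv' <;> rcases lt_or_ge w n with hw' | hw'
    · rw [hshift v hv', hshift w hw']
      have := hinj v hv' w hw' hvw
      omega
    · have hb := hbnd v hv'
      rw [hshift v hv']
      have : w = n ∨ w = n+1 := by omega
      rcases this with rfl | rfl
      · rw [hsx]; omega
      · rw [hsy]; omega
    · have hb := hbnd w hw'
      rw [hshift w hw']
      have : v = n ∨ v = n+1 := by omega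
      rcases this with rfl | rfl
      · rw [hsx]; omega
      · rw [hsy]; omega
    · have hvv : v = n ∨ v = n+1 := by omega
      have hww : w = n ∨ w = n+1 := by omega
      rcases hvv with rfl | rfl <;> rcases hww with rfl | rfl
      · omega
      · rw [hsx, hsy]; omega
      · rw [hsy, hsx]; omega
      · omega
  · -- the set S'
    refine ⟨Finset.range n \ S, ?_, ?_, ?_⟩
    · refine subset_trans (Finset.sdiff_subset) (Finset.range_subset_range.mpr (by omega))
    · rw [Finset.card_sdiff_of_subset hSsub, Finset.card_range, hScard]; omega
    · intro v hv
      rw [show 2*(m+1)+1 = n+2 by omega]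
      have hv' : v < n := Finset.mem_range.mp (Finset.mem_sdiff.mp hv).1
      have hvS : v ∉ S := (Finset.mem_sdiff.mp hv).2
      rw [ccnt_succ2 n c' v 2 hv', hagree_cnt v 2 hv', hc', oddExt_vx hv', oddExt_vy hv',
        if_neg hvS, if_neg hvS]
      have := hcnt v hv' 2
      simp
      omega

lemma goodOdd (m : ℕ) (hm : 1 ≤ m) : GoodOdd m := by
  induction m, hm using Nat.le_induction with
  | base => exact goodOdd_one
  | succ m hm ih => exact goodOdd_step m hm ih

end OddCase

section EvenCase

def GoodEven (m : ℕ) : Prop :=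
  ∃ c : ℕ → ℕ → ℕ,
    (∀ i j, c i j = c j i) ∧
    (∀ i, i < 2*m → ∀ j, j < 2*m → i ≠ j → 1 ≤ c i j ∧ c i j ≤ 4) ∧
    (∀ v, v < 2*m → ∀ α, ccnt (2*m) c v α + 1 ≤ m) ∧
    (∀ v, v < 2*m → 3*m ≤ csum (2*m) c v + 1 ∧ csum (2*m) c v + 5 ≤ 7*m) ∧
    (∀ v, v < 2*m → ∀ w, w < 2*m → v ≠ w → csum (2*m) c v ≠ csum (2*m) c w)

def c6 : ℕ → ℕ → ℕ := fun i j =>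
  (([[0,1,1,2,2,3],[0,0,1,2,2,4],[0,0,0,3,4,2],[0,0,0,0,4,1],[0,0,0,0,0,3],
     [0,0,0,0,0,0]] : List (List ℕ)).getD (min i j) []).getD (max i j) 0

lemma goodEven_three : GoodEven 3 := by
  have key : ∀ v < 6, ∀ β < 5, ccnt 6 c6 v β + 1 ≤ 3 := by decide
  have key2 : ∀ v < 6, ∀ u < 6, u ≠ v → c6 v u ≤ 4 := by decide
  refine ⟨c6, fun i j => by unfold c6; rw [Nat.min_comm, Nat.max_comm], by decide, ?_,
    by decide, by decide⟩
  intro v hv α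
  show ccnt 6 c6 v α + 1 ≤ 3
  have h := ccnt_le_of' (K := 4) (M := 2) (α := α) (fun u hu hne => key2 v hv u hu hne)
    (fun β hβ => by have := key v hv β (by omega); omega)
  omega

def gx (n v : ℕ) : ℕ := if 2*v < n then 1 else if v+1 = n then 3 else 2
def gy (n v : ℕ) : ℕ := if 2*v < n then 4 else if v+1 = n then 2 else 3

lemma gx_add_gy (n v : ℕ) : gx n v + gy n v = 5 := by
  unfold gx gy; split_ifs <;> omega

lemma gx_ne_gy (n v : ℕ) : gx n v ≠ gy n v := by
  unfold gx gy; split_ifs <;> omega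

lemma gx_mem (n v : ℕ) : 1 ≤ gx n v ∧ gx n v ≤ 4 := by
  unfold gx; split_ifs <;> omega

lemma gy_mem (n v : ℕ) : 1 ≤ gy n v ∧ gy n v ≤ 4 := by
  unfold gy; split_ifs <;> omega

def evenExt (n : ℕ) (c : ℕ → ℕ → ℕ) : ℕ → ℕ → ℕ := fun i j =>
  if i < n ∧ j < n then c i j
  else if i < n then (if j = n then gx n i else gy n i)
  else if j < n then (if i = n then gx n j else gy n j)
  else 2

variable {n : ℕ} {c : ℕ → ℕ → ℕ}

lemma evenExt_old {i j : ℕ} (hi : i < n) (hj : j < n) : evenExt n c i j = c i j :=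
  if_pos ⟨hi, hj⟩

lemma evenExt_vx {v : ℕ} (hv : v < n) : evenExt n c v n = gx n v := by
  unfold evenExt
  rw [if_neg (by omega), if_pos hv, if_pos rfl]

lemma evenExt_xv {v : ℕ} (hv : v < n) : evenExt n c n v = gx n v := by
  unfold evenExt
  rw [if_neg (by omega), if_neg (by omega), if_pos hv, if_pos rfl]

lemma evenExt_vy {v : ℕ} (hv : v < n) : evenExt n c v (n+1) = gy n v := by
  unfold evenExt
  rw [if_neg (by omega), if_pos hv, if_neg (by omega)]

lemma evenExt_yv {v : ℕ} (hv : v < n) : evenExt n c (n+1) v = gy n v := by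
  unfold evenExt
  rw [if_neg (by omega), if_neg (by omega), if_pos hv, if_neg (by omega)]

lemma evenExt_xy : evenExt n c n (n+1) = 2 := by
  unfold evenExt
  rw [if_neg (by omega), if_neg (by omega), if_neg (by omega)]

lemma evenExt_yx : evenExt n c (n+1) n = 2 := by
  unfold evenExt
  rw [if_neg (by omega), if_neg (by omega), if_neg (by omega)]

lemma sum_ite_lt_const (N m a b : ℕ) (h : m ≤ N) :
    ∑ u ∈ Finset.range N, (if u < m then a else b) = a * m + b * (N - m) := by
  rw [Finset.sum_congr rfl (fun u _ =>
    if_congr (Finset.mem_range (n := m) (m := u)).symm rfl rfl),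
    sum_ite_mem_const N a b (Finset.range m) (Finset.range_subset_range.mpr h), Finset.card_range]

lemma sum_gx (m : ℕ) (hm : 1 ≤ m) : ∑ u ∈ Finset.range (2*m), gx (2*m) u = 3*m+1 := by
  have h : 2*m = (2*m-1)+1 := by omega
  rw [h, Finset.sum_range_succ,
    show gx ((2*m-1)+1) (2*m-1) = 3 from by unfold gx; rw [if_neg (by omega), if_pos (by omega)],
    Finset.sum_congr rfl (fun u hu => show gx ((2*m-1)+1) u = if u < m then 1 else 2 from by
      have hu' := Finset.mem_range.mp hu
      unfold gx; split_ifs <;> omega),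
    sum_ite_lt_const (2*m-1) m 1 2 (by omega)]
  omega

lemma sum_gy (m : ℕ) (hm : 1 ≤ m) : ∑ u ∈ Finset.range (2*m), gy (2*m) u = 7*m-1 := by
  have h : 2*m = (2*m-1)+1 := by omega
  rw [h, Finset.sum_range_succ,
    show gy ((2*m-1)+1) (2*m-1) = 2 from by unfold gy; rw [if_neg (by omega), if_pos (by omega)],
    Finset.sum_congr rfl (fun u hu => show gy ((2*m-1)+1) u = if u < m then 4 else 3 from by
      have hu' := Finset.mem_range.mp hu
      unfold gy; split_ifs <;> omega),
    sum_ite_lt_const (2*m-1) m 4 3 (by omega)]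
  omega

lemma cnt_gx_le (m α : ℕ) (hm : 3 ≤ m) :
    (∑ u ∈ Finset.range (2*m), if gx (2*m) u = α then 1 else 0)
      + (if (2:ℕ) = α then 1 else 0) + 1 ≤ m+1 := by
  have h : 2*m = (2*m-1)+1 := by omega
  rcases eq_or_ne α 1 with rfl | h1
  · rw [Finset.sum_congr rfl (fun u hu =>
      show (if gx (2*m) u = 1 then 1 else 0) = if u < m then 1 else 0 from by
        have hu' := Finset.mem_range.mp hu
        unfold gx; split_ifs <;> omega),
      sum_ite_lt_const (2*m) m 1 0 (by omega)]
    simp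
  · rcases eq_or_ne α 2 with rfl | h2
    · rw [h, Finset.sum_range_succ,
        show (if gx ((2*m-1)+1) (2*m-1) = 2 then 1 else 0) = 0 from by
          rw [if_neg]; unfold gx; rw [if_neg (by omega), if_pos (by omega)]; omega,
        Finset.sum_congr rfl (fun u hu =>
          show (if gx ((2*m-1)+1) u = 2 then 1 else 0) = if u < m then 0 else 1 from by
            have hu' := Finset.mem_range.mp hu
            unfold gx; split_ifs <;> omega),
        sum_ite_lt_const (2*m-1) m 0 1 (by omega)]
      rw [if_pos rfl]
      omega
    · rcases eq_or_ne α 3 with rfl | h3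
      · rw [h, Finset.sum_range_succ,
          show (if gx ((2*m-1)+1) (2*m-1) = 3 then 1 else 0) = 1 from by
            rw [if_pos]; unfold gx; rw [if_neg (by omega), if_pos (by omega)],
          Finset.sum_eq_zero (fun u hu => by
            have hu' := Finset.mem_range.mp hu
            rw [if_neg]; unfold gx; split_ifs <;> omega),
          if_neg (by omega : ¬ (2:ℕ) = 3)]
        omega
      · rw [Finset.sum_eq_zero (fun u hu => by
          have hu' := Finset.mem_range.mp hu
          rw [if_neg]; unfold gx; split_ifs <;> omega), if_neg (by omega)]
        omega

lemma cnt_gy_le (m α : ℕ) (hm : 3 ≤ m) :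
    (∑ u ∈ Finset.range (2*m), if gy (2*m) u = α then 1 else 0)
      + (if (2:ℕ) = α then 1 else 0) + 1 ≤ m+1 := by
  have h : 2*m = (2*m-1)+1 := by omega
  rcases eq_or_ne α 4 with rfl | h4
  · rw [Finset.sum_congr rfl (fun u hu =>
      show (if gy (2*m) u = 4 then 1 else 0) = if u < m then 1 else 0 from by
        have hu' := Finset.mem_range.mp hu
        unfold gy; split_ifs <;> omega),
      sum_ite_lt_const (2*m) m 1 0 (by omega)]
    simp
  · rcases eq_or_ne α 3 with rfl | h3
    · rw [h, Finset.sum_range_succ,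
        show (if gy ((2*m-1)+1) (2*m-1) = 3 then 1 else 0) = 0 from by
          rw [if_neg]; unfold gy; rw [if_neg (by omega), if_pos (by omega)]; omega,
        Finset.sum_congr rfl (fun u hu =>
          show (if gy ((2*m-1)+1) u = 3 then 1 else 0) = if u < m then 0 else 1 from by
            have hu' := Finset.mem_range.mp hu
            unfold gy; split_ifs <;> omega),
        sum_ite_lt_const (2*m-1) m 0 1 (by omega)]
      rw [if_neg (by omega : ¬ (2:ℕ) = 3)]
      omega
    · rcases eq_or_ne α 2 with rfl | h2
      · rw [h, Finset.sum_range_succ,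
          show (if gy ((2*m-1)+1) (2*m-1) = 2 then 1 else 0) = 1 from by
            rw [if_pos]; unfold gy; rw [if_neg (by omega), if_pos (by omega)],
          Finset.sum_eq_zero (fun u hu => by
            have hu' := Finset.mem_range.mp hu
            rw [if_neg]; unfold gy; split_ifs <;> omega),
          if_pos rfl]
        omega
      · rw [Finset.sum_eq_zero (fun u hu => by
          have hu' := Finset.mem_range.mp hu
          rw [if_neg]; unfold gy; split_ifs <;> omega), if_neg (by omega)]
        omega

lemma goodEven_step (m : ℕ) (hm : 3 ≤ m) (h : GoodEven m) : GoodEven (m+1) := by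
  obtain ⟨c, hsym, hcol, hcnt, hbnd, hinj⟩ := h
  set n := 2*m with hn
  set c' := evenExt n c with hc'
  have hagree_sum : ∀ v, v < n → csum n c' v = csum n c v := fun v hv =>
    Finset.sum_congr rfl (fun u hu => by
      by_cases h : u = v
      · simp [h]
      · rw [if_neg h, if_neg h, hc', evenExt_old hv (Finset.mem_range.mp hu)])
  have hagree_cnt : ∀ v α, v < n → ccnt n c' v α = ccnt n c v α := fun v α hv =>
    Finset.sum_congr rfl (fun u hu => by
      by_cases h : u = v
      · simp [h]
      · rw [hc', evenExt_old hv (Finset.mem_range.mp hu)])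
  have hshift : ∀ v, v < n → csum (n+2) c' v = csum n c v + 5 := by
    intro v hv
    rw [csum_succ2 n c' v hv, hagree_sum v hv, hc', evenExt_vx hv, evenExt_vy hv]
    have := gx_add_gy n v
    omega
  have hsx : csum (n+2) c' n = 3*m+3 := by
    rw [csum_newx, hc', evenExt_xy,
      Finset.sum_congr rfl (fun u hu => evenExt_xv (Finset.mem_range.mp hu)), hn,
      sum_gx m (by omega)]
  have hsy : csum (n+2) c' (n+1) = 7*m+1 := by
    rw [csum_newy, hc', evenExt_yx,
      Finset.sum_congr rfl (fun u hu => evenExt_yv (Finset.mem_range.mp hu)), hn,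
      sum_gy m (by omega)]
    omega
  have hcx : ∀ α, ccnt (n+2) c' n α + 1 ≤ m+1 := by
    intro α
    have e1 : (∑ u ∈ Finset.range n, if evenExt n c n u = α then 1 else 0)
        = ∑ u ∈ Finset.range n, if gx n u = α then 1 else 0 :=
      Finset.sum_congr rfl (fun u hu => by rw [evenExt_xv (Finset.mem_range.mp hu)])
    rw [ccnt_newx, hc', evenExt_xy, e1]
    have := cnt_gx_le m α hm
    rw [hn]
    omega
  have hcy : ∀ α, ccnt (n+2) c' (n+1) α + 1 ≤ m+1 := by
    intro α
    have e1 : (∑ u ∈ Finset.range n, if evenExt n c (n+1) u = α then 1 else 0)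
        = ∑ u ∈ Finset.range n, if gy n u = α then 1 else 0 :=
      Finset.sum_congr rfl (fun u hu => by rw [evenExt_yv (Finset.mem_range.mp hu)])
    rw [ccnt_newy, hc', evenExt_yx, e1]
    have := cnt_gy_le m α hm
    rw [hn]
    omega
  have hcold : ∀ v α, v < n → ccnt (n+2) c' v α + 1 ≤ m+1 := by
    intro v α hv
    rw [ccnt_succ2 n c' v α hv, hagree_cnt v α hv, hc', evenExt_vx hv, evenExt_vy hv]
    have h0 := hcnt v hv α
    have hne := gx_ne_gy n v
    by_cases e1 : gx n v = α <;> by_cases e2 : gy n v = α <;>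
      simp only [e1, e2, if_pos, if_neg, if_true, if_false] <;> simp [e1, e2] <;> omega
  refine ⟨c', fun i j => ?_, ?_, ?_, ?_, ?_⟩
  · rw [hc']
    unfold evenExt
    by_cases hi : i < n <;> by_cases hj : j < n <;> simp [hi, hj, hsym i j]
  · rw [show 2*(m+1) = n+2 by omega]
    intro i hi j hj hij
    rw [hc']
    rcases lt_or_ge i n with hi' | hi' <;> rcases lt_or_ge j n with hj' | hj'
    · rw [evenExt_old hi' hj']; exact hcol i hi' j hj' hij
    · have : j = n ∨ j = n+1 := by omega
      rcases this with rfl | rfl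
      · rw [evenExt_vx hi']; exact gx_mem n i
      · rw [evenExt_vy hi']; exact gy_mem n i
    · have : i = n ∨ i = n+1 := by omega
      rcases this with rfl | rfl
      · rw [evenExt_xv hj']; exact gx_mem n j
      · rw [evenExt_yv hj']; exact gy_mem n j
    · have hii : i = n ∨ i = n+1 := by omega
      have hjj : j = n ∨ j = n+1 := by omega
      rcases hii with rfl | rfl <;> rcases hjj with rfl | rfl
      · omega
      · rw [evenExt_xy]; omega
      · rw [evenExt_yx]; omega
      · omega
  · rw [show 2*(m+1) = n+2 by omega]
    intro v hv α
    rcases lt_or_ge v n with hv' | hv'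
    · exact hcold v α hv'
    · have : v = n ∨ v = n+1 := by omega
      rcases this with rfl | rfl
      · exact hcx α
      · exact hcy α
  · rw [show 2*(m+1) = n+2 by omega]
    intro v hv
    rcases lt_or_ge v n with hv' | hv'
    · have := hbnd v hv'
      rw [hshift v hv']
      omega
    · have : v = n ∨ v = n+1 := by omega
      rcases this with rfl | rfl
      · rw [hsx]; omega
      · rw [hsy]; omega
  · rw [show 2*(m+1) = n+2 by omega]
    intro v hv w hw hvw
    rcases lt_or_ge v n with hv' | hv' <;> rcases lt_or_ge w n with hw' | hw'
    · rw [hshift v hv', hshift w hw']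
      have := hinj v hv' w hw' hvw
      omega
    · have hb := hbnd v hv'
      rw [hshift v hv']
      have : w = n ∨ w = n+1 := by omega
      rcases this with rfl | rfl
      · rw [hsx]; omega
      · rw [hsy]; omega
    · have hb := hbnd w hw'
      rw [hshift w hw']
      have : v = n ∨ v = n+1 := by omega
      rcases this with rfl | rfl
      · rw [hsx]; omega
      · rw [hsy]; omega
    · have hvv : v = n ∨ v = n+1 := by omega
      have hww : w = n ∨ w = n+1 := by omega
      rcases hvv with rfl | rfl <;> rcases hww with rfl | rfl
      · omega
      · rw [hsx, hsy]; omega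
      · rw [hsy, hsx]; omega
      · omega

lemma goodEven (m : ℕ) (hm : 3 ≤ m) : GoodEven m := by
  induction m, hm using Nat.le_induction with
  | base => exact goodEven_three
  | succ m hm ih => exact goodEven_step m hm ih

end EvenCase

section LowerBounds

lemma sigmaSum_top' {n : ℕ} (cF : Fin n → Fin n → ℕ) (v : Fin n) :
    sigmaSum (⊤ : SimpleGraph (Fin n)) cF v = ∑ u : Fin n, if u = v then 0 else cF v u := by
  rw [sigmaSum, neighborFinset_top,
    show (∑ u ∈ Finset.univ.erase v, cF v u)
      = ∑ u ∈ Finset.univ.erase v, (if u = v then 0 else cF v u) from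
    Finset.sum_congr rfl (fun u hu => (if_neg (Finset.mem_erase.mp hu).1).symm)]
  exact Finset.sum_erase _ (if_pos rfl)

lemma colorCount_top' {n : ℕ} (cF : Fin n → Fin n → ℕ) (v : Fin n) (α : ℕ) :
    colorCount (⊤ : SimpleGraph (Fin n)) cF v α
      = ∑ u : Fin n, if u ≠ v ∧ cF v u = α then 1 else 0 := by
  rw [colorCount, neighborFinset_top, Finset.card_filter,
    show (∑ u ∈ Finset.univ.erase v, if cF v u = α then 1 else 0)
      = ∑ u ∈ Finset.univ.erase v, (if u ≠ v ∧ cF v u = α then 1 else 0) from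
    Finset.sum_congr rfl (fun u hu => by
      have h1 : u ≠ v := (Finset.mem_erase.mp hu).1
      by_cases h2 : cF v u = α <;> simp [h1, h2])]
  exact Finset.sum_erase _ (by simp)

lemma count_sum_erase {n : ℕ} (v : Fin n) (hn : 1 ≤ n) :
    (∑ u : Fin n, if u = v then 0 else 1) = n - 1 := by
  rw [show (∑ u : Fin n, if u = v then 0 else 1)
      = ∑ u : Fin n, (if u ≠ v ∧ (1:ℕ) = 1 then 1 else 0) from
    Finset.sum_congr rfl (fun u _ => by by_cases h : u = v <;> simp [h])]
  rw [← colorCount_top' (fun _ _ => 1) v 1, colorCount, neighborFinset_top]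
  simp [Finset.filter_true_of_mem, Finset.card_erase_of_mem]

lemma lb_odd (n : ℕ) (hn : 3 ≤ n) (m : ℕ) (hm : n = 2*m+1) (k : ℕ) (hk : k ≤ 2)
    (cF : Fin n → Fin n → ℕ) (hec : EdgeColoring (⊤ : SimpleGraph (Fin n)) k cF)
    (hmaj : Majority (⊤ : SimpleGraph (Fin n)) cF)
    (hnsd : NSD (⊤ : SimpleGraph (Fin n)) cF) : False := by
  have hcolor : ∀ v u : Fin n, u ≠ v → cF v u = 1 ∨ cF v u = 2 := by
    intro v u h
    have := hec.2 v u ((SimpleGraph.top_adj v u).mpr (fun e => h e.symm))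
    omega
  have key : ∀ v : Fin n, sigmaSum (⊤ : SimpleGraph (Fin n)) cF v = 3 * m := by
    intro v
    have hA := hmaj v 1
    have hB := hmaj v 2
    rw [degree_top] at hA hB
    have hAB : colorCount (⊤ : SimpleGraph (Fin n)) cF v 1
        + colorCount (⊤ : SimpleGraph (Fin n)) cF v 2 = n - 1 := by
      rw [colorCount_top', colorCount_top', ← Finset.sum_add_distrib,
        show (∑ u : Fin n, ((if u ≠ v ∧ cF v u = 1 then 1 else 0)
            + if u ≠ v ∧ cF v u = 2 then 1 else 0))
          = ∑ u : Fin n, if u = v then 0 else 1 from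
        Finset.sum_congr rfl (fun u _ => by
          by_cases h : u = v
          · simp [h]
          · rcases hcolor v u h with h2 | h2 <;> simp [h, h2]),
        count_sum_erase v (by omega)]
    have hσ : sigmaSum (⊤ : SimpleGraph (Fin n)) cF v
        = colorCount (⊤ : SimpleGraph (Fin n)) cF v 1
          + 2 * colorCount (⊤ : SimpleGraph (Fin n)) cF v 2 := by
      rw [sigmaSum_top', colorCount_top', colorCount_top', Finset.mul_sum,
        ← Finset.sum_add_distrib]
      refine Finset.sum_congr rfl (fun u _ => ?_)
      by_cases h : u = v
      · simp [h]
      · rcases hcolor v u h with h2 | h2 <;> simp [h, h2]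
    omega
  have h01 : (⟨0, by omega⟩ : Fin n) ≠ ⟨1, by omega⟩ := by simp [Fin.ext_iff]
  exact hnsd ⟨0, by omega⟩ ⟨1, by omega⟩ ((SimpleGraph.top_adj _ _).mpr h01)
    (by rw [key, key])

lemma lb_even (n : ℕ) (hn : 6 ≤ n) (m : ℕ) (hm : n = 2*m) (k : ℕ) (hk : k ≤ 3)
    (cF : Fin n → Fin n → ℕ) (hec : EdgeColoring (⊤ : SimpleGraph (Fin n)) k cF)
    (hmaj : Majority (⊤ : SimpleGraph (Fin n)) cF)
    (hnsd : NSD (⊤ : SimpleGraph (Fin n)) cF) : False := by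
  have hcolor : ∀ v u : Fin n, u ≠ v → cF v u = 1 ∨ cF v u = 2 ∨ cF v u = 3 := by
    intro v u h
    have := hec.2 v u ((SimpleGraph.top_adj v u).mpr (fun e => h e.symm))
    omega
  have key : ∀ v : Fin n, 3*m - 1 ≤ sigmaSum (⊤ : SimpleGraph (Fin n)) cF v
      ∧ sigmaSum (⊤ : SimpleGraph (Fin n)) cF v ≤ 5*m - 4 := by
    intro v
    have hA := hmaj v 1
    have hB := hmaj v 2
    have hC := hmaj v 3
    rw [degree_top] at hA hB hC
    have hABC : colorCount (⊤ : SimpleGraph (Fin n)) cF v 1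
        + colorCount (⊤ : SimpleGraph (Fin n)) cF v 2
        + colorCount (⊤ : SimpleGraph (Fin n)) cF v 3 = n - 1 := by
      rw [colorCount_top', colorCount_top', colorCount_top', ← Finset.sum_add_distrib,
        ← Finset.sum_add_distrib,
        show (∑ u : Fin n, ((if u ≠ v ∧ cF v u = 1 then 1 else 0)
            + (if u ≠ v ∧ cF v u = 2 then 1 else 0)
            + if u ≠ v ∧ cF v u = 3 then 1 else 0))
          = ∑ u : Fin n, if u = v then 0 else 1 from
        Finset.sum_congr rfl (fun u _ => by
          by_cases h : u = v
          · simp [h]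
          · rcases hcolor v u h with h2 | h2 | h2 <;> simp [h, h2]),
        count_sum_erase v (by omega)]
    have hσ : sigmaSum (⊤ : SimpleGraph (Fin n)) cF v
        = colorCount (⊤ : SimpleGraph (Fin n)) cF v 1
          + 2 * colorCount (⊤ : SimpleGraph (Fin n)) cF v 2
          + 3 * colorCount (⊤ : SimpleGraph (Fin n)) cF v 3 := by
      rw [sigmaSum_top', colorCount_top', colorCount_top', colorCount_top',
        Finset.mul_sum, Finset.mul_sum, ← Finset.sum_add_distrib, ← Finset.sum_add_distrib]
      refine Finset.sum_congr rfl (fun u _ => ?_)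
      by_cases h : u = v
      · simp [h]
      · rcases hcolor v u h with h2 | h2 | h2 <;> simp [h, h2]
    omega
  have hinj : Set.InjOn (fun v => sigmaSum (⊤ : SimpleGraph (Fin n)) cF v)
      ((Finset.univ : Finset (Fin n)) : Set (Fin n)) := by
    intro a _ b _ hab
    by_contra hne
    exact hnsd a b ((SimpleGraph.top_adj a b).mpr hne) hab
  have hcard := Finset.card_le_card_of_injOn
    (fun v => sigmaSum (⊤ : SimpleGraph (Fin n)) cF v)
    (t := Finset.Icc (3*m-1) (5*m-4))
    (fun v _ => by
      rw [Finset.mem_coe, Finset.mem_Icc]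
      exact key v) hinj
  rw [Finset.card_univ, Fintype.card_fin, Nat.card_Icc] at hcard
  omega

set_option maxHeartbeats 1000000 in
lemma K4aux : ∀ a b c d e f : Fin 5,
    ¬ (1 ≤ a.val ∧ 1 ≤ b.val ∧ 1 ≤ c.val ∧ 1 ≤ d.val ∧ 1 ≤ e.val ∧ 1 ≤ f.val ∧
    a.val ≠ b.val ∧ a.val ≠ c.val ∧ b.val ≠ c.val ∧ a.val ≠ d.val ∧ a.val ≠ e.val ∧
    d.val ≠ e.val ∧ b.val ≠ d.val ∧ b.val ≠ f.val ∧ d.val ≠ f.val ∧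
    c.val ≠ e.val ∧ c.val ≠ f.val ∧ e.val ≠ f.val ∧
    a.val+b.val+c.val ≠ a.val+d.val+e.val ∧ a.val+b.val+c.val ≠ b.val+d.val+f.val ∧
    a.val+b.val+c.val ≠ c.val+e.val+f.val ∧ a.val+d.val+e.val ≠ b.val+d.val+f.val ∧
    a.val+d.val+e.val ≠ c.val+e.val+f.val ∧ b.val+d.val+f.val ≠ c.val+e.val+f.val) := by
  decide

lemma lb_four (k : ℕ) (hk : k ≤ 4)
    (cF : Fin 4 → Fin 4 → ℕ) (hec : EdgeColoring (⊤ : SimpleGraph (Fin 4)) k cF)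
    (hmaj : Majority (⊤ : SimpleGraph (Fin 4)) cF)
    (hnsd : NSD (⊤ : SimpleGraph (Fin 4)) cF) : False := by
  have hcc : ∀ (v : Fin 4) (α : ℕ), colorCount (⊤ : SimpleGraph (Fin 4)) cF v α ≤ 1 := by
    intro v α
    have := hmaj v α
    rw [degree_top] at this
    omega
  have hne : ∀ v u w : Fin 4, u ≠ v → w ≠ v → u ≠ w → cF v u ≠ cF v w := by
    intro v u w h1 h2 h3 he
    have h := hcc v (cF v u)
    rw [colorCount_top'] at h
    have hsum := Finset.sum_le_sum_of_subset
      (Finset.subset_univ ({u, w} : Finset (Fin 4)))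
      (f := fun x => if x ≠ v ∧ cF v x = cF v u then 1 else 0)
    rw [Finset.sum_pair h3, if_pos ⟨h1, rfl⟩, if_pos ⟨h2, he.symm⟩] at hsum
    have hsum' : (1:ℕ) + 1 ≤ ∑ x : Fin 4, if x ≠ v ∧ cF v x = cF v u then 1 else 0 := hsum
    omega
  have hsym := hec.1
  have hbd : ∀ u v : Fin 4, u ≠ v → 1 ≤ cF u v ∧ cF u v ≤ 4 := by
    intro u v h
    have := hec.2 u v ((SimpleGraph.top_adj u v).mpr h)
    omega
  have s0 : sigmaSum (⊤ : SimpleGraph (Fin 4)) cF 0 = cF 0 1 + cF 0 2 + cF 0 3 := by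
    rw [sigmaSum_top', Fin.sum_univ_four, if_pos rfl, if_neg (by decide : ¬(1:Fin 4) = 0),
      if_neg (by decide : ¬(2:Fin 4) = 0), if_neg (by decide : ¬(3:Fin 4) = 0)]
    omega
  have s1 : sigmaSum (⊤ : SimpleGraph (Fin 4)) cF 1 = cF 0 1 + cF 1 2 + cF 1 3 := by
    rw [sigmaSum_top', Fin.sum_univ_four, if_neg (by decide : ¬(0:Fin 4) = 1), if_pos rfl,
      if_neg (by decide : ¬(2:Fin 4) = 1), if_neg (by decide : ¬(3:Fin 4) = 1), hsym 1 0]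
    omega
  have s2 : sigmaSum (⊤ : SimpleGraph (Fin 4)) cF 2 = cF 0 2 + cF 1 2 + cF 2 3 := by
    rw [sigmaSum_top', Fin.sum_univ_four, if_neg (by decide : ¬(0:Fin 4) = 2),
      if_neg (by decide : ¬(1:Fin 4) = 2), if_pos rfl, if_neg (by decide : ¬(3:Fin 4) = 2),
      hsym 2 0, hsym 2 1]
    omega
  have s3 : sigmaSum (⊤ : SimpleGraph (Fin 4)) cF 3 = cF 0 3 + cF 1 3 + cF 2 3 := by
    rw [sigmaSum_top', Fin.sum_univ_four, if_neg (by decide : ¬(0:Fin 4) = 3),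
      if_neg (by decide : ¬(1:Fin 4) = 3), if_neg (by decide : ¬(2:Fin 4) = 3), if_pos rfl,
      hsym 3 0, hsym 3 1, hsym 3 2]
    omega
  have hadj : ∀ u v : Fin 4, u ≠ v → (⊤ : SimpleGraph (Fin 4)).Adj u v :=
    fun u v h => (SimpleGraph.top_adj u v).mpr h
  have b01 := hbd 0 1 (by decide); have b02 := hbd 0 2 (by decide)
  have b03 := hbd 0 3 (by decide); have b12 := hbd 1 2 (by decide)
  have b13 := hbd 1 3 (by decide); have b23 := hbd 2 3 (by decide)
  -- vertex distinctness
  have d0a := hne 0 1 2 (by decide) (by decide) (by decide)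
  have d0b := hne 0 1 3 (by decide) (by decide) (by decide)
  have d0c := hne 0 2 3 (by decide) (by decide) (by decide)
  have d1a : cF 0 1 ≠ cF 1 2 := by rw [hsym 0 1]; exact hne 1 0 2 (by decide) (by decide) (by decide)
  have d1b : cF 0 1 ≠ cF 1 3 := by rw [hsym 0 1]; exact hne 1 0 3 (by decide) (by decide) (by decide)
  have d1c : cF 1 2 ≠ cF 1 3 := hne 1 2 3 (by decide) (by decide) (by decide)
  have d2a : cF 0 2 ≠ cF 1 2 := by
    rw [hsym 0 2, hsym 1 2]; exact hne 2 0 1 (by decide) (by decide) (by decide)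
  have d2b : cF 0 2 ≠ cF 2 3 := by
    rw [hsym 0 2]; exact hne 2 0 3 (by decide) (by decide) (by decide)
  have d2c : cF 1 2 ≠ cF 2 3 := by
    rw [hsym 1 2]; exact hne 2 1 3 (by decide) (by decide) (by decide)
  have d3a : cF 0 3 ≠ cF 1 3 := by
    rw [hsym 0 3, hsym 1 3]; exact hne 3 0 1 (by decide) (by decide) (by decide)
  have d3b : cF 0 3 ≠ cF 2 3 := by
    rw [hsym 0 3, hsym 2 3]; exact hne 3 0 2 (by decide) (by decide) (by decide)
  have d3c : cF 1 3 ≠ cF 2 3 := by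
    rw [hsym 1 3, hsym 2 3]; exact hne 3 1 2 (by decide) (by decide) (by decide)
  -- sum distinctness
  have n01 := hnsd 0 1 (hadj 0 1 (by decide)); rw [s0, s1] at n01
  have n02 := hnsd 0 2 (hadj 0 2 (by decide)); rw [s0, s2] at n02
  have n03 := hnsd 0 3 (hadj 0 3 (by decide)); rw [s0, s3] at n03
  have n12 := hnsd 1 2 (hadj 1 2 (by decide)); rw [s1, s2] at n12
  have n13 := hnsd 1 3 (hadj 1 3 (by decide)); rw [s1, s3] at n13
  have n23 := hnsd 2 3 (hadj 2 3 (by decide)); rw [s2, s3] at n23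
  exact K4aux ⟨cF 0 1, by omega⟩ ⟨cF 0 2, by omega⟩ ⟨cF 0 3, by omega⟩
    ⟨cF 1 2, by omega⟩ ⟨cF 1 3, by omega⟩ ⟨cF 2 3, by omega⟩
    ⟨b01.1, b02.1, b03.1, b12.1, b13.1, b23.1,
    d0a, d0b, d0c, d1a, d1b, d1c, d2a, d2b, d2c, d3a, d3b, d3c,
    n01, n02, n03, n12, n13, n23⟩

end LowerBounds

section FourUpper

def c4 : ℕ → ℕ → ℕ := fun i j =>
  if min i j = 0 then max i j else if min i j = 1 then max i j + 1 else 5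

lemma c4_props :
    (∀ i j, c4 i j = c4 j i) ∧
    (∀ i, i < 4 → ∀ j, j < 4 → i ≠ j → 1 ≤ c4 i j ∧ c4 i j ≤ 5) ∧
    (∀ v, v < 4 → ∀ α, 2 * ccnt 4 c4 v α ≤ 3) ∧
    (∀ v, v < 4 → ∀ w, w < 4 → v ≠ w → csum 4 c4 v ≠ csum 4 c4 w) := by
  have key : ∀ v < 4, ∀ β < 6, ccnt 4 c4 v β ≤ 1 := by decide
  have key2 : ∀ v < 4, ∀ u < 4, u ≠ v → c4 v u ≤ 5 := by decide
  refine ⟨fun i j => by unfold c4; rw [Nat.min_comm, Nat.max_comm], by decide, ?_, by decide⟩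
  intro v hv α
  have h := ccnt_le_of' (K := 5) (M := 1) (α := α) (fun u hu hne => key2 v hv u hu hne)
    (fun β hβ => key v hv β (by omega))
  omega

end FourUpper

theorem mnsdi_complete (n : ℕ) (hn : 3 ≤ n) :
    (Odd n → IsLeast {k : ℕ | ∃ c : Fin n → Fin n → ℕ,
      EdgeColoring (⊤ : SimpleGraph (Fin n)) k c ∧
      Majority (⊤ : SimpleGraph (Fin n)) c ∧
      NSD (⊤ : SimpleGraph (Fin n)) c} 3) ∧
    (Even n → 6 ≤ n → IsLeast {k : ℕ | ∃ c : Fin n → Fin n → ℕ,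
      EdgeColoring (⊤ : SimpleGraph (Fin n)) k c ∧
      Majority (⊤ : SimpleGraph (Fin n)) c ∧
      NSD (⊤ : SimpleGraph (Fin n)) c} 4) ∧
    (n = 4 → IsLeast {k : ℕ | ∃ c : Fin n → Fin n → ℕ,
      EdgeColoring (⊤ : SimpleGraph (Fin n)) k c ∧
      Majority (⊤ : SimpleGraph (Fin n)) c ∧
      NSD (⊤ : SimpleGraph (Fin n)) c} 5) := by
  refine ⟨?_, ?_, ?_⟩
  · -- odd case
    intro hodd
    obtain ⟨m, hm⟩ := hodd
    have hm1 : 1 ≤ m := by omega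
    constructor
    · obtain ⟨c, hsym, hcol, hcnt, hbnd, hinj, _⟩ := goodOdd m hm1
      subst hm
      exact mem_of_nat (2*m+1) 3 c hsym (fun i j hi hj hij => hcol i hi j hj hij)
        (fun v α hv => by have := hcnt v hv α; omega)
        (fun v w hv hw hvw => hinj v hv w hw hvw)
    · intro b hb
      by_contra hlt
      push_neg at hlt
      obtain ⟨cF, hec, hmaj, hnsd⟩ := hb
      exact lb_odd n hn m hm b (by omega) cF hec hmaj hnsd
  · -- even case
    intro heven h6
    obtain ⟨m, hm⟩ := heven
    have hm3 : 3 ≤ m := by omega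
    constructor
    · obtain ⟨c, hsym, hcol, hcnt, hbnd, hinj⟩ := goodEven m hm3
      have hnm : n = 2*m := by omega
      subst hnm
      exact mem_of_nat (2*m) 4 c hsym (fun i j hi hj hij => hcol i hi j hj hij)
        (fun v α hv => by have := hcnt v hv α; omega)
        (fun v w hv hw hvw => hinj v hv w hw hvw)
    · intro b hb
      by_contra hlt
      push_neg at hlt
      obtain ⟨cF, hec, hmaj, hnsd⟩ := hb
      exact lb_even n h6 m (by omega) b (by omega) cF hec hmaj hnsd
  · -- n = 4 case
    intro h4
    subst h4
    constructor
    · obtain ⟨hsym, hcol, hcnt, hinj⟩ := c4_props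
      exact mem_of_nat 4 5 c4 hsym (fun i j hi hj hij => hcol i hi j hj hij)
        (fun v α hv => by have := hcnt v hv α; omega)
        (fun v w hv hw hvw => hinj v hv w hw hvw)
    · intro b hb
      by_contra hlt
      push_neg at hlt
      obtain ⟨cF, hec, hmaj, hnsd⟩ := hb
      exact lb_four b (by omega) cF hec hmaj hnsd
end

section
/- In any majority edge-coloring of K_{2k} (k ≥ 2) using only colors {1,2,3}, the color sums σ_c(v) all lie in the interval [3k, 5k−4], so at most 2k−3 distinct sums occur; consequently no majority 3-edge-coloring of K_{2k} is neighbor sum distinguishing. -/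
open Finset

variable {V : Type*} [Fintype V] [DecidableEq V]

theorem majority_three_coloring_complete_even_not_nsd (k : ℕ) (hk : 2 ≤ k)
    (c : Fin (2 * k) → Fin (2 * k) → ℕ)
    (hc : EdgeColoring (⊤ : SimpleGraph (Fin (2 * k))) 3 c)
    (hmaj : Majority (⊤ : SimpleGraph (Fin (2 * k))) c) :
    (∀ v, 3 * k ≤ sigmaSum (⊤ : SimpleGraph (Fin (2 * k))) c v ∧
      sigmaSum (⊤ : SimpleGraph (Fin (2 * k))) c v ≤ 5 * k - 4) ∧
    ¬ NSD (⊤ : SimpleGraph (Fin (2 * k))) c := by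
  have hdeg : ∀ v : Fin (2 * k), (⊤ : SimpleGraph (Fin (2 * k))).degree v = 2 * k - 1 := by
    intro v
    rw [SimpleGraph.complete_graph_degree, Fintype.card_fin]
  have hbounds : ∀ v, 3 * k ≤ sigmaSum (⊤ : SimpleGraph (Fin (2 * k))) c v ∧
      sigmaSum (⊤ : SimpleGraph (Fin (2 * k))) c v ≤ 5 * k - 4 := by
    intro v
    set N := (⊤ : SimpleGraph (Fin (2 * k))).neighborFinset v with hN
    have hcol : ∀ u ∈ N, c v u ∈ Finset.Icc 1 3 := by
      intro u hu
      rw [hN, SimpleGraph.mem_neighborFinset] at hu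
      have := hc.2 v u hu
      simp [Finset.mem_Icc, this.1, this.2]
    have hcard : N.card = 2 * k - 1 := by
      rw [hN, ← SimpleGraph.degree]; exact hdeg v
    have hsum : sigmaSum (⊤ : SimpleGraph (Fin (2 * k))) c v =
        ∑ i ∈ Finset.Icc 1 3, ∑ u ∈ N.filter (fun u => c v u = i), c v u := by
      rw [sigmaSum, ← hN]
      exact (Finset.sum_fiberwise_of_maps_to hcol _).symm
    have hinner : ∀ i, ∑ u ∈ N.filter (fun u => c v u = i), c v u
        = i * colorCount (⊤ : SimpleGraph (Fin (2 * k))) c v i := by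
      intro i
      rw [colorCount, ← hN]
      rw [Finset.sum_congr rfl (fun u hu => (Finset.mem_filter.mp hu).2)]
      rw [Finset.sum_const, smul_eq_mul, mul_comm]
    have hcardsum : N.card =
        ∑ i ∈ Finset.Icc 1 3, colorCount (⊤ : SimpleGraph (Fin (2 * k))) c v i := by
      simp only [colorCount, ← hN]
      exact Finset.card_eq_sum_card_fiberwise hcol
    have hIcc : Finset.Icc 1 3 = ({1, 2, 3} : Finset ℕ) := by decide
    rw [hIcc] at hsum hcardsum
    have h1 := hmaj v 1; have h2 := hmaj v 2; have h3 := hmaj v 3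
    rw [hdeg v] at h1 h2 h3
    rw [Finset.sum_insert (by decide), Finset.sum_insert (by decide),
      Finset.sum_singleton] at hsum hcardsum
    rw [hinner 1, hinner 2, hinner 3] at hsum
    rw [hcard] at hcardsum
    omega
  refine ⟨hbounds, ?_⟩
  intro hnsd
  have hmap : ∀ v ∈ (Finset.univ : Finset (Fin (2 * k))),
      sigmaSum (⊤ : SimpleGraph (Fin (2 * k))) c v ∈ Finset.Icc (3 * k) (5 * k - 4) := by
    intro v _
    exact Finset.mem_Icc.mpr (hbounds v)
  have hcardlt : (Finset.Icc (3 * k) (5 * k - 4)).card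
      < (Finset.univ : Finset (Fin (2 * k))).card := by
    rw [Nat.card_Icc, Finset.card_univ, Fintype.card_fin]
    omega
  obtain ⟨x, _, y, _, hxy, hfeq⟩ :=
    Finset.exists_ne_map_eq_of_card_lt_of_maps_to hcardlt hmap
  exact hnsd x y (by simpa using hxy) hfeq
end
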